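/- arXiv:math/9805116 — 4 statements merged into one kernel-verified Lean document; each statement's English description precedes it below -/
import Mathlib

section
/- Let A be a weak bialgebra over a field K. Then A^L and A^R are unital subalgebras of A (both contain 1 and are closed under multiplication), and every element of A^L commutes with every element of A^R: x^L y^R = y^R x^L for all x^L ∈ A^L and y^R ∈ A^R. -/
/-!
Write `Π^L(x) = (ε(· x) ⊗ id)(Δ 1)` and `Π^R(y) = (id ⊗ ε(y ·))(Δ 1)`. Using coassociativity,
slicing the two factorisations of `(Δ ⊗ id)(Δ 1)` gives `Δ(x^L) = Δ(1)(x^L ⊗ 1)` on `A^L` and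
`Δ(y^R) = Δ(1)(1 ⊗ y^R) = (1 ⊗ y^R)Δ(1)` on `A^R`; by the counit axiom these equations
characterise `A^L` and `A^R`, and since `Δ` is multiplicative they cut out submonoids.
Finally `Δ(1)` commutes with `1 ⊗ y^R`, and slicing `Δ(1)(1 ⊗ y^R) = (1 ⊗ y^R)Δ(1)` with
`ε(· x) ⊗ id` gives `x^L y^R = y^R x^L`.
-/

open TensorProduct

noncomputable section

variable (K : Type*) [Field K] (A : Type*) [Ring A] [Algebra K A]

/-- `Π^L(x) = Σ ε(1₍₁₎ x) 1₍₂₎`. -/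
def piL (Δ : A →ₗ[K] A ⊗[K] A) (ε : A →ₗ[K] K) : A →ₗ[K] A :=
  (TensorProduct.lid K A).toLinearMap ∘ₗ ε.rTensor A ∘ₗ
    LinearMap.mulLeft K (Δ 1) ∘ₗ (TensorProduct.mk K A A).flip 1

/-- `Π^R(x) = Σ 1₍₁₎ ε(x 1₍₂₎)`. -/
def piR (Δ : A →ₗ[K] A ⊗[K] A) (ε : A →ₗ[K] K) : A →ₗ[K] A :=
  (TensorProduct.rid K A).toLinearMap ∘ₗ ε.lTensor A ∘ₗ
    LinearMap.mulRight K (Δ 1) ∘ₗ TensorProduct.mk K A A 1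

/-- A weak bialgebra structure on the `K`-algebra `A`, with comultiplication `Δ`
and counit `ε`. -/
structure WeakBialgebra (Δ : A →ₗ[K] A ⊗[K] A) (ε : A →ₗ[K] K) : Prop where
  coassoc : ∀ x : A,
    (TensorProduct.assoc K A A A) (Δ.rTensor A (Δ x)) = Δ.lTensor A (Δ x)
  counit_left : ∀ x : A, (TensorProduct.lid K A) (ε.rTensor A (Δ x)) = x
  counit_right : ∀ x : A, (TensorProduct.rid K A) (ε.lTensor A (Δ x)) = x
  comul_mul : ∀ x y : A, Δ (x * y) = Δ x * Δ y
  weak_counit_a : ∀ x y z : A,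
    ε (x * y * z) =
      LinearMap.mul' K K (TensorProduct.map (ε ∘ₗ LinearMap.mulLeft K x)
        (ε ∘ₗ LinearMap.mulRight K z) (Δ y))
  weak_counit_b : ∀ x y z : A,
    ε (x * y * z) =
      LinearMap.mul' K K (TensorProduct.map (ε ∘ₗ LinearMap.mulRight K z)
        (ε ∘ₗ LinearMap.mulLeft K x) (Δ y))
  weak_comul_unit_a :
    Δ.rTensor A (Δ 1) =
      (Δ 1 ⊗ₜ[K] (1 : A)) * ((TensorProduct.assoc K A A A).symm ((1 : A) ⊗ₜ[K] Δ 1))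
  weak_comul_unit_b :
    Δ.rTensor A (Δ 1) =
      ((TensorProduct.assoc K A A A).symm ((1 : A) ⊗ₜ[K] Δ 1)) * (Δ 1 ⊗ₜ[K] (1 : A))

/-- A weak Hopf algebra structure: a weak bialgebra together with an antipode `S`. -/
structure WeakHopfAlgebra (Δ : A →ₗ[K] A ⊗[K] A) (ε : A →ₗ[K] K) (S : A →ₗ[K] A) : Prop where
  toWeakBialgebra : WeakBialgebra K A Δ ε
  antipode_a : ∀ x : A,
    LinearMap.mul' K A (LinearMap.lTensor A S (Δ x)) = piL K A Δ ε x
  antipode_b : ∀ x : A,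
    LinearMap.mul' K A (LinearMap.rTensor A S (Δ x)) = piR K A Δ ε x
  antipode_c : ∀ x : A,
    LinearMap.mul' K A (TensorProduct.map S (LinearMap.mul' K A ∘ₗ LinearMap.lTensor A S)
      (LinearMap.lTensor A Δ (Δ x))) = S x

namespace WeakBialgebra

section Slice

variable {K A : Type*} [CommSemiring K] [Semiring A] [Algebra K A]
  (ε : A →ₗ[K] K) (M : Type*)

def leftSlice [AddCommMonoid M] [Module K M] (x : A) : A ⊗[K] M →ₗ[K] M :=
  (TensorProduct.lid K M).toLinearMap ∘ₗ (ε ∘ₗ LinearMap.mulRight K x).rTensor M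

def rightSlice [AddCommMonoid M] [Module K M] (y : A) : M ⊗[K] A →ₗ[K] M :=
  (TensorProduct.rid K M).toLinearMap ∘ₗ (ε ∘ₗ LinearMap.mulLeft K y).lTensor M

variable {M}

section Module

variable [AddCommMonoid M] [Module K M]

@[simp]
lemma leftSlice_tmul (x u : A) (m : M) : leftSlice ε M x (u ⊗ₜ m) = ε (u * x) • m := by
  simp [leftSlice]

@[simp]
lemma rightSlice_tmul (y v : A) (m : M) : rightSlice ε M y (m ⊗ₜ v) = ε (y * v) • m := by
  simp [rightSlice]

lemma leftSlice_lTensor {N : Type*} [AddCommMonoid N] [Module K N] (f : M →ₗ[K] N) (x : A)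
    (X : A ⊗[K] M) : leftSlice ε N x (f.lTensor A X) = f (leftSlice ε M x X) := by
  induction X using TensorProduct.induction_on with
  | zero => simp
  | tmul u m => simp
  | add X Y hX hY => simp [hX, hY]

lemma rightSlice_rTensor {N : Type*} [AddCommMonoid N] [Module K N] (f : M →ₗ[K] N) (y : A)
    (X : M ⊗[K] A) : rightSlice ε N y (f.rTensor A X) = f (rightSlice ε M y X) := by
  induction X using TensorProduct.induction_on with
  | zero => simp
  | tmul m v => simp
  | add X Y hX hY => simp [hX, hY]

lemma leftSlice_assoc_tmul (x : A) (X : A ⊗[K] M) (v : A) :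
    leftSlice ε (M ⊗[K] A) x (TensorProduct.assoc K A M A (X ⊗ₜ v)) =
      leftSlice ε M x X ⊗ₜ v := by
  induction X using TensorProduct.induction_on with
  | zero => simp
  | tmul u m => simp [TensorProduct.smul_tmul']
  | add X Y hX hY => simp [add_tmul, hX, hY]

lemma rightSlice_assoc_symm_tmul (y u : A) (X : M ⊗[K] A) :
    rightSlice ε (A ⊗[K] M) y ((TensorProduct.assoc K A M A).symm (u ⊗ₜ X)) =
      u ⊗ₜ rightSlice ε M y X := by
  induction X using TensorProduct.induction_on with
  | zero => simp
  | tmul m v => simp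
  | add X Y hX hY => simp [tmul_add, hX, hY]

end Module

section Algebra

variable [Semiring M] [Algebra K M]

lemma leftSlice_one_tmul_mul (x : A) (m : M) (X : A ⊗[K] M) :
    leftSlice ε M x ((1 ⊗ₜ m) * X) = m * leftSlice ε M x X := by
  induction X using TensorProduct.induction_on with
  | zero => simp
  | tmul u n => simp [Algebra.TensorProduct.tmul_mul_tmul]
  | add X Y hX hY => simp [mul_add, hX, hY]

lemma leftSlice_mul_one_tmul (x : A) (m : M) (X : A ⊗[K] M) :
    leftSlice ε M x (X * (1 ⊗ₜ m)) = leftSlice ε M x X * m := by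
  induction X using TensorProduct.induction_on with
  | zero => simp
  | tmul u n => simp [Algebra.TensorProduct.tmul_mul_tmul]
  | add X Y hX hY => simp [add_mul, hX, hY]

lemma rightSlice_tmul_one_mul (y : A) (m : M) (X : M ⊗[K] A) :
    rightSlice ε M y ((m ⊗ₜ 1) * X) = m * rightSlice ε M y X := by
  induction X using TensorProduct.induction_on with
  | zero => simp
  | tmul n v => simp [Algebra.TensorProduct.tmul_mul_tmul]
  | add X Y hX hY => simp [mul_add, hX, hY]

lemma rightSlice_mul_tmul_one (y : A) (m : M) (X : M ⊗[K] A) :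
    rightSlice ε M y (X * (m ⊗ₜ 1)) = rightSlice ε M y X * m := by
  induction X using TensorProduct.induction_on with
  | zero => simp
  | tmul n v => simp [Algebra.TensorProduct.tmul_mul_tmul]
  | add X Y hX hY => simp [add_mul, hX, hY]

end Algebra

end Slice

section Submonoids

variable {K A : Type*} [CommSemiring K] [Semiring A] [Algebra K A] (Δ : A →ₗ[K] A ⊗[K] A)

def leftSubmonoid (hΔ : ∀ x y, Δ (x * y) = Δ x * Δ y) : Submonoid A where
  carrier := {z | Δ z = Δ 1 * (z ⊗ₜ 1)}
  one_mem' := by simp [← Algebra.TensorProduct.one_def]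
  mul_mem' {a b} ha hb := calc
    Δ (a * b) = Δ a * Δ 1 * (b ⊗ₜ 1) := by rw [hΔ, hb, mul_assoc]
    _ = Δ a * (b ⊗ₜ 1) := by rw [← hΔ, mul_one]
    _ = Δ 1 * ((a * b) ⊗ₜ 1) := by
      rw [ha, mul_assoc, Algebra.TensorProduct.tmul_mul_tmul, mul_one]

def rightSubmonoid (hΔ : ∀ x y, Δ (x * y) = Δ x * Δ y) : Submonoid A where
  carrier := {z | Δ z = (1 ⊗ₜ z) * Δ 1}
  one_mem' := by simp [← Algebra.TensorProduct.one_def]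
  mul_mem' {a b} ha hb := calc
    Δ (a * b) = (1 ⊗ₜ a) * (Δ 1 * Δ b) := by rw [hΔ, ha, mul_assoc]
    _ = (1 ⊗ₜ a) * Δ b := by rw [← hΔ, one_mul]
    _ = (1 ⊗ₜ (a * b)) * Δ 1 := by
      rw [hb, ← mul_assoc, Algebra.TensorProduct.tmul_mul_tmul, one_mul]

end Submonoids

section Projections

variable {K A : Type*} [Field K] [Ring A] [Algebra K A]
  {Δ : A →ₗ[K] A ⊗[K] A} {ε : A →ₗ[K] K}

lemma piL_apply (x : A) :
    piL K A Δ ε x = TensorProduct.lid K A (ε.rTensor A (Δ 1 * (x ⊗ₜ 1))) :=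
  rfl

lemma piR_apply (y : A) :
    piR K A Δ ε y = TensorProduct.rid K A (ε.lTensor A ((1 ⊗ₜ y) * Δ 1)) :=
  rfl

lemma piL_eq_leftSlice (x : A) : piL K A Δ ε x = leftSlice ε A x (Δ 1) := by
  suffices ∀ X : A ⊗[K] A,
      TensorProduct.lid K A (ε.rTensor A (X * (x ⊗ₜ 1))) = leftSlice ε A x X by
    rw [piL_apply, this]
  intro X
  induction X using TensorProduct.induction_on with
  | zero => simp
  | tmul u v => simp [Algebra.TensorProduct.tmul_mul_tmul]
  | add X Y hX hY => simp [add_mul, hX, hY]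

lemma piR_eq_rightSlice (y : A) : piR K A Δ ε y = rightSlice ε A y (Δ 1) := by
  suffices ∀ X : A ⊗[K] A,
      TensorProduct.rid K A (ε.lTensor A ((1 ⊗ₜ y) * X)) = rightSlice ε A y X by
    rw [piR_apply, this]
  intro X
  induction X using TensorProduct.induction_on with
  | zero => simp
  | tmul u v => simp [Algebra.TensorProduct.tmul_mul_tmul]
  | add X Y hX hY => simp [mul_add, hX, hY]

lemma commute_piL_of_commute (x : A) {y : A} (hy : Commute (Δ 1) (1 ⊗ₜ y)) :
    Commute (piL K A Δ ε x) y := calc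
  piL K A Δ ε x * y = leftSlice ε A x (Δ 1 * (1 ⊗ₜ y)) := by
    rw [leftSlice_mul_one_tmul, piL_eq_leftSlice]
  _ = leftSlice ε A x ((1 ⊗ₜ y) * Δ 1) := by rw [hy.eq]
  _ = y * piL K A Δ ε x := by rw [leftSlice_one_tmul_mul, piL_eq_leftSlice]

variable (hA : WeakBialgebra K A Δ ε)
include hA

lemma comul_piL (x : A) : Δ (piL K A Δ ε x) = Δ 1 * (piL K A Δ ε x ⊗ₜ 1) := by
  have assoc_mul : ∀ X Y : (A ⊗[K] A) ⊗[K] A, TensorProduct.assoc K A A A (X * Y) =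
      TensorProduct.assoc K A A A X * TensorProduct.assoc K A A A Y :=
    map_mul (Algebra.TensorProduct.assoc K K K A A A)
  rw [piL_eq_leftSlice, ← leftSlice_lTensor, ← hA.coassoc, hA.weak_comul_unit_b, assoc_mul,
    LinearEquiv.apply_symm_apply, leftSlice_one_tmul_mul, leftSlice_assoc_tmul]

lemma comul_piR_eq_mul (y : A) : Δ (piR K A Δ ε y) = Δ 1 * (1 ⊗ₜ piR K A Δ ε y) := by
  rw [piR_eq_rightSlice, ← rightSlice_rTensor, hA.weak_comul_unit_a, rightSlice_tmul_one_mul,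
    rightSlice_assoc_symm_tmul]

lemma comul_piR (y : A) : Δ (piR K A Δ ε y) = (1 ⊗ₜ piR K A Δ ε y) * Δ 1 := by
  rw [piR_eq_rightSlice, ← rightSlice_rTensor, hA.weak_comul_unit_b, rightSlice_mul_tmul_one,
    rightSlice_assoc_symm_tmul]

lemma range_piL : Set.range (piL K A Δ ε) = leftSubmonoid Δ hA.comul_mul := by
  ext z
  refine ⟨?_, fun hz ↦ ⟨z, ?_⟩⟩
  · rintro ⟨x, rfl⟩
    exact comul_piL hA x
  · rw [piL_apply, ← show Δ z = _ from hz, hA.counit_left]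

lemma range_piR : Set.range (piR K A Δ ε) = rightSubmonoid Δ hA.comul_mul := by
  ext z
  refine ⟨?_, fun hz ↦ ⟨z, ?_⟩⟩
  · rintro ⟨y, rfl⟩
    exact comul_piR hA y
  · rw [piR_apply, ← show Δ z = _ from hz, hA.counit_right]

lemma commute_comul_one_of_mem_range_piR {y : A} (hy : y ∈ Set.range (piR K A Δ ε)) :
    Commute (Δ 1) (1 ⊗ₜ y) := by
  obtain ⟨y, rfl⟩ := hy
  exact (comul_piR_eq_mul hA y).symm.trans (comul_piR hA y)

end Projections

end WeakBialgebra

theorem weakBialgebra_piL_piR_subalgebras_and_commute_general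
    (K : Type*) [Field K] (A : Type*) [Ring A] [Algebra K A]
    (Δ : A →ₗ[K] A ⊗[K] A) (ε : A →ₗ[K] K) (hA : WeakBialgebra K A Δ ε) :
    (1 : A) ∈ Set.range ⇑(piL K A Δ ε) ∧
    (1 : A) ∈ Set.range ⇑(piR K A Δ ε) ∧
    (∀ a b : A, a ∈ Set.range ⇑(piL K A Δ ε) → b ∈ Set.range ⇑(piL K A Δ ε) →
      a * b ∈ Set.range ⇑(piL K A Δ ε)) ∧
    (∀ a b : A, a ∈ Set.range ⇑(piR K A Δ ε) → b ∈ Set.range ⇑(piR K A Δ ε) →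
      a * b ∈ Set.range ⇑(piR K A Δ ε)) ∧
    (∀ xL yR : A, xL ∈ Set.range ⇑(piL K A Δ ε) → yR ∈ Set.range ⇑(piR K A Δ ε) →
      xL * yR = yR * xL) := by
  refine ⟨?_, ?_, ?_, ?_, ?_⟩
  · rw [hA.range_piL]
    exact one_mem _
  · rw [hA.range_piR]
    exact one_mem _
  · rw [hA.range_piL]
    exact fun _ _ ↦ mul_mem
  · rw [hA.range_piR]
    exact fun _ _ ↦ mul_mem
  · rintro _ yR ⟨x, rfl⟩ hyR
    exact WeakBialgebra.commute_piL_of_commute x (hA.commute_comul_one_of_mem_range_piR hyR)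

/-- In a weak bialgebra `A` over a field `K`, the subsets
`A^L = Π^L(A)` and `A^R = Π^R(A)` are unital subalgebras (both contain `1` and are
closed under multiplication), and every element of `A^L` commutes with every element
of `A^R`. -/
theorem weakBialgebra_piL_piR_subalgebras_and_commute
    (K : Type*) [Field K] (A : Type*) [Ring A] [Algebra K A] [FiniteDimensional K A]
    (Δ : A →ₗ[K] A ⊗[K] A) (ε : A →ₗ[K] K) (hA : WeakBialgebra K A Δ ε) :
    (1 : A) ∈ Set.range ⇑(piL K A Δ ε) ∧
    (1 : A) ∈ Set.range ⇑(piR K A Δ ε) ∧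
    (∀ a b : A, a ∈ Set.range ⇑(piL K A Δ ε) → b ∈ Set.range ⇑(piL K A Δ ε) →
      a * b ∈ Set.range ⇑(piL K A Δ ε)) ∧
    (∀ a b : A, a ∈ Set.range ⇑(piR K A Δ ε) → b ∈ Set.range ⇑(piR K A Δ ε) →
      a * b ∈ Set.range ⇑(piR K A Δ ε)) ∧
    (∀ xL yR : A, xL ∈ Set.range ⇑(piL K A Δ ε) → yR ∈ Set.range ⇑(piR K A Δ ε) →
      xL * yR = yR * xL) :=
  weakBialgebra_piL_piR_subalgebras_and_commute_general K A Δ ε hA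
end
end

section
/- Let A be a weak bialgebra over a field K. The bilinear form A^R × A^L → K given by (y^R, x^L) ↦ ε(y^R x^L) is nondegenerate: if x^L ∈ A^L satisfies ε(y x^L) = 0 for all y ∈ A^R then x^L = 0, and if y^R ∈ A^R satisfies ε(y^R x) = 0 for all x ∈ A^L then y^R = 0. Consequently A^L and A^R are isomorphic as K-vector spaces (they have equal finite dimension). -/
open TensorProduct

noncomputable section

variable (K : Type*) [Field K] (A : Type*) [Ring A] [Algebra K A]

/-!
Taking `y = 1` in the second weak counit axiom gives `ε (a * b) = ε (a * Π^L b) = ε (Π^R a * b)`.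
Writing `Δ 1 = ∑ pᵢ ⊗ qᵢ`, `Π^L z = ∑ ε (pᵢ z) qᵢ` only depends on the functional `ε (· * z)`, so
`Π^L` is idempotent and vanishes on every `z` with `ε (a * z) = 0` for all `a`. If `xL ∈ A^L` is
orthogonal to `A^R`, then `ε (a * xL) = ε (Π^R a * xL) = 0` for all `a`, whence `xL = Π^L xL = 0`;
symmetrically on the other side. Both `A^L` and `A^R` lie in the span of the legs of `Δ 1`, so they
are finite-dimensional and the pairing, injective on both sides, is perfect.
-/

section Pairing

variable {K A} {Δ : A →ₗ[K] A ⊗[K] A} {ε : A →ₗ[K] K} {S : Finset (A × A)}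

lemma piL_eq_sum (hS : Δ 1 = ∑ i ∈ S, i.1 ⊗ₜ[K] i.2) (x : A) :
    piL K A Δ ε x = ∑ i ∈ S, ε (i.1 * x) • i.2 := by
  simp [piL, hS, Finset.sum_mul, Algebra.TensorProduct.tmul_mul_tmul]

lemma piR_eq_sum (hS : Δ 1 = ∑ i ∈ S, i.1 ⊗ₜ[K] i.2) (x : A) :
    piR K A Δ ε x = ∑ i ∈ S, ε (x * i.2) • i.1 := by
  simp [piR, hS, Finset.mul_sum, Algebra.TensorProduct.tmul_mul_tmul]

lemma piL_eq_zero_of_counit_mul_eq_zero {z : A} (h : ∀ a, ε (a * z) = 0) :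
    piL K A Δ ε z = 0 := by
  obtain ⟨S, hS⟩ := TensorProduct.exists_finset (Δ 1)
  simp [piL_eq_sum hS, h]

lemma piR_eq_zero_of_counit_mul_eq_zero {z : A} (h : ∀ b, ε (z * b) = 0) :
    piR K A Δ ε z = 0 := by
  obtain ⟨S, hS⟩ := TensorProduct.exists_finset (Δ 1)
  simp [piR_eq_sum hS, h]

instance finiteDimensional_range_piL : FiniteDimensional K (LinearMap.range (piL K A Δ ε)) := by
  classical
  obtain ⟨S, hS⟩ := TensorProduct.exists_finset (Δ 1)
  refine Submodule.finiteDimensional_of_le (S₂ := Submodule.span K (S.image Prod.snd : Set A)) ?_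
  rintro _ ⟨x, rfl⟩
  rw [piL_eq_sum hS]
  exact Submodule.sum_mem _ fun i hi ↦
    Submodule.smul_mem _ _ (Submodule.subset_span (Finset.mem_image_of_mem _ hi))

instance finiteDimensional_range_piR : FiniteDimensional K (LinearMap.range (piR K A Δ ε)) := by
  classical
  obtain ⟨S, hS⟩ := TensorProduct.exists_finset (Δ 1)
  refine Submodule.finiteDimensional_of_le (S₂ := Submodule.span K (S.image Prod.fst : Set A)) ?_
  rintro _ ⟨x, rfl⟩
  rw [piR_eq_sum hS]
  exact Submodule.sum_mem _ fun i hi ↦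
    Submodule.smul_mem _ _ (Submodule.subset_span (Finset.mem_image_of_mem _ hi))

namespace WeakBialgebra

variable (hA : WeakBialgebra K A Δ ε)
include hA

lemma counit_mul_eq_sum (hS : Δ 1 = ∑ i ∈ S, i.1 ⊗ₜ[K] i.2) (a b : A) :
    ε (a * b) = ∑ i ∈ S, ε (i.1 * b) * ε (a * i.2) := by
  simpa [hS] using hA.weak_counit_b a 1 b

lemma counit_mul_piL (a x : A) : ε (a * piL K A Δ ε x) = ε (a * x) := by
  obtain ⟨S, hS⟩ := TensorProduct.exists_finset (Δ 1)
  simp [piL_eq_sum hS, Finset.mul_sum, hA.counit_mul_eq_sum hS a x, mul_comm]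

lemma counit_piR_mul (x b : A) : ε (piR K A Δ ε x * b) = ε (x * b) := by
  obtain ⟨S, hS⟩ := TensorProduct.exists_finset (Δ 1)
  simp [piR_eq_sum hS, Finset.sum_mul, hA.counit_mul_eq_sum hS x b, mul_comm]

lemma piL_piL (x : A) : piL K A Δ ε (piL K A Δ ε x) = piL K A Δ ε x := by
  rw [← sub_eq_zero, ← map_sub]
  exact piL_eq_zero_of_counit_mul_eq_zero fun a ↦ by
    rw [mul_sub, map_sub, hA.counit_mul_piL, sub_self]

lemma piR_piR (x : A) : piR K A Δ ε (piR K A Δ ε x) = piR K A Δ ε x := by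
  rw [← sub_eq_zero, ← map_sub]
  exact piR_eq_zero_of_counit_mul_eq_zero fun b ↦ by
    rw [sub_mul, map_sub, hA.counit_piR_mul, sub_self]

lemma eq_zero_of_counit_range_piR_mul {xL : A} (hxL : xL ∈ LinearMap.range (piL K A Δ ε))
    (h : ∀ yR ∈ LinearMap.range (piR K A Δ ε), ε (yR * xL) = 0) : xL = 0 := by
  obtain ⟨x, rfl⟩ := hxL
  rw [← hA.piL_piL]
  exact piL_eq_zero_of_counit_mul_eq_zero fun a ↦ by
    rw [← hA.counit_piR_mul]
    exact h _ ⟨a, rfl⟩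

lemma eq_zero_of_counit_mul_range_piL {yR : A} (hyR : yR ∈ LinearMap.range (piR K A Δ ε))
    (h : ∀ xL ∈ LinearMap.range (piL K A Δ ε), ε (yR * xL) = 0) : yR = 0 := by
  obtain ⟨y, rfl⟩ := hyR
  rw [← hA.piR_piR]
  exact piR_eq_zero_of_counit_mul_eq_zero fun b ↦ by
    rw [← hA.counit_mul_piL]
    exact h _ ⟨b, rfl⟩

end WeakBialgebra

def counitPairing (Δ : A →ₗ[K] A ⊗[K] A) (ε : A →ₗ[K] K) :
    LinearMap.range (piR K A Δ ε) →ₗ[K] LinearMap.range (piL K A Δ ε) →ₗ[K] K :=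
  ((LinearMap.mul K A).compr₂ ε).compl₁₂ (Submodule.subtype _) (Submodule.subtype _)

lemma WeakBialgebra.isPerfPair_counitPairing (hA : WeakBialgebra K A Δ ε) :
    (counitPairing Δ ε).IsPerfPair := by
  refine .of_injective' (injective_iff_map_eq_zero _ |>.mpr fun y hy ↦ ?_)
    (injective_iff_map_eq_zero _ |>.mpr fun x hx ↦ ?_)
  · exact Subtype.ext <| hA.eq_zero_of_counit_mul_range_piL y.2 fun x hx ↦
      LinearMap.congr_fun hy ⟨x, hx⟩
  · exact Subtype.ext <| hA.eq_zero_of_counit_range_piR_mul x.2 fun y hy ↦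
      LinearMap.congr_fun hx ⟨y, hy⟩

end Pairing

theorem weakBialgebra_counit_pairing_nondegenerate_general
    (K : Type*) [Field K] (A : Type*) [Ring A] [Algebra K A]
    (Δ : A →ₗ[K] A ⊗[K] A) (ε : A →ₗ[K] K) (hA : WeakBialgebra K A Δ ε) :
    (∀ xL ∈ LinearMap.range (piL K A Δ ε),
      (∀ yR ∈ LinearMap.range (piR K A Δ ε), ε (yR * xL) = 0) → xL = 0) ∧
    (∀ yR ∈ LinearMap.range (piR K A Δ ε),
      (∀ xL ∈ LinearMap.range (piL K A Δ ε), ε (yR * xL) = 0) → yR = 0) ∧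
    Nonempty ((LinearMap.range (piL K A Δ ε)) ≃ₗ[K] (LinearMap.range (piR K A Δ ε))) ∧
    Module.finrank K (LinearMap.range (piL K A Δ ε)) =
      Module.finrank K (LinearMap.range (piR K A Δ ε)) := by
  have := hA.isPerfPair_counitPairing
  have hrank := (Module.finrank_of_isPerfPair (counitPairing Δ ε)).symm
  exact ⟨fun _ ↦ hA.eq_zero_of_counit_range_piR_mul, fun _ ↦ hA.eq_zero_of_counit_mul_range_piL,
    ⟨.ofFinrankEq _ _ hrank⟩, hrank⟩

/-- In a weak bialgebra `A` over a field `K`, the bilinear form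
`A^R × A^L → K`, `(y^R, x^L) ↦ ε(y^R x^L)` is nondegenerate; consequently `A^L` and
`A^R` are isomorphic as `K`-vector spaces and have equal finite dimension. -/
theorem weakBialgebra_counit_pairing_nondegenerate
    (K : Type*) [Field K] (A : Type*) [Ring A] [Algebra K A] [FiniteDimensional K A]
    (Δ : A →ₗ[K] A ⊗[K] A) (ε : A →ₗ[K] K) (hA : WeakBialgebra K A Δ ε) :
    (∀ xL ∈ LinearMap.range (piL K A Δ ε),
      (∀ yR ∈ LinearMap.range (piR K A Δ ε), ε (yR * xL) = 0) → xL = 0) ∧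
    (∀ yR ∈ LinearMap.range (piR K A Δ ε),
      (∀ xL ∈ LinearMap.range (piL K A Δ ε), ε (yR * xL) = 0) → yR = 0) ∧
    Nonempty ((LinearMap.range (piL K A Δ ε)) ≃ₗ[K] (LinearMap.range (piR K A Δ ε))) ∧
    Module.finrank K (LinearMap.range (piL K A Δ ε)) =
      Module.finrank K (LinearMap.range (piR K A Δ ε)) :=
  weakBialgebra_counit_pairing_nondegenerate_general K A Δ ε hA
end
end

section
/- Let A be a weak Hopf algebra over a field K. Then A^L and A^R are separable K-algebras. More precisely, the element q^L := Σ S(1₍₁₎) ⊗ 1₍₂₎ lies in A^L ⊗ A^L and satisfies Σ S(1₍₁₎)·1₍₂₎ = 1 and (x ⊗ 1) q^L = q^L (1 ⊗ x) for all x ∈ A^L, and the element q^R := Σ 1₍₁₎ ⊗ S(1₍₂₎) lies in A^R ⊗ A^R and satisfies Σ 1₍₁₎·S(1₍₂₎) = 1 and (y ⊗ 1) q^R = q^R (1 ⊗ y) for all y ∈ A^R. In particular A^L and A^R are semisimple rings. -/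
set_option synthInstance.maxHeartbeats 1000000
set_option maxHeartbeats 4000000


open TensorProduct

noncomputable section

variable (K : Type*) [Field K] (A : Type*) [Ring A] [Algebra K A]

section SS
variable {K : Type*} [Field K] {B : Type*} [Ring B] [Algebra K B]

theorem isSemisimpleRing_of_sep (q : B ⊗[K] B)
    (hq1 : LinearMap.mul' K B q = 1)
    (hq2 : ∀ b : B, (b ⊗ₜ[K] (1:B)) * q = q * ((1:B) ⊗ₜ[K] b)) :
    IsSemisimpleRing B := by
  refine (isSemisimpleModule_iff B B).mpr ⟨?_⟩
  intro N
  obtain ⟨N', hN'⟩ := Submodule.exists_isCompl (N.restrictScalars K)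
  set p0 : B →ₗ[K] B :=
    (N.restrictScalars K).subtype ∘ₗ (N.restrictScalars K).linearProjOfIsCompl N' hN' with hp0
  have hp0mem : ∀ x : B, p0 x ∈ N := fun x =>
    ((N.restrictScalars K).linearProjOfIsCompl N' hN' x).2
  have hp0id : ∀ x ∈ N, p0 x = x := by
    intro x hx
    have := Submodule.linearProjOfIsCompl_apply_left hN' ⟨x, hx⟩
    simp [hp0, this]
    exact congrArg Subtype.val this
  -- the bilinear gadget
  set G : B →ₗ[K] B →ₗ[K] (B →ₗ[K] B) :=
    LinearMap.mk₂ K (fun u v => LinearMap.mulLeft K u ∘ₗ p0 ∘ₗ LinearMap.mulLeft K v)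
      (fun u u' v => by ext x; simp [add_mul])
      (fun c u v => by ext x; simp [smul_mul_assoc])
      (fun u v v' => by ext x; simp [add_mul, mul_add])
      (fun c u v => by ext x; simp [smul_mul_assoc, mul_smul_comm]) with hG
  set Φ : B ⊗[K] B →ₗ[K] (B →ₗ[K] B) := TensorProduct.lift G with hΦ
  have hΦt : ∀ (u v x : B), Φ (u ⊗ₜ v) x = u * p0 (v * x) := by
    intro u v x; simp [hΦ, hG]
  have lemA : ∀ (t : B ⊗[K] B) (b x : B), Φ ((b ⊗ₜ[K] (1:B)) * t) x = b * Φ t x := by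
    intro t b x
    induction t using TensorProduct.induction_on with
    | zero => simp
    | tmul u v => simp [Algebra.TensorProduct.tmul_mul_tmul, hΦt, mul_assoc]
    | add t1 t2 h1 h2 => simp [mul_add, h1, h2]
  have lemB : ∀ (t : B ⊗[K] B) (b x : B), Φ (t * ((1:B) ⊗ₜ[K] b)) x = Φ t (b * x) := by
    intro t b x
    induction t using TensorProduct.induction_on with
    | zero => simp
    | tmul u v => simp [Algebra.TensorProduct.tmul_mul_tmul, hΦt, mul_assoc]
    | add t1 t2 h1 h2 => simp [add_mul, h1, h2]
  have lemC : ∀ (t : B ⊗[K] B) (n : B), n ∈ N → Φ t n = LinearMap.mul' K B t * n := by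
    intro t n hn
    induction t using TensorProduct.induction_on with
    | zero => simp
    | tmul u v =>
        have : p0 (v * n) = v * n := hp0id _ (N.smul_mem v hn)
        simp [hΦt, this, mul_assoc]
    | add t1 t2 h1 h2 => simp [add_mul, h1, h2]
  have lemD : ∀ (t : B ⊗[K] B) (x : B), Φ t x ∈ N := by
    intro t x
    induction t using TensorProduct.induction_on with
    | zero => simp
    | tmul u v => rw [hΦt]; simpa [smul_eq_mul] using N.smul_mem u (hp0mem (v * x))
    | add t1 t2 h1 h2 => simpa using N.add_mem h1 h2
  set F : B →ₗ[B] B :=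
    { toFun := fun x => Φ q x
      map_add' := fun x y => by simp
      map_smul' := fun b x => by
        simp only [smul_eq_mul, RingHom.id_apply]
        rw [← lemB q b x, ← hq2 b, lemA] } with hF
  have hFN : ∀ n ∈ N, F n = n := by
    intro n hn
    simp [hF, lemC q n hn, hq1]
  have hFrange : ∀ x, F x ∈ N := fun x => lemD q x
  refine ⟨LinearMap.ker F, ?_, ?_⟩
  · rw [disjoint_iff_inf_le]
    rintro x ⟨hxN, hxk⟩
    have h1 : F x = 0 := hxk
    have h2 : F x = x := hFN x hxN
    simp_all
  · rw [codisjoint_iff_le_sup]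
    intro x _
    refine Submodule.mem_sup.2 ⟨F x, hFrange x, x - F x, ?_, by abel⟩
    have : F (x - F x) = 0 := by
      rw [map_sub, hFN _ (hFrange x), sub_self]
    exact this
end SS


namespace WHAP
variable {K : Type*} [Field K] {A : Type*} [Ring A] [Algebra K A]
variable {Δ : A →ₗ[K] A ⊗[K] A} {ε : A →ₗ[K] K} {S : A →ₗ[K] A}
variable {s : Finset (A × A)}

theorem piL_apply (hs : Δ 1 = ∑ p ∈ s, p.1 ⊗ₜ[K] p.2) (x : A) :
    piL K A Δ ε x = ∑ p ∈ s, ε (p.1 * x) • p.2 := by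
  simp [piL, hs, Finset.sum_mul, Algebra.TensorProduct.tmul_mul_tmul]

theorem piR_apply (hs : Δ 1 = ∑ p ∈ s, p.1 ⊗ₜ[K] p.2) (x : A) :
    piR K A Δ ε x = ∑ p ∈ s, ε (x * p.2) • p.1 := by
  simp [piR, hs, Finset.mul_sum, Algebra.TensorProduct.tmul_mul_tmul]

theorem counitL_sum (hW : WeakBialgebra K A Δ ε) (hs : Δ 1 = ∑ p ∈ s, p.1 ⊗ₜ[K] p.2) :
    ∑ p ∈ s, ε p.1 • p.2 = 1 := by
  have h := hW.counit_left 1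
  rw [hs] at h
  simpa using h

theorem counitR_sum (hW : WeakBialgebra K A Δ ε) (hs : Δ 1 = ∑ p ∈ s, p.1 ⊗ₜ[K] p.2) :
    ∑ p ∈ s, ε p.2 • p.1 = 1 := by
  have h := hW.counit_right 1
  rw [hs] at h
  simpa using h

theorem piL_one (hW : WeakBialgebra K A Δ ε) : piL K A Δ ε 1 = 1 := by
  obtain ⟨s, hs⟩ := TensorProduct.exists_finset (Δ 1)
  rw [piL_apply hs]
  simpa using counitL_sum hW hs

theorem piR_one (hW : WeakBialgebra K A Δ ε) : piR K A Δ ε 1 = 1 := by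
  obtain ⟨s, hs⟩ := TensorProduct.exists_finset (Δ 1)
  rw [piR_apply hs]
  simpa using counitR_sum hW hs

theorem E1 (hW : WeakBialgebra K A Δ ε) (x v : A) :
    ε (x * piL K A Δ ε v) = ε (x * v) := by
  obtain ⟨s, hs⟩ := TensorProduct.exists_finset (Δ 1)
  have hw := hW.weak_counit_b x 1 v
  rw [hs] at hw
  simp only [mul_one, map_sum, TensorProduct.map_tmul, LinearMap.mul'_apply,
    LinearMap.coe_comp, Function.comp_apply, LinearMap.mulLeft_apply,
    LinearMap.mulRight_apply] at hw
  rw [piL_apply hs, Finset.mul_sum]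
  simp only [mul_smul_comm, map_sum, map_smul, smul_eq_mul]
  rw [← hw]

theorem E2 (hW : WeakBialgebra K A Δ ε) (v y : A) :
    ε (piR K A Δ ε v * y) = ε (v * y) := by
  obtain ⟨s, hs⟩ := TensorProduct.exists_finset (Δ 1)
  have hw := hW.weak_counit_b v 1 y
  rw [hs] at hw
  simp only [mul_one, map_sum, TensorProduct.map_tmul, LinearMap.mul'_apply,
    LinearMap.coe_comp, Function.comp_apply, LinearMap.mulLeft_apply,
    LinearMap.mulRight_apply] at hw
  rw [piR_apply hs, Finset.sum_mul]
  simp only [smul_mul_assoc, map_sum, map_smul, smul_eq_mul]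
  exact (Finset.sum_congr rfl fun p _ => mul_comm _ _).trans hw.symm

theorem RT1 (hs : Δ 1 = ∑ p ∈ s, p.1 ⊗ₜ[K] p.2) :
    Δ.rTensor A (Δ 1) = ∑ p ∈ s, (Δ p.1) ⊗ₜ[K] p.2 := by
  conv_lhs => rw [hs]
  simp

theorem LT1 (hs : Δ 1 = ∑ p ∈ s, p.1 ⊗ₜ[K] p.2) :
    Δ.lTensor A (Δ 1) = ∑ p ∈ s, p.1 ⊗ₜ[K] (Δ p.2) := by
  conv_lhs => rw [hs]
  simp

theorem UA (hW : WeakBialgebra K A Δ ε) (hs : Δ 1 = ∑ p ∈ s, p.1 ⊗ₜ[K] p.2) :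
    Δ.rTensor A (Δ 1) = ∑ p ∈ s, ∑ q ∈ s, (q.1 ⊗ₜ[K] (q.2 * p.1)) ⊗ₜ[K] p.2 := by
  have h := hW.weak_comul_unit_a
  rw [hs] at h
  rw [RT1 hs]
  simpa [sum_tmul, tmul_sum, Finset.sum_mul, Finset.mul_sum,
    Algebra.TensorProduct.tmul_mul_tmul] using h

theorem UB (hW : WeakBialgebra K A Δ ε) (hs : Δ 1 = ∑ p ∈ s, p.1 ⊗ₜ[K] p.2) :
    Δ.rTensor A (Δ 1) = ∑ q ∈ s, ∑ p ∈ s, (q.1 ⊗ₜ[K] (p.1 * q.2)) ⊗ₜ[K] p.2 := by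
  have h := hW.weak_comul_unit_b
  rw [hs] at h
  rw [RT1 hs]
  simpa [sum_tmul, tmul_sum, Finset.sum_mul, Finset.mul_sum,
    Algebra.TensorProduct.tmul_mul_tmul] using h

theorem CAa (hW : WeakBialgebra K A Δ ε) (hs : Δ 1 = ∑ p ∈ s, p.1 ⊗ₜ[K] p.2) :
    (∑ p ∈ s, p.1 ⊗ₜ[K] (Δ p.2)) = ∑ p ∈ s, ∑ q ∈ s, q.1 ⊗ₜ[K] ((q.2 * p.1) ⊗ₜ[K] p.2) := by
  rw [← LT1 hs, ← hW.coassoc 1, UA hW hs]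
  simp

theorem CAb (hW : WeakBialgebra K A Δ ε) (hs : Δ 1 = ∑ p ∈ s, p.1 ⊗ₜ[K] p.2) :
    (∑ p ∈ s, p.1 ⊗ₜ[K] (Δ p.2)) = ∑ q ∈ s, ∑ p ∈ s, q.1 ⊗ₜ[K] ((p.1 * q.2) ⊗ₜ[K] p.2) := by
  rw [← LT1 hs, ← hW.coassoc 1, UB hW hs]
  simp

theorem C2La' (hW : WeakBialgebra K A Δ ε) (x : A) :
    Δ (piL K A Δ ε x) = (piL K A Δ ε x ⊗ₜ[K] (1:A)) * Δ 1 := by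
  obtain ⟨s, hs⟩ := TensorProduct.exists_finset (Δ 1)
  have h := congrArg ((TensorProduct.lid K (A ⊗[K] A)).toLinearMap ∘ₗ
    (LinearMap.rTensor (A ⊗[K] A) (ε ∘ₗ LinearMap.mulRight K x))) (CAa hW hs)
  simp only [map_sum, LinearMap.coe_comp, LinearEquiv.coe_coe, Function.comp_apply,
    LinearMap.rTensor_tmul, LinearMap.mulRight_apply, lid_tmul] at h
  conv_lhs => rw [piL_apply hs]
  rw [map_sum]
  simp only [map_smul]
  rw [h, piL_apply hs]
  conv_rhs => rw [hs]
  simp only [sum_tmul, Finset.sum_mul, Finset.mul_sum, smul_mul_assoc,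
    Algebra.TensorProduct.tmul_mul_tmul, one_mul, TensorProduct.smul_tmul']

theorem C2La'' (hW : WeakBialgebra K A Δ ε) (x : A) :
    Δ (piL K A Δ ε x) = Δ 1 * (piL K A Δ ε x ⊗ₜ[K] (1:A)) := by
  obtain ⟨s, hs⟩ := TensorProduct.exists_finset (Δ 1)
  have h := congrArg ((TensorProduct.lid K (A ⊗[K] A)).toLinearMap ∘ₗ
    (LinearMap.rTensor (A ⊗[K] A) (ε ∘ₗ LinearMap.mulRight K x))) (CAb hW hs)
  simp only [map_sum, LinearMap.coe_comp, LinearEquiv.coe_coe, Function.comp_apply,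
    LinearMap.rTensor_tmul, LinearMap.mulRight_apply, lid_tmul] at h
  conv_lhs => rw [piL_apply hs]
  rw [map_sum]
  simp only [map_smul]
  rw [h, piL_apply hs]
  conv_rhs => rw [hs]
  simp only [sum_tmul, Finset.sum_mul, Finset.mul_sum, smul_mul_assoc,
    Algebra.TensorProduct.tmul_mul_tmul, mul_one, TensorProduct.smul_tmul',
    mul_smul_comm, TensorProduct.tmul_smul]

theorem C2Ra' (hW : WeakBialgebra K A Δ ε) (x : A) :
    Δ (piR K A Δ ε x) = ((1:A) ⊗ₜ[K] piR K A Δ ε x) * Δ 1 := by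
  obtain ⟨s, hs⟩ := TensorProduct.exists_finset (Δ 1)
  have h := congrArg ((TensorProduct.rid K (A ⊗[K] A)).toLinearMap ∘ₗ
    (LinearMap.lTensor (A ⊗[K] A) (ε ∘ₗ LinearMap.mulLeft K x))) ((RT1 hs).symm.trans (UB hW hs))
  simp only [map_sum, LinearMap.coe_comp, LinearEquiv.coe_coe, Function.comp_apply,
    LinearMap.lTensor_tmul, LinearMap.mulLeft_apply, rid_tmul] at h
  conv_lhs => rw [piR_apply hs]
  rw [map_sum]
  simp only [map_smul]
  rw [h, piR_apply hs]
  conv_rhs => rw [hs]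
  simp only [sum_tmul, tmul_sum, Finset.sum_mul, Finset.mul_sum, smul_mul_assoc,
    Algebra.TensorProduct.tmul_mul_tmul, one_mul, TensorProduct.smul_tmul',
    mul_smul_comm, TensorProduct.tmul_smul]

theorem C2Ra'' (hW : WeakBialgebra K A Δ ε) (x : A) :
    Δ (piR K A Δ ε x) = Δ 1 * ((1:A) ⊗ₜ[K] piR K A Δ ε x) := by
  obtain ⟨s, hs⟩ := TensorProduct.exists_finset (Δ 1)
  have h := congrArg ((TensorProduct.rid K (A ⊗[K] A)).toLinearMap ∘ₗ
    (LinearMap.lTensor (A ⊗[K] A) (ε ∘ₗ LinearMap.mulLeft K x))) ((RT1 hs).symm.trans (UA hW hs))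
  simp only [map_sum, LinearMap.coe_comp, LinearEquiv.coe_coe, Function.comp_apply,
    LinearMap.lTensor_tmul, LinearMap.mulLeft_apply, rid_tmul] at h
  conv_lhs => rw [piR_apply hs]
  rw [map_sum]
  simp only [map_smul]
  rw [h, piR_apply hs]
  conv_rhs => rw [hs]
  simp only [sum_tmul, tmul_sum, Finset.sum_mul, Finset.mul_sum, smul_mul_assoc,
    Algebra.TensorProduct.tmul_mul_tmul, mul_one, TensorProduct.smul_tmul',
    mul_smul_comm, TensorProduct.tmul_smul]

theorem AUX1 (hW : WeakBialgebra K A Δ ε) (hs : Δ 1 = ∑ p ∈ s, p.1 ⊗ₜ[K] p.2)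
    (t : A ⊗[K] A) :
    LinearMap.lTensor A (piL K A Δ ε) (Δ 1 * t) =
      ∑ p ∈ s, ((TensorProduct.rid K A) ((LinearMap.lTensor A ε) (Δ p.1 * t))) ⊗ₜ[K] p.2 := by
  induction t using TensorProduct.induction_on with
  | zero => simp
  | add t1 t2 h1 h2 => simp [mul_add, Finset.sum_add_distrib, add_tmul, tmul_add, h1, h2]
  | tmul u v =>
    have h := congrArg (LinearMap.rTensor A ((TensorProduct.rid K A).toLinearMap ∘ₗ
      LinearMap.lTensor A ε ∘ₗ LinearMap.mulRight K (u ⊗ₜ[K] v)))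
      ((RT1 hs).symm.trans (UB hW hs))
    simp only [map_sum, LinearMap.coe_comp, LinearEquiv.coe_coe, Function.comp_apply,
      LinearMap.rTensor_tmul, LinearMap.mulRight_apply, LinearMap.lTensor_tmul,
      Algebra.TensorProduct.tmul_mul_tmul, rid_tmul] at h
    rw [h]
    conv_lhs => rw [hs]
    simp only [Finset.sum_mul, Algebra.TensorProduct.tmul_mul_tmul, map_sum,
      LinearMap.lTensor_tmul]
    refine Finset.sum_congr rfl fun p _ => ?_
    rw [piL_apply hs]
    simp only [tmul_sum, TensorProduct.tmul_smul, TensorProduct.smul_tmul', mul_assoc]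

theorem W1 (hW : WeakBialgebra K A Δ ε) (x : A) :
    LinearMap.lTensor A (piL K A Δ ε) (Δ x) = Δ 1 * (x ⊗ₜ[K] (1:A)) := by
  obtain ⟨s, hs⟩ := TensorProduct.exists_finset (Δ 1)
  have h0 : Δ x = Δ 1 * Δ x := by rw [← hW.comul_mul, one_mul]
  rw [h0, AUX1 hW hs]
  have : ∀ p ∈ s, ((TensorProduct.rid K A) ((LinearMap.lTensor A ε) (Δ p.1 * Δ x))) ⊗ₜ[K] p.2
      = (p.1 * x) ⊗ₜ[K] p.2 := by
    intro p _
    rw [← hW.comul_mul, hW.counit_right]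
  rw [Finset.sum_congr rfl this]
  conv_rhs => rw [hs]
  simp [Finset.sum_mul, Algebra.TensorProduct.tmul_mul_tmul]

theorem AUX2 (hW : WeakBialgebra K A Δ ε) (hs : Δ 1 = ∑ p ∈ s, p.1 ⊗ₜ[K] p.2)
    (t : A ⊗[K] A) :
    LinearMap.rTensor A (piR K A Δ ε) (t * Δ 1) =
      ∑ p ∈ s, p.1 ⊗ₜ[K] ((TensorProduct.lid K A) ((LinearMap.rTensor A ε) (t * Δ p.2))) := by
  induction t using TensorProduct.induction_on with
  | zero => simp
  | add t1 t2 h1 h2 => simp [add_mul, Finset.sum_add_distrib, tmul_add, h1, h2]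
  | tmul u v =>
    have h := congrArg (LinearMap.lTensor A ((TensorProduct.lid K A).toLinearMap ∘ₗ
      LinearMap.rTensor A ε ∘ₗ LinearMap.mulLeft K (u ⊗ₜ[K] v)))
      (CAb hW hs)
    simp only [map_sum, LinearMap.coe_comp, LinearEquiv.coe_coe, Function.comp_apply,
      LinearMap.lTensor_tmul, LinearMap.mulLeft_apply, LinearMap.rTensor_tmul,
      Algebra.TensorProduct.tmul_mul_tmul, lid_tmul] at h
    rw [h]
    conv_lhs => rw [hs]
    simp only [Finset.mul_sum, Algebra.TensorProduct.tmul_mul_tmul, map_sum,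
      LinearMap.rTensor_tmul]
    have hL : ∀ p ∈ s, (piR K A Δ ε (u*p.1)) ⊗ₜ[K] (v*p.2)
        = ∑ a ∈ s, ε (u*(p.1*a.2)) • (a.1 ⊗ₜ[K] (v*p.2)) := by
      intro p _
      rw [piR_apply hs]
      simp [sum_tmul, TensorProduct.smul_tmul', mul_assoc]
    rw [Finset.sum_congr rfl hL, Finset.sum_comm]
    simp only [TensorProduct.tmul_smul]

theorem W2 (hW : WeakBialgebra K A Δ ε) (x : A) :
    LinearMap.rTensor A (piR K A Δ ε) (Δ x) = ((1:A) ⊗ₜ[K] x) * Δ 1 := by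
  obtain ⟨s, hs⟩ := TensorProduct.exists_finset (Δ 1)
  have h0 : Δ x = Δ x * Δ 1 := by rw [← hW.comul_mul, mul_one]
  rw [h0, AUX2 hW hs]
  have : ∀ p ∈ s, p.1 ⊗ₜ[K] ((TensorProduct.lid K A) ((LinearMap.rTensor A ε) (Δ x * Δ p.2)))
      = p.1 ⊗ₜ[K] (x * p.2) := by
    intro p _
    rw [← hW.comul_mul, hW.counit_left]
  rw [Finset.sum_congr rfl this]
  conv_rhs => rw [hs]
  simp [Finset.mul_sum, Algebra.TensorProduct.tmul_mul_tmul]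

theorem C1L (hW : WeakBialgebra K A Δ ε) :
    LinearMap.lTensor A (piL K A Δ ε) (Δ 1) = Δ 1 := by
  rw [W1 hW 1, ← Algebra.TensorProduct.one_def, mul_one]

theorem C1R (hW : WeakBialgebra K A Δ ε) :
    LinearMap.rTensor A (piR K A Δ ε) (Δ 1) = Δ 1 := by
  rw [W2 hW 1, ← Algebra.TensorProduct.one_def, one_mul]

theorem M1 (hW : WeakBialgebra K A Δ ε) (x y : A) :
    Δ (x * piL K A Δ ε y) = Δ x * (piL K A Δ ε y ⊗ₜ[K] (1:A)) := by
  rw [hW.comul_mul, C2La'' hW, ← mul_assoc, ← hW.comul_mul, mul_one]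

theorem M2 (hW : WeakBialgebra K A Δ ε) (x y : A) :
    Δ (piL K A Δ ε y * x) = (piL K A Δ ε y ⊗ₜ[K] (1:A)) * Δ x := by
  rw [hW.comul_mul, C2La' hW, mul_assoc, ← hW.comul_mul, one_mul]

theorem M3 (hW : WeakBialgebra K A Δ ε) (x y : A) :
    Δ (piR K A Δ ε y * x) = ((1:A) ⊗ₜ[K] piR K A Δ ε y) * Δ x := by
  rw [hW.comul_mul, C2Ra' hW, mul_assoc, ← hW.comul_mul, one_mul]

theorem M4 (hW : WeakBialgebra K A Δ ε) (x y : A) :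
    Δ (x * piR K A Δ ε y) = Δ x * ((1:A) ⊗ₜ[K] piR K A Δ ε y) := by
  rw [hW.comul_mul, C2Ra'' hW, ← mul_assoc, ← hW.comul_mul, mul_one]

theorem COM (hW : WeakBialgebra K A Δ ε) (u v : A) :
    piL K A Δ ε u * piR K A Δ ε v = piR K A Δ ε v * piL K A Δ ε u := by
  obtain ⟨s, hs⟩ := TensorProduct.exists_finset (Δ 1)
  have h : (piL K A Δ ε u ⊗ₜ[K] (1:A)) * Δ 1 = Δ 1 * (piL K A Δ ε u ⊗ₜ[K] (1:A)) := by
    rw [← C2La' hW u, C2La'' hW u]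
  rw [hs] at h
  simp only [Finset.sum_mul, Finset.mul_sum, Algebra.TensorProduct.tmul_mul_tmul,
    one_mul, mul_one] at h
  have h2 := congrArg ((TensorProduct.rid K A).toLinearMap ∘ₗ
    (LinearMap.lTensor A (ε ∘ₗ LinearMap.mulLeft K v))) h
  simp only [map_sum, LinearMap.coe_comp, LinearEquiv.coe_coe, Function.comp_apply,
    LinearMap.lTensor_tmul, LinearMap.mulLeft_apply, rid_tmul] at h2
  rw [piR_apply hs, Finset.mul_sum, Finset.sum_mul]
  simp only [mul_smul_comm, smul_mul_assoc]
  exact h2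

variable {S : A →ₗ[K] A}

theorem SsumL (hA : WeakHopfAlgebra K A Δ ε S) (hs : Δ 1 = ∑ p ∈ s, p.1 ⊗ₜ[K] p.2) :
    ∑ p ∈ s, p.1 * S p.2 = 1 := by
  have h := hA.antipode_a 1
  rw [hs, piL_one hA.toWeakBialgebra] at h
  simpa using h

theorem SsumR (hA : WeakHopfAlgebra K A Δ ε S) (hs : Δ 1 = ∑ p ∈ s, p.1 ⊗ₜ[K] p.2) :
    ∑ p ∈ s, S p.1 * p.2 = 1 := by
  have h := hA.antipode_b 1
  rw [hs, piR_one hA.toWeakBialgebra] at h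
  simpa using h

theorem AUXmulL (c : A) (t : A ⊗[K] A) :
    LinearMap.mul' K A (LinearMap.lTensor A S ((c ⊗ₜ[K] (1:A)) * t)) =
      c * LinearMap.mul' K A (LinearMap.lTensor A S t) := by
  induction t using TensorProduct.induction_on with
  | zero => simp
  | tmul u v => simp [Algebra.TensorProduct.tmul_mul_tmul, mul_assoc]
  | add t1 t2 h1 h2 => simp [mul_add, h1, h2]

theorem AUXmulR (c : A) (t : A ⊗[K] A) :
    LinearMap.mul' K A (LinearMap.rTensor A S (t * ((1:A) ⊗ₜ[K] c))) =
      LinearMap.mul' K A (LinearMap.rTensor A S t) * c := by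
  induction t using TensorProduct.induction_on with
  | zero => simp
  | tmul u v => simp [Algebra.TensorProduct.tmul_mul_tmul, mul_assoc]
  | add t1 t2 h1 h2 => simp [add_mul, h1, h2]

theorem W7 (hA : WeakHopfAlgebra K A Δ ε S) (u x : A) :
    piL K A Δ ε u * piL K A Δ ε x = piL K A Δ ε (piL K A Δ ε u * x) := by
  have h := hA.antipode_a (piL K A Δ ε u * x)
  rw [M2 hA.toWeakBialgebra, AUXmulL, hA.antipode_a x] at h
  exact h

theorem W7R (hA : WeakHopfAlgebra K A Δ ε S) (x u : A) :
    piR K A Δ ε x * piR K A Δ ε u = piR K A Δ ε (x * piR K A Δ ε u) := by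
  have h := hA.antipode_b (x * piR K A Δ ε u)
  rw [M4 hA.toWeakBialgebra, AUXmulR, hA.antipode_b x] at h
  exact h

theorem E1' (hW : WeakBialgebra K A Δ ε) (z w : A) :
    piL K A Δ ε (z * piL K A Δ ε w) = piL K A Δ ε (z * w) := by
  obtain ⟨s, hs⟩ := TensorProduct.exists_finset (Δ 1)
  rw [piL_apply hs (z * piL K A Δ ε w), piL_apply hs (z * w)]
  refine Finset.sum_congr rfl fun p _ => ?_
  rw [← mul_assoc, E1 hW, mul_assoc]

theorem E2' (hW : WeakBialgebra K A Δ ε) (v y : A) :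
    piR K A Δ ε (piR K A Δ ε v * y) = piR K A Δ ε (v * y) := by
  obtain ⟨s, hs⟩ := TensorProduct.exists_finset (Δ 1)
  rw [piR_apply hs (piR K A Δ ε v * y), piR_apply hs (v * y)]
  refine Finset.sum_congr rfl fun p _ => ?_
  rw [mul_assoc, E2 hW, ← mul_assoc]

theorem S3b (hA : WeakHopfAlgebra K A Δ ε S) (x : A) :
    S (piL K A Δ ε x) = piR K A Δ ε (piL K A Δ ε x) := by
  have hW := hA.toWeakBialgebra
  obtain ⟨s, hs⟩ := TensorProduct.exists_finset (Δ 1)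
  set y := piL K A Δ ε x with hy
  have hΔy : Δ y = ∑ p ∈ s, (y * p.1) ⊗ₜ[K] p.2 := by
    rw [hy, C2La' hW x]
    conv_lhs => rw [hs]
    simp [Finset.mul_sum, Algebra.TensorProduct.tmul_mul_tmul]
  have hT : LinearMap.lTensor A Δ (Δ y) =
      ∑ p ∈ s, ∑ q ∈ s, (y * q.1) ⊗ₜ[K] ((q.2 * p.1) ⊗ₜ[K] p.2) := by
    rw [hΔy]
    simp only [map_sum, LinearMap.lTensor_tmul]
    have h := congrArg (LinearMap.rTensor (A ⊗[K] A) (LinearMap.mulLeft K y)) (CAa hW hs)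
    simpa only [map_sum, LinearMap.rTensor_tmul, LinearMap.mulLeft_apply] using h
  have hc := hA.antipode_c y
  rw [hT] at hc
  simp only [map_sum, TensorProduct.map_tmul, LinearMap.mul'_apply, LinearMap.coe_comp,
    Function.comp_apply, LinearMap.lTensor_tmul] at hc
  have hb := hA.antipode_b y
  rw [hΔy] at hb
  simp only [map_sum, LinearMap.rTensor_tmul, LinearMap.mul'_apply] at hb
  calc S y = ∑ p ∈ s, ∑ q ∈ s, S (y * q.1) * ((q.2 * p.1) * S p.2) := hc.symm
    _ = ∑ q ∈ s, ∑ p ∈ s, (S (y * q.1) * q.2) * (p.1 * S p.2) := by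
        rw [Finset.sum_comm]
        exact Finset.sum_congr rfl fun q _ => Finset.sum_congr rfl fun p _ => by
          rw [mul_assoc q.2, ← mul_assoc]
    _ = ∑ q ∈ s, (S (y * q.1) * q.2) * ∑ p ∈ s, (p.1 * S p.2) := by
        simp [Finset.mul_sum]
    _ = piR K A Δ ε y := by
        rw [SsumL hA hs]
        simpa using hb

theorem S3a (hA : WeakHopfAlgebra K A Δ ε S) (x : A) :
    S (piR K A Δ ε x) = piL K A Δ ε (piR K A Δ ε x) := by
  have hW := hA.toWeakBialgebra
  obtain ⟨s, hs⟩ := TensorProduct.exists_finset (Δ 1)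
  set y := piR K A Δ ε x with hy
  have hΔy : Δ y = ∑ p ∈ s, p.1 ⊗ₜ[K] (p.2 * y) := by
    rw [hy, C2Ra'' hW x]
    conv_lhs => rw [hs]
    simp [Finset.sum_mul, Algebra.TensorProduct.tmul_mul_tmul]
  have hT : LinearMap.lTensor A Δ (Δ y) =
      ∑ p ∈ s, ∑ q ∈ s, ∑ r ∈ s,
        q.1 ⊗ₜ[K] ((q.2 * p.1 * r.1) ⊗ₜ[K] (p.2 * (r.2 * y))) := by
    rw [hΔy]
    simp only [map_sum, LinearMap.lTensor_tmul]
    have h1 : ∀ p ∈ s, (p.1 : A) ⊗ₜ[K] (Δ (p.2 * y)) = p.1 ⊗ₜ[K] (Δ p.2 * Δ y) := by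
      intro p _; rw [hW.comul_mul]
    rw [Finset.sum_congr rfl h1]
    have h := congrArg (LinearMap.lTensor A (LinearMap.mulRight K (Δ y))) (CAa hW hs)
    simp only [map_sum, LinearMap.lTensor_tmul, LinearMap.mulRight_apply] at h
    rw [h]
    refine Finset.sum_congr rfl fun p _ => Finset.sum_congr rfl fun q _ => ?_
    rw [hΔy]
    simp [Finset.mul_sum, Algebra.TensorProduct.tmul_mul_tmul, tmul_sum, mul_assoc]
  have hc := hA.antipode_c y
  rw [hT] at hc
  simp only [map_sum, TensorProduct.map_tmul, LinearMap.mul'_apply, LinearMap.coe_comp,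
    Function.comp_apply, LinearMap.lTensor_tmul] at hc
  have hIDEM : (∑ p ∈ s, ∑ r ∈ s, (p.1 * r.1) ⊗ₜ[K] (p.2 * r.2)) = ∑ p ∈ s, p.1 ⊗ₜ[K] p.2 := by
    have h : Δ 1 * Δ 1 = Δ 1 := by rw [← hW.comul_mul, one_mul]
    rw [hs] at h
    simp only [Finset.sum_mul, Finset.mul_sum, Algebra.TensorProduct.tmul_mul_tmul] at h
    exact Finset.sum_comm.trans h
  have hcol := congrArg (LinearMap.mul' K A ∘ₗ
    LinearMap.lTensor A (S ∘ₗ LinearMap.mulRight K y)) hIDEM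
  simp only [map_sum, LinearMap.coe_comp, Function.comp_apply, LinearMap.lTensor_tmul,
    LinearMap.mul'_apply, LinearMap.mulRight_apply] at hcol
  have ha := hA.antipode_a y
  rw [hΔy] at ha
  simp only [map_sum, LinearMap.lTensor_tmul, LinearMap.mul'_apply] at ha
  calc S y = ∑ p ∈ s, ∑ q ∈ s, ∑ r ∈ s, S q.1 * (q.2 * p.1 * r.1 * S (p.2 * (r.2 * y))) :=
        hc.symm
    _ = ∑ p ∈ s, ∑ r ∈ s, (∑ q ∈ s, S q.1 * q.2) * ((p.1 * r.1) * S (p.2 * (r.2 * y))) := by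
        refine Finset.sum_congr rfl fun p _ => ?_
        rw [Finset.sum_comm]
        refine Finset.sum_congr rfl fun r _ => ?_
        rw [Finset.sum_mul]
        refine Finset.sum_congr rfl fun q _ => ?_
        rw [mul_assoc q.2 p.1 r.1, mul_assoc q.2 (p.1 * r.1) _, ← mul_assoc (S q.1)]
    _ = ∑ p ∈ s, ∑ r ∈ s, (p.1 * r.1) * S ((p.2 * r.2) * y) := by
        rw [SsumR hA hs]
        exact Finset.sum_congr rfl fun p _ => Finset.sum_congr rfl fun r _ => by
          rw [one_mul, mul_assoc p.2 r.2 y]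
    _ = ∑ p ∈ s, p.1 * S (p.2 * y) := hcol
    _ = piL K A Δ ε y := ha

theorem K1 (hA : WeakHopfAlgebra K A Δ ε S) :
    LinearMap.rTensor A S (Δ 1) = LinearMap.rTensor A (piL K A Δ ε) (Δ 1) := by
  have hW := hA.toWeakBialgebra
  have hcomp : S ∘ₗ piR K A Δ ε = piL K A Δ ε ∘ₗ piR K A Δ ε := LinearMap.ext (S3a hA)
  conv_lhs => rw [← C1R hW, ← LinearMap.comp_apply, ← LinearMap.rTensor_comp, hcomp,
    LinearMap.rTensor_comp, LinearMap.comp_apply, C1R hW]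

theorem K1R (hA : WeakHopfAlgebra K A Δ ε S) :
    LinearMap.lTensor A S (Δ 1) = LinearMap.lTensor A (piR K A Δ ε) (Δ 1) := by
  have hW := hA.toWeakBialgebra
  have hcomp : S ∘ₗ piL K A Δ ε = piR K A Δ ε ∘ₗ piL K A Δ ε := LinearMap.ext (S3b hA)
  conv_lhs => rw [← C1L hW, ← LinearMap.comp_apply, ← LinearMap.lTensor_comp, hcomp,
    LinearMap.lTensor_comp, LinearMap.comp_apply, C1L hW]

theorem FIN (hA : WeakHopfAlgebra K A Δ ε S) (hs : Δ 1 = ∑ p ∈ s, p.1 ⊗ₜ[K] p.2) (w : A) :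
    (∑ p ∈ s, piL K A Δ ε (p.1 * w) ⊗ₜ[K] p.2) =
      ∑ p ∈ s, piL K A Δ ε p.1 ⊗ₜ[K] piL K A Δ ε (p.2 * w) := by
  have hW := hA.toWeakBialgebra
  set Ψ : A ⊗[K] A →ₗ[K] A := (TensorProduct.rid K A).toLinearMap ∘ₗ
    TensorProduct.map (piL K A Δ ε) (ε ∘ₗ LinearMap.mulRight K w) with hΨdef
  have hΨ : ∀ u v : A, Ψ (u ⊗ₜ[K] v) = ε (v * w) • piL K A Δ ε u := by
    intro u v; simp [hΨdef]
  have hPSIaux : ∀ t : A ⊗[K] A,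
      (∑ p ∈ s, (LinearMap.mul' K K (TensorProduct.map (ε ∘ₗ LinearMap.mulLeft K p.1)
        (ε ∘ₗ LinearMap.mulRight K w) t)) • p.2) = Ψ t := by
    intro t
    induction t using TensorProduct.induction_on with
    | zero => simp
    | add t1 t2 h1 h2 => simp [Finset.sum_add_distrib, add_smul, h1, h2]
    | tmul u v =>
      rw [hΨ u v, piL_apply hs, Finset.smul_sum]
      simp only [TensorProduct.map_tmul, LinearMap.mul'_apply, LinearMap.coe_comp,
        Function.comp_apply, LinearMap.mulLeft_apply, LinearMap.mulRight_apply]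
      exact Finset.sum_congr rfl fun p _ => by rw [smul_smul, mul_comm]
  have hPSI : ∀ y : A, Ψ (Δ y) = piL K A Δ ε (y * w) := by
    intro y
    rw [piL_apply hs (y * w), ← hPSIaux (Δ y)]
    refine Finset.sum_congr rfl fun p _ => ?_
    rw [← hW.weak_counit_a p.1 y w, mul_assoc]
  calc (∑ p ∈ s, piL K A Δ ε (p.1 * w) ⊗ₜ[K] p.2)
      = ∑ p ∈ s, Ψ (Δ p.1) ⊗ₜ[K] p.2 :=
        Finset.sum_congr rfl fun p _ => by rw [hPSI p.1]
    _ = LinearMap.rTensor A Ψ (Δ.rTensor A (Δ 1)) := by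
        rw [RT1 hs]; simp
    _ = LinearMap.rTensor A Ψ (∑ q ∈ s, ∑ p ∈ s, (q.1 ⊗ₜ[K] (p.1 * q.2)) ⊗ₜ[K] p.2) := by
        rw [UB hW hs]
    _ = ∑ q ∈ s, ∑ p ∈ s, (ε ((p.1 * q.2) * w) • piL K A Δ ε q.1) ⊗ₜ[K] p.2 := by
        simp [hΨ]
    _ = ∑ q ∈ s, piL K A Δ ε q.1 ⊗ₜ[K] piL K A Δ ε (q.2 * w) := by
        refine Finset.sum_congr rfl fun q _ => ?_
        rw [piL_apply hs (q.2 * w), tmul_sum]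
        exact Finset.sum_congr rfl fun p _ => by
          rw [TensorProduct.smul_tmul, mul_assoc]

theorem FINR (hA : WeakHopfAlgebra K A Δ ε S) (hs : Δ 1 = ∑ p ∈ s, p.1 ⊗ₜ[K] p.2) (w : A) :
    (∑ p ∈ s, piR K A Δ ε (w * p.1) ⊗ₜ[K] piR K A Δ ε p.2) =
      ∑ p ∈ s, p.1 ⊗ₜ[K] piR K A Δ ε (w * p.2) := by
  have hW := hA.toWeakBialgebra
  set Ψ : A ⊗[K] A →ₗ[K] A := (TensorProduct.lid K A).toLinearMap ∘ₗ
    TensorProduct.map (ε ∘ₗ LinearMap.mulLeft K w) (piR K A Δ ε) with hΨdef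
  have hΨ : ∀ u v : A, Ψ (u ⊗ₜ[K] v) = ε (w * u) • piR K A Δ ε v := by
    intro u v; simp [hΨdef]
  have hPSIaux : ∀ t : A ⊗[K] A,
      (∑ p ∈ s, (LinearMap.mul' K K (TensorProduct.map (ε ∘ₗ LinearMap.mulLeft K w)
        (ε ∘ₗ LinearMap.mulRight K p.2) t)) • p.1) = Ψ t := by
    intro t
    induction t using TensorProduct.induction_on with
    | zero => simp
    | add t1 t2 h1 h2 => simp [Finset.sum_add_distrib, add_smul, h1, h2]
    | tmul u v =>
      rw [hΨ u v, piR_apply hs, Finset.smul_sum]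
      simp only [TensorProduct.map_tmul, LinearMap.mul'_apply, LinearMap.coe_comp,
        Function.comp_apply, LinearMap.mulLeft_apply, LinearMap.mulRight_apply]
      exact Finset.sum_congr rfl fun p _ => by rw [smul_smul]
  have hPSI : ∀ y : A, Ψ (Δ y) = piR K A Δ ε (w * y) := by
    intro y
    rw [piR_apply hs (w * y), ← hPSIaux (Δ y)]
    refine Finset.sum_congr rfl fun p _ => ?_
    rw [← hW.weak_counit_a w y p.2]
  have key : (∑ p ∈ s, p.1 ⊗ₜ[K] piR K A Δ ε (w * p.2)) =
      ∑ q ∈ s, ∑ p ∈ s, ε (w * (p.1 * q.2)) • (q.1 ⊗ₜ[K] piR K A Δ ε p.2) := by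
    calc (∑ p ∈ s, p.1 ⊗ₜ[K] piR K A Δ ε (w * p.2))
        = ∑ p ∈ s, p.1 ⊗ₜ[K] Ψ (Δ p.2) :=
          Finset.sum_congr rfl fun p _ => by rw [hPSI p.2]
      _ = LinearMap.lTensor A Ψ (∑ p ∈ s, p.1 ⊗ₜ[K] Δ p.2) := by simp
      _ = LinearMap.lTensor A Ψ (∑ q ∈ s, ∑ p ∈ s, q.1 ⊗ₜ[K] ((p.1 * q.2) ⊗ₜ[K] p.2)) := by
          rw [CAb hW hs]
      _ = ∑ q ∈ s, ∑ p ∈ s, ε (w * (p.1 * q.2)) • (q.1 ⊗ₜ[K] piR K A Δ ε p.2) := by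
          simp [hΨ, TensorProduct.tmul_smul]
  have lhs' : (∑ p ∈ s, piR K A Δ ε (w * p.1) ⊗ₜ[K] piR K A Δ ε p.2) =
      ∑ p ∈ s, ∑ q ∈ s, ε (w * (p.1 * q.2)) • (q.1 ⊗ₜ[K] piR K A Δ ε p.2) := by
    refine Finset.sum_congr rfl fun p _ => ?_
    rw [piR_apply hs (w * p.1), sum_tmul]
    exact Finset.sum_congr rfl fun q _ => by
      rw [TensorProduct.smul_tmul', mul_assoc]
  rw [lhs', Finset.sum_comm, ← key]

theorem G2 (hA : WeakHopfAlgebra K A Δ ε S) :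
    ∀ x ∈ Set.range ⇑(piL K A Δ ε),
      (x ⊗ₜ[K] (1 : A)) * LinearMap.rTensor A S (Δ 1) =
        LinearMap.rTensor A S (Δ 1) * ((1 : A) ⊗ₜ[K] x) := by
  have hW := hA.toWeakBialgebra
  rintro x ⟨w, rfl⟩
  rw [K1 hA]
  obtain ⟨s, hs⟩ := TensorProduct.exists_finset (Δ 1)
  have hq : LinearMap.rTensor A (piL K A Δ ε) (Δ 1) =
      ∑ p ∈ s, piL K A Δ ε p.1 ⊗ₜ[K] p.2 := by
    conv_lhs => rw [hs]
    simp
  have hC : (∑ p ∈ s, piR K A Δ ε p.1 ⊗ₜ[K] p.2) = ∑ p ∈ s, p.1 ⊗ₜ[K] p.2 := by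
    have h := C1R hW
    conv_lhs at h => rw [hs]
    simp only [map_sum, LinearMap.rTensor_tmul] at h
    rw [h, ← hs]
  have hCL : (∑ p ∈ s, p.1 ⊗ₜ[K] piL K A Δ ε p.2) = ∑ p ∈ s, p.1 ⊗ₜ[K] p.2 := by
    have h := C1L hW
    conv_lhs at h => rw [hs]
    simp only [map_sum, LinearMap.lTensor_tmul] at h
    rw [h, ← hs]
  have h1 := congrArg (LinearMap.rTensor A ((piL K A Δ ε) ∘ₗ LinearMap.mulRight K w)) hC
  simp only [map_sum, LinearMap.rTensor_tmul, LinearMap.coe_comp, Function.comp_apply,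
    LinearMap.mulRight_apply] at h1
  have h2 := congrArg (LinearMap.rTensor A
    (LinearMap.mulLeft K (piL K A Δ ε w) ∘ₗ piL K A Δ ε)) hC
  simp only [map_sum, LinearMap.rTensor_tmul, LinearMap.coe_comp, Function.comp_apply,
    LinearMap.mulLeft_apply] at h2
  have hkey : ∀ u : A, piL K A Δ ε w * piL K A Δ ε (piR K A Δ ε u) =
      piL K A Δ ε (piR K A Δ ε u * w) := by
    intro u
    rw [W7 hA w (piR K A Δ ε u), COM hW, E1' hW]
  have h3 := congrArg (TensorProduct.map (piL K A Δ ε)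
    (LinearMap.mulRight K (piL K A Δ ε w))) hCL
  simp only [map_sum, TensorProduct.map_tmul, LinearMap.mulRight_apply] at h3
  have h4 := congrArg (TensorProduct.map (piL K A Δ ε)
    ((piL K A Δ ε) ∘ₗ LinearMap.mulRight K w)) hCL
  simp only [map_sum, TensorProduct.map_tmul, LinearMap.coe_comp, Function.comp_apply,
    LinearMap.mulRight_apply] at h4
  calc (piL K A Δ ε w ⊗ₜ[K] (1:A)) * LinearMap.rTensor A (piL K A Δ ε) (Δ 1)
      = ∑ p ∈ s, (piL K A Δ ε w * piL K A Δ ε p.1) ⊗ₜ[K] p.2 := by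
        rw [hq, Finset.mul_sum]
        simp [Algebra.TensorProduct.tmul_mul_tmul]
    _ = ∑ p ∈ s, (piL K A Δ ε w * piL K A Δ ε (piR K A Δ ε p.1)) ⊗ₜ[K] p.2 := h2.symm
    _ = ∑ p ∈ s, piL K A Δ ε (piR K A Δ ε p.1 * w) ⊗ₜ[K] p.2 :=
        Finset.sum_congr rfl fun p _ => by rw [hkey]
    _ = ∑ p ∈ s, piL K A Δ ε (p.1 * w) ⊗ₜ[K] p.2 := h1
    _ = ∑ p ∈ s, piL K A Δ ε p.1 ⊗ₜ[K] piL K A Δ ε (p.2 * w) := FIN hA hs w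
    _ = ∑ p ∈ s, piL K A Δ ε p.1 ⊗ₜ[K] piL K A Δ ε (piL K A Δ ε p.2 * w) := h4.symm
    _ = ∑ p ∈ s, piL K A Δ ε p.1 ⊗ₜ[K] (piL K A Δ ε p.2 * piL K A Δ ε w) :=
        Finset.sum_congr rfl fun p _ => by rw [← W7 hA]
    _ = ∑ p ∈ s, piL K A Δ ε p.1 ⊗ₜ[K] (p.2 * piL K A Δ ε w) := h3
    _ = LinearMap.rTensor A (piL K A Δ ε) (Δ 1) * ((1:A) ⊗ₜ[K] piL K A Δ ε w) := by
        rw [hq, Finset.sum_mul]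
        simp [Algebra.TensorProduct.tmul_mul_tmul]

theorem G4 (hA : WeakHopfAlgebra K A Δ ε S) :
    ∀ y ∈ Set.range ⇑(piR K A Δ ε),
      (y ⊗ₜ[K] (1 : A)) * LinearMap.lTensor A S (Δ 1) =
        LinearMap.lTensor A S (Δ 1) * ((1 : A) ⊗ₜ[K] y) := by
  have hW := hA.toWeakBialgebra
  rintro y ⟨w, rfl⟩
  rw [K1R hA]
  obtain ⟨s, hs⟩ := TensorProduct.exists_finset (Δ 1)
  have hq : LinearMap.lTensor A (piR K A Δ ε) (Δ 1) =
      ∑ p ∈ s, p.1 ⊗ₜ[K] piR K A Δ ε p.2 := by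
    conv_lhs => rw [hs]
    simp
  have hC : (∑ p ∈ s, piR K A Δ ε p.1 ⊗ₜ[K] p.2) = ∑ p ∈ s, p.1 ⊗ₜ[K] p.2 := by
    have h := C1R hW
    conv_lhs at h => rw [hs]
    simp only [map_sum, LinearMap.rTensor_tmul] at h
    rw [h, ← hs]
  have hCL : (∑ p ∈ s, p.1 ⊗ₜ[K] piL K A Δ ε p.2) = ∑ p ∈ s, p.1 ⊗ₜ[K] p.2 := by
    have h := C1L hW
    conv_lhs at h => rw [hs]
    simp only [map_sum, LinearMap.lTensor_tmul] at h
    rw [h, ← hs]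
  have h1 := congrArg (TensorProduct.map (LinearMap.mulLeft K (piR K A Δ ε w))
    (piR K A Δ ε)) hC
  simp only [map_sum, TensorProduct.map_tmul, LinearMap.mulLeft_apply] at h1
  have h2 := congrArg (TensorProduct.map ((piR K A Δ ε) ∘ₗ LinearMap.mulLeft K w)
    (piR K A Δ ε)) hC
  simp only [map_sum, TensorProduct.map_tmul, LinearMap.coe_comp, Function.comp_apply,
    LinearMap.mulLeft_apply] at h2
  have hkey : ∀ v : A, piR K A Δ ε (piL K A Δ ε v * piR K A Δ ε w) =
      piR K A Δ ε (w * piL K A Δ ε v) := by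
    intro v
    rw [COM hW, E2' hW]
  have h3 := congrArg (LinearMap.lTensor A
    ((piR K A Δ ε) ∘ₗ LinearMap.mulRight K (piR K A Δ ε w))) hCL
  simp only [map_sum, LinearMap.lTensor_tmul, LinearMap.coe_comp, Function.comp_apply,
    LinearMap.mulRight_apply] at h3
  have h4 := congrArg (LinearMap.lTensor A
    ((piR K A Δ ε) ∘ₗ LinearMap.mulLeft K w)) hCL
  simp only [map_sum, LinearMap.lTensor_tmul, LinearMap.coe_comp, Function.comp_apply,
    LinearMap.mulLeft_apply] at h4
  calc (piR K A Δ ε w ⊗ₜ[K] (1:A)) * LinearMap.lTensor A (piR K A Δ ε) (Δ 1)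
      = ∑ p ∈ s, (piR K A Δ ε w * p.1) ⊗ₜ[K] piR K A Δ ε p.2 := by
        rw [hq, Finset.mul_sum]
        simp [Algebra.TensorProduct.tmul_mul_tmul]
    _ = ∑ p ∈ s, (piR K A Δ ε w * piR K A Δ ε p.1) ⊗ₜ[K] piR K A Δ ε p.2 := h1.symm
    _ = ∑ p ∈ s, piR K A Δ ε (w * piR K A Δ ε p.1) ⊗ₜ[K] piR K A Δ ε p.2 :=
        Finset.sum_congr rfl fun p _ => by rw [W7R hA]
    _ = ∑ p ∈ s, piR K A Δ ε (w * p.1) ⊗ₜ[K] piR K A Δ ε p.2 := h2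
    _ = ∑ p ∈ s, p.1 ⊗ₜ[K] piR K A Δ ε (w * p.2) := FINR hA hs w
    _ = ∑ p ∈ s, p.1 ⊗ₜ[K] piR K A Δ ε (w * piL K A Δ ε p.2) := h4.symm
    _ = ∑ p ∈ s, p.1 ⊗ₜ[K] piR K A Δ ε (piL K A Δ ε p.2 * piR K A Δ ε w) :=
        Finset.sum_congr rfl fun p _ => by rw [hkey]
    _ = ∑ p ∈ s, p.1 ⊗ₜ[K] piR K A Δ ε (p.2 * piR K A Δ ε w) := h3
    _ = ∑ p ∈ s, p.1 ⊗ₜ[K] (piR K A Δ ε p.2 * piR K A Δ ε w) :=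
        Finset.sum_congr rfl fun p _ => by rw [W7R hA]
    _ = LinearMap.lTensor A (piR K A Δ ε) (Δ 1) * ((1:A) ⊗ₜ[K] piR K A Δ ε w) := by
        rw [hq, Finset.sum_mul]
        simp [Algebra.TensorProduct.tmul_mul_tmul]

theorem qL_eq_map (hA : WeakHopfAlgebra K A Δ ε S) :
    LinearMap.rTensor A S (Δ 1) =
      TensorProduct.map (piL K A Δ ε) (piL K A Δ ε) (Δ 1) := by
  rw [K1 hA]
  conv_lhs => rw [← C1L hA.toWeakBialgebra]
  rw [← LinearMap.comp_apply, LinearMap.rTensor_comp_lTensor]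

theorem qR_eq_map (hA : WeakHopfAlgebra K A Δ ε S) :
    LinearMap.lTensor A S (Δ 1) =
      TensorProduct.map (piR K A Δ ε) (piR K A Δ ε) (Δ 1) := by
  rw [K1R hA]
  conv_lhs => rw [← C1R hA.toWeakBialgebra]
  rw [← LinearMap.comp_apply, LinearMap.lTensor_comp_rTensor]

theorem map_mem_map₂ (f g : A →ₗ[K] A) (t : A ⊗[K] A) :
    TensorProduct.map f g t ∈ Submodule.map₂ (TensorProduct.mk K A A)
      (LinearMap.range f) (LinearMap.range g) := by
  induction t using TensorProduct.induction_on with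
  | zero => simp
  | tmul u v =>
    exact Submodule.apply_mem_map₂ (TensorProduct.mk K A A)
      (LinearMap.mem_range_self f u) (LinearMap.mem_range_self g v)
  | add t1 t2 h1 h2 => rw [map_add]; exact Submodule.add_mem _ h1 h2


theorem transfer (B : Subalgebra K A) (f : A →ₗ[K] A)
    (hB : (B : Set A) = Set.range ⇑f) (t : A ⊗[K] A)
    (hq1 : LinearMap.mul' K A (TensorProduct.map f f t) = 1)
    (hq2 : ∀ x ∈ Set.range ⇑f,
      (x ⊗ₜ[K] (1:A)) * TensorProduct.map f f t
        = TensorProduct.map f f t * ((1:A) ⊗ₜ[K] x)) :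
    IsSemisimpleRing B := by
  have hmem : ∀ x : A, f x ∈ B := fun x => by
    rw [← SetLike.mem_coe, hB]; exact Set.mem_range_self x
  set f' : A →ₗ[K] B :=
    { toFun := fun x => ⟨f x, hmem x⟩,
      map_add' := fun a b => by ext; simp,
      map_smul' := fun c a => by ext; simp } with hf'
  set ι : B →ₗ[K] A := B.val.toLinearMap with hι
  have hcomp : ι ∘ₗ f' = f := by ext x; simp [hf', hι]
  set qB : B ⊗[K] B := TensorProduct.map f' f' t with hqB
  have hπ : TensorProduct.map ι ι qB = TensorProduct.map f f t := by
    rw [hqB, ← LinearMap.comp_apply, ← TensorProduct.map_comp, hcomp]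
  have hinj : Function.Injective (TensorProduct.map ι ι) := by
    rw [← LinearMap.rTensor_comp_lTensor]
    exact (Module.Flat.rTensor_preserves_injective_linearMap ι Subtype.val_injective).comp
      (Module.Flat.lTensor_preserves_injective_linearMap ι Subtype.val_injective)
  have hmulcomp : ∀ u : B ⊗[K] B, LinearMap.mul' K A (TensorProduct.map ι ι u)
      = ι (LinearMap.mul' K B u) := by
    intro u
    induction u using TensorProduct.induction_on with
    | zero => simp
    | tmul a b => simp [hι]
    | add u1 u2 h1 h2 => simp [h1, h2]
  have halg : ∀ u : B ⊗[K] B,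
      TensorProduct.map ι ι u = Algebra.TensorProduct.map B.val B.val u := by
    intro u
    induction u using TensorProduct.induction_on with
    | zero => simp
    | tmul a b => simp [hι]
    | add u1 u2 h1 h2 => simp [h1, h2]
  have hq1B : LinearMap.mul' K B qB = 1 := by
    apply Subtype.val_injective
    have h := hmulcomp qB
    rw [hπ, hq1] at h
    simpa [hι] using h.symm
  have hq2B : ∀ b : B, (b ⊗ₜ[K] (1:B)) * qB = qB * ((1:B) ⊗ₜ[K] b) := by
    intro b
    apply hinj
    have hb : (b : A) ∈ Set.range ⇑f := by rw [← hB]; exact b.2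
    calc TensorProduct.map ι ι ((b ⊗ₜ[K] (1:B)) * qB)
        = Algebra.TensorProduct.map B.val B.val ((b ⊗ₜ[K] (1:B)) * qB) := halg _
      _ = Algebra.TensorProduct.map B.val B.val (b ⊗ₜ[K] (1:B))
            * Algebra.TensorProduct.map B.val B.val qB := map_mul _ _ _
      _ = ((b : A) ⊗ₜ[K] (1:A)) * TensorProduct.map f f t := by
          rw [← halg qB, hπ]
          simp
      _ = TensorProduct.map f f t * ((1:A) ⊗ₜ[K] (b : A)) := hq2 _ hb
      _ = Algebra.TensorProduct.map B.val B.val qB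
            * Algebra.TensorProduct.map B.val B.val ((1:B) ⊗ₜ[K] b) := by
          rw [← halg qB, hπ]
          simp
      _ = Algebra.TensorProduct.map B.val B.val (qB * ((1:B) ⊗ₜ[K] b)) := (map_mul _ _ _).symm
      _ = TensorProduct.map ι ι (qB * ((1:B) ⊗ₜ[K] b)) := (halg _).symm
  exact isSemisimpleRing_of_sep qB hq1B hq2B

end WHAP


/-- In a weak Hopf algebra `A` over a field `K`, the element
`q^L = Σ S(1₍₁₎) ⊗ 1₍₂₎` is a separability idempotent for `A^L` and
`q^R = Σ 1₍₁₎ ⊗ S(1₍₂₎)` is one for `A^R`; in particular `A^L` and `A^R` are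
separable (hence semisimple) `K`-algebras. -/
theorem weakHopfAlgebra_piL_piR_separable
    (K : Type*) [Field K] (A : Type*) [Ring A] [Algebra K A] [FiniteDimensional K A]
    (Δ : A →ₗ[K] A ⊗[K] A) (ε : A →ₗ[K] K) (S : A →ₗ[K] A)
    (hA : WeakHopfAlgebra K A Δ ε S) :
    (LinearMap.rTensor A S (Δ 1) ∈
      Submodule.map₂ (TensorProduct.mk K A A)
        (LinearMap.range (piL K A Δ ε)) (LinearMap.range (piL K A Δ ε))) ∧
    LinearMap.mul' K A (LinearMap.rTensor A S (Δ 1)) = 1 ∧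
    (∀ x ∈ Set.range ⇑(piL K A Δ ε),
      (x ⊗ₜ[K] (1 : A)) * LinearMap.rTensor A S (Δ 1) =
        LinearMap.rTensor A S (Δ 1) * ((1 : A) ⊗ₜ[K] x)) ∧
    (LinearMap.lTensor A S (Δ 1) ∈
      Submodule.map₂ (TensorProduct.mk K A A)
        (LinearMap.range (piR K A Δ ε)) (LinearMap.range (piR K A Δ ε))) ∧
    LinearMap.mul' K A (LinearMap.lTensor A S (Δ 1)) = 1 ∧
    (∀ y ∈ Set.range ⇑(piR K A Δ ε),
      (y ⊗ₜ[K] (1 : A)) * LinearMap.lTensor A S (Δ 1) =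
        LinearMap.lTensor A S (Δ 1) * ((1 : A) ⊗ₜ[K] y)) ∧
    (∀ B : Subalgebra K A, (B : Set A) = Set.range ⇑(piL K A Δ ε) → IsSemisimpleRing B) ∧
    (∀ B : Subalgebra K A, (B : Set A) = Set.range ⇑(piR K A Δ ε) → IsSemisimpleRing B) := by
  have hW := hA.toWeakBialgebra
  have b1 : LinearMap.rTensor A S (Δ 1) ∈
      Submodule.map₂ (TensorProduct.mk K A A)
        (LinearMap.range (piL K A Δ ε)) (LinearMap.range (piL K A Δ ε)) := by
    rw [WHAP.qL_eq_map hA]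
    exact WHAP.map_mem_map₂ _ _ _
  have b2 : LinearMap.mul' K A (LinearMap.rTensor A S (Δ 1)) = 1 := by
    rw [hA.antipode_b 1, WHAP.piR_one hW]
  have b3 := WHAP.G2 hA
  have b4 : LinearMap.lTensor A S (Δ 1) ∈
      Submodule.map₂ (TensorProduct.mk K A A)
        (LinearMap.range (piR K A Δ ε)) (LinearMap.range (piR K A Δ ε)) := by
    rw [WHAP.qR_eq_map hA]
    exact WHAP.map_mem_map₂ _ _ _
  have b5 : LinearMap.mul' K A (LinearMap.lTensor A S (Δ 1)) = 1 := by
    rw [hA.antipode_a 1, WHAP.piL_one hW]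
  have b6 := WHAP.G4 hA
  refine ⟨b1, b2, b3, b4, b5, b6, ?_, ?_⟩
  · intro B hB
    refine WHAP.transfer B (piL K A Δ ε) hB (Δ 1) ?_ ?_
    · rw [← WHAP.qL_eq_map hA]; exact b2
    · intro x hx
      rw [← WHAP.qL_eq_map hA]
      exact b3 x hx
  · intro B hB
    refine WHAP.transfer B (piR K A Δ ε) hB (Δ 1) ?_ ?_
    · rw [← WHAP.qR_eq_map hA]; exact b5
    · intro y hy
      rw [← WHAP.qR_eq_map hA]
      exact b6 y hy
end
end

section
/- (Weak Hopf Maschke theorem) For a weak Hopf algebra A over a field K the following are equivalent: (a) A is a semisimple ring; (b) there exists a normalized left integral in A, i.e. a left integral l with Π^L(l) = 1; (c) A is a separable K-algebra, i.e. there exists an element e = Σᵢ aᵢ ⊗ bᵢ ∈ A ⊗ A with Σᵢ aᵢ bᵢ = 1 and (x ⊗ 1)e = e(1 ⊗ x) for all x ∈ A. -/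
open TensorProduct

noncomputable section

variable (K : Type*) [Field K] (A : Type*) [Ring A] [Algebra K A]

set_option maxHeartbeats 1000000
set_option synthInstance.maxHeartbeats 200000
variable {K A}
variable {Δ : A →ₗ[K] A ⊗[K] A} {ε : A →ₗ[K] K} {S : A →ₗ[K] A}

namespace WHAaux

/-- unfold piL with a representation of `Δ 1`. -/
lemma piL_rep {ι : Type*} (s : Finset ι) (a b : ι → A)
    (hE : Δ 1 = ∑ i ∈ s, a i ⊗ₜ[K] b i) (x : A) :
    piL K A Δ ε x = ∑ i ∈ s, ε (a i * x) • b i := by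
  simp only [piL, LinearMap.coe_comp, Function.comp_apply, LinearEquiv.coe_coe,
    LinearMap.flip_apply, TensorProduct.mk_apply, LinearMap.mulLeft_apply, hE]
  rw [Finset.sum_mul]
  simp only [Algebra.TensorProduct.tmul_mul_tmul, mul_one, map_sum, LinearMap.rTensor_tmul,
    TensorProduct.lid_tmul]

lemma piR_rep {ι : Type*} (s : Finset ι) (a b : ι → A)
    (hE : Δ 1 = ∑ i ∈ s, a i ⊗ₜ[K] b i) (x : A) :
    piR K A Δ ε x = ∑ i ∈ s, ε (x * b i) • a i := by
  simp only [piR, LinearMap.coe_comp, Function.comp_apply, LinearEquiv.coe_coe,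
    TensorProduct.mk_apply, LinearMap.mulRight_apply, hE]
  rw [Finset.mul_sum]
  simp only [Algebra.TensorProduct.tmul_mul_tmul, one_mul, map_sum, LinearMap.lTensor_tmul,
    TensorProduct.rid_tmul]

variable (hW : WeakBialgebra K A Δ ε)

lemma counitL_rep (hW : WeakBialgebra K A Δ ε) {ι : Type*} (s : Finset ι) (a b : ι → A)
    (z : A) (hz : Δ z = ∑ i ∈ s, a i ⊗ₜ[K] b i) :
    ∑ i ∈ s, ε (a i) • b i = z := by
  have := hW.counit_left z
  rw [hz] at this
  simpa only [map_sum, LinearMap.rTensor_tmul, TensorProduct.lid_tmul] using this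

lemma counitR_rep (hW : WeakBialgebra K A Δ ε) {ι : Type*} (s : Finset ι) (a b : ι → A)
    (z : A) (hz : Δ z = ∑ i ∈ s, a i ⊗ₜ[K] b i) :
    ∑ i ∈ s, ε (b i) • a i = z := by
  have := hW.counit_right z
  rw [hz] at this
  simpa only [map_sum, LinearMap.lTensor_tmul, TensorProduct.rid_tmul] using this

lemma wca_rep (hW : WeakBialgebra K A Δ ε) {ι : Type*} (s : Finset ι) (a b : ι → A)
    (y : A) (hy : Δ y = ∑ i ∈ s, a i ⊗ₜ[K] b i) (x z : A) :
    ε (x * y * z) = ∑ i ∈ s, ε (x * a i) * ε (b i * z) := by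
  rw [hW.weak_counit_a x y z, hy]
  simp only [map_sum, TensorProduct.map_tmul, LinearMap.coe_comp, Function.comp_apply,
    LinearMap.mulLeft_apply, LinearMap.mulRight_apply, LinearMap.mul'_apply]

lemma wcb_rep (hW : WeakBialgebra K A Δ ε) {ι : Type*} (s : Finset ι) (a b : ι → A)
    (y : A) (hy : Δ y = ∑ i ∈ s, a i ⊗ₜ[K] b i) (x z : A) :
    ε (x * y * z) = ∑ i ∈ s, ε (a i * z) * ε (x * b i) := by
  rw [hW.weak_counit_b x y z, hy]
  simp only [map_sum, TensorProduct.map_tmul, LinearMap.coe_comp, Function.comp_apply,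
    LinearMap.mulLeft_apply, LinearMap.mulRight_apply, LinearMap.mul'_apply]

lemma antipode_a_rep (hA : WeakHopfAlgebra K A Δ ε S) {ι : Type*} (s : Finset ι) (a b : ι → A)
    (y : A) (hy : Δ y = ∑ i ∈ s, a i ⊗ₜ[K] b i) :
    piL K A Δ ε y = ∑ i ∈ s, a i * S (b i) := by
  have := hA.antipode_a y
  rw [hy] at this
  simpa only [map_sum, LinearMap.lTensor_tmul, LinearMap.mul'_apply] using this.symm

lemma antipode_b_rep (hA : WeakHopfAlgebra K A Δ ε S) {ι : Type*} (s : Finset ι) (a b : ι → A)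
    (y : A) (hy : Δ y = ∑ i ∈ s, a i ⊗ₜ[K] b i) :
    piR K A Δ ε y = ∑ i ∈ s, S (a i) * b i := by
  have := hA.antipode_b y
  rw [hy] at this
  simpa only [map_sum, LinearMap.rTensor_tmul, LinearMap.mul'_apply] using this.symm

end WHAaux

namespace WHAaux

section Chunk2

variable {K : Type*} [Field K] {A : Type*} [Ring A] [Algebra K A]
variable {Δ : A →ₗ[K] A ⊗[K] A} {ε : A →ₗ[K] K} {S : A →ₗ[K] A}

/-- `ε (x * Π^L z) = ε (x * z)` -/
lemma epsL_absorb (hW : WeakBialgebra K A Δ ε) (x z : A) :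
    ε (x * piL K A Δ ε z) = ε (x * z) := by
  obtain ⟨s, hE⟩ := TensorProduct.exists_finset (Δ 1)
  rw [piL_rep s Prod.fst Prod.snd hE z, Finset.mul_sum, map_sum]
  simp only [mul_smul_comm, map_smul, smul_eq_mul]
  have := (wcb_rep hW s Prod.fst Prod.snd 1 hE x z).symm
  rw [mul_one] at this
  rw [← this]

/-- `ε (Π^R x * z) = ε (x * z)` -/
lemma epsR_absorb (hW : WeakBialgebra K A Δ ε) (x z : A) :
    ε (piR K A Δ ε x * z) = ε (x * z) := by
  obtain ⟨s, hE⟩ := TensorProduct.exists_finset (Δ 1)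
  rw [piR_rep s Prod.fst Prod.snd hE x, Finset.sum_mul, map_sum]
  simp only [smul_mul_assoc, map_smul, smul_eq_mul]
  have := (wcb_rep hW s Prod.fst Prod.snd 1 hE x z).symm
  rw [mul_one] at this
  rw [← this]
  exact Finset.sum_congr rfl fun i _ => by ring

lemma piL_one (hW : WeakBialgebra K A Δ ε) : piL K A Δ ε 1 = 1 := by
  obtain ⟨s, hE⟩ := TensorProduct.exists_finset (Δ 1)
  rw [piL_rep s Prod.fst Prod.snd hE 1]
  have h := counitL_rep hW s Prod.fst Prod.snd 1 hE
  simpa only [mul_one] using h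

lemma piR_one (hW : WeakBialgebra K A Δ ε) : piR K A Δ ε 1 = 1 := by
  obtain ⟨s, hE⟩ := TensorProduct.exists_finset (Δ 1)
  rw [piR_rep s Prod.fst Prod.snd hE 1]
  have h := counitR_rep hW s Prod.fst Prod.snd 1 hE
  simpa only [one_mul] using h

lemma piL_mul_piL (hW : WeakBialgebra K A Δ ε) (x z : A) :
    piL K A Δ ε (x * piL K A Δ ε z) = piL K A Δ ε (x * z) := by
  obtain ⟨s, hE⟩ := TensorProduct.exists_finset (Δ 1)
  rw [piL_rep s Prod.fst Prod.snd hE (x * piL K A Δ ε z),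
    piL_rep s Prod.fst Prod.snd hE (x * z)]
  refine Finset.sum_congr rfl fun i _ => ?_
  rw [← mul_assoc, epsL_absorb hW, mul_assoc]

lemma piR_mul_piR (hW : WeakBialgebra K A Δ ε) (x z : A) :
    piR K A Δ ε (piR K A Δ ε x * z) = piR K A Δ ε (x * z) := by
  obtain ⟨s, hE⟩ := TensorProduct.exists_finset (Δ 1)
  rw [piR_rep s Prod.fst Prod.snd hE (piR K A Δ ε x * z),
    piR_rep s Prod.fst Prod.snd hE (x * z)]
  refine Finset.sum_congr rfl fun i _ => ?_
  rw [mul_assoc, epsR_absorb hW, mul_assoc]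

end Chunk2

end WHAaux

namespace WHAaux

section Chunk3

variable {K : Type*} [Field K] {A : Type*} [Ring A] [Algebra K A]
variable {Δ : A →ₗ[K] A ⊗[K] A} {ε : A →ₗ[K] K} {S : A →ₗ[K] A}

lemma unitA_rep (hW : WeakBialgebra K A Δ ε) {ι : Type*} (s : Finset ι) (a b : ι → A)
    (hE : Δ 1 = ∑ i ∈ s, a i ⊗ₜ[K] b i) :
    Δ.rTensor A (Δ 1) = ∑ i ∈ s, ∑ j ∈ s, (a i ⊗ₜ[K] (b i * a j)) ⊗ₜ[K] b j := by
  rw [hW.weak_comul_unit_a, hE]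
  rw [TensorProduct.sum_tmul, TensorProduct.tmul_sum, map_sum, Finset.sum_mul_sum]
  refine Finset.sum_congr rfl fun i _ => Finset.sum_congr rfl fun j _ => ?_
  rw [TensorProduct.assoc_symm_tmul, Algebra.TensorProduct.tmul_mul_tmul,
    Algebra.TensorProduct.tmul_mul_tmul, mul_one, one_mul]

lemma unitB_rep (hW : WeakBialgebra K A Δ ε) {ι : Type*} (s : Finset ι) (a b : ι → A)
    (hE : Δ 1 = ∑ i ∈ s, a i ⊗ₜ[K] b i) :
    Δ.rTensor A (Δ 1) = ∑ i ∈ s, ∑ j ∈ s, (a j ⊗ₜ[K] (a i * b j)) ⊗ₜ[K] b i := by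
  rw [hW.weak_comul_unit_b, hE]
  rw [TensorProduct.sum_tmul, TensorProduct.tmul_sum, map_sum, Finset.sum_mul_sum]
  refine Finset.sum_congr rfl fun i _ => Finset.sum_congr rfl fun j _ => ?_
  rw [TensorProduct.assoc_symm_tmul, Algebra.TensorProduct.tmul_mul_tmul,
    Algebra.TensorProduct.tmul_mul_tmul, one_mul, mul_one]

lemma rTensor_rep {ι : Type*} (s : Finset ι) (a b : ι → A)
    (z : A) (hz : Δ z = ∑ i ∈ s, a i ⊗ₜ[K] b i) :
    Δ.rTensor A (Δ z) = ∑ i ∈ s, (Δ (a i)) ⊗ₜ[K] b i := by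
  rw [hz, map_sum]
  simp only [LinearMap.rTensor_tmul]

lemma lTensor_rep {ι : Type*} (s : Finset ι) (a b : ι → A)
    (z : A) (hz : Δ z = ∑ i ∈ s, a i ⊗ₜ[K] b i) :
    Δ.lTensor A (Δ z) = ∑ i ∈ s, a i ⊗ₜ[K] (Δ (b i)) := by
  rw [hz, map_sum]
  simp only [LinearMap.lTensor_tmul]

/-- `(id ⊗ Δ)(Δ 1) = Σ_{i,j} a i ⊗ (b i a j ⊗ b j)` -/
lemma unitA_rep_assoc (hW : WeakBialgebra K A Δ ε) {ι : Type*} (s : Finset ι) (a b : ι → A)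
    (hE : Δ 1 = ∑ i ∈ s, a i ⊗ₜ[K] b i) :
    Δ.lTensor A (Δ 1) = ∑ i ∈ s, ∑ j ∈ s, a i ⊗ₜ[K] ((b i * a j) ⊗ₜ[K] b j) := by
  rw [← hW.coassoc 1, unitA_rep hW s a b hE, map_sum]
  refine Finset.sum_congr rfl fun i _ => ?_
  rw [map_sum]
  refine Finset.sum_congr rfl fun j _ => ?_
  rw [TensorProduct.assoc_tmul]

/-- R2 : `Σ_{i,j} ε (a i * b j) • (a j ⊗ b i) = Δ 1`. -/
lemma R2 (hW : WeakBialgebra K A Δ ε) {ι : Type*} (s : Finset ι) (a b : ι → A)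
    (hE : Δ 1 = ∑ i ∈ s, a i ⊗ₜ[K] b i) :
    ∑ i ∈ s, ∑ j ∈ s, ε (a i * b j) • (a j ⊗ₜ[K] b i) = Δ 1 := by
  set f : A ⊗[K] A →ₗ[K] A := (TensorProduct.rid K A).toLinearMap ∘ₗ ε.lTensor A with hf
  have hfd : ∀ z : A, f (Δ z) = z := fun z => hW.counit_right z
  have hft : ∀ u v : A, f (u ⊗ₜ[K] v) = ε v • u := by
    intro u v
    simp [hf, LinearMap.lTensor_tmul, TensorProduct.rid_tmul]
  have h1 : (f.rTensor A) (Δ.rTensor A (Δ 1)) = Δ 1 := by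
    rw [rTensor_rep s a b 1 hE, map_sum]
    simp only [LinearMap.rTensor_tmul, hfd]
    exact hE.symm
  have h2 : (f.rTensor A) (Δ.rTensor A (Δ 1))
      = ∑ i ∈ s, ∑ j ∈ s, ε (a i * b j) • (a j ⊗ₜ[K] b i) := by
    rw [unitB_rep hW s a b hE, map_sum]
    refine Finset.sum_congr rfl fun i _ => ?_
    rw [map_sum]
    refine Finset.sum_congr rfl fun j _ => ?_
    rw [LinearMap.rTensor_tmul, hft, TensorProduct.smul_tmul']
  rw [← h2, h1]

/-- `Σ_i a i ⊗ piL (b i) = Δ 1`. -/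
lemma CR' (hW : WeakBialgebra K A Δ ε) {ι : Type*} (s : Finset ι) (a b : ι → A)
    (hE : Δ 1 = ∑ i ∈ s, a i ⊗ₜ[K] b i) :
    ∑ i ∈ s, a i ⊗ₜ[K] piL K A Δ ε (b i) = Δ 1 := by
  have : ∀ i, piL K A Δ ε (b i) = ∑ j ∈ s, ε (a j * b i) • b j :=
    fun i => piL_rep s a b hE (b i)
  calc ∑ i ∈ s, a i ⊗ₜ[K] piL K A Δ ε (b i)
      = ∑ i ∈ s, ∑ j ∈ s, ε (a j * b i) • (a i ⊗ₜ[K] b j) := by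
        refine Finset.sum_congr rfl fun i _ => ?_
        rw [this i, TensorProduct.tmul_sum]
        exact Finset.sum_congr rfl fun j _ => by rw [TensorProduct.tmul_smul]
    _ = ∑ j ∈ s, ∑ i ∈ s, ε (a j * b i) • (a i ⊗ₜ[K] b j) := Finset.sum_comm
    _ = Δ 1 := R2 hW s a b hE

end Chunk3

end WHAaux

namespace WHAaux

section Chunk4

variable {K : Type*} [Field K] {A : Type*} [Ring A] [Algebra K A]
variable {Δ : A →ₗ[K] A ⊗[K] A} {ε : A →ₗ[K] K} {S : A →ₗ[K] A}

lemma smul_tmul_mul_left (c : K) (u v x y : A) :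
    ((c • u) ⊗ₜ[K] v) * (x ⊗ₜ[K] y) = c • ((u * x) ⊗ₜ[K] (v * y)) := by
  rw [← TensorProduct.smul_tmul', smul_mul_assoc, Algebra.TensorProduct.tmul_mul_tmul]

lemma tmul_mul_smul_left (c : K) (u v x y : A) :
    (u ⊗ₜ[K] v) * ((c • x) ⊗ₜ[K] y) = c • ((u * x) ⊗ₜ[K] (v * y)) := by
  rw [← TensorProduct.smul_tmul', mul_smul_comm, Algebra.TensorProduct.tmul_mul_tmul]

lemma tmul_smul_mul (c : K) (u v x y : A) :
    (u ⊗ₜ[K] (c • v)) * (x ⊗ₜ[K] y) = c • ((u * x) ⊗ₜ[K] (v * y)) := by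
  rw [Algebra.TensorProduct.tmul_mul_tmul, smul_mul_assoc, TensorProduct.tmul_smul]

lemma tmul_mul_tmul_smul (c : K) (u v x y : A) :
    (u ⊗ₜ[K] v) * (x ⊗ₜ[K] (c • y)) = c • ((u * x) ⊗ₜ[K] (v * y)) := by
  rw [Algebra.TensorProduct.tmul_mul_tmul, mul_smul_comm, TensorProduct.tmul_smul]

/-- `(Π^L w ⊗ 1) Δ1 = Δ1 (Π^L w ⊗ 1)` -/
lemma COM (hW : WeakBialgebra K A Δ ε) (w : A) :
    (piL K A Δ ε w ⊗ₜ[K] (1 : A)) * Δ 1 = Δ 1 * (piL K A Δ ε w ⊗ₜ[K] (1 : A)) := by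
  obtain ⟨s, hE⟩ := TensorProduct.exists_finset (Δ 1)
  set a : A × A → A := Prod.fst
  set b : A × A → A := Prod.snd
  have h := (unitA_rep hW s a b hE).symm.trans (unitB_rep hW s a b hE)
  set f : A ⊗[K] A →ₗ[K] A :=
    (TensorProduct.lid K A).toLinearMap ∘ₗ (ε ∘ₗ LinearMap.mulRight K w).rTensor A with hf
  have hft : ∀ u v : A, f (u ⊗ₜ[K] v) = ε (u * w) • v := by
    intro u v
    simp [hf, LinearMap.rTensor_tmul, TensorProduct.lid_tmul]
  have key := congrArg (f.rTensor A) h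
  simp only [map_sum, LinearMap.rTensor_tmul, hft, TensorProduct.smul_tmul'] at key
  -- key : Σ_{i,j} (ε (a i * w) • (b i * a j)) ⊗ b j = Σ_{i,j} (ε (a j * w) • (a i * b j)) ⊗ b i
  have hL : (piL K A Δ ε w ⊗ₜ[K] (1 : A)) * Δ 1
      = ∑ i ∈ s, ∑ j ∈ s, (ε (a i * w) • (b i * a j)) ⊗ₜ[K] b j := by
    rw [piL_rep s a b hE w, hE, TensorProduct.sum_tmul, Finset.sum_mul_sum]
    refine Finset.sum_congr rfl fun i _ => Finset.sum_congr rfl fun j _ => ?_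
    rw [smul_tmul_mul_left, one_mul, TensorProduct.smul_tmul']
  have hR : Δ 1 * (piL K A Δ ε w ⊗ₜ[K] (1 : A))
      = ∑ i ∈ s, ∑ j ∈ s, (ε (a j * w) • (a i * b j)) ⊗ₜ[K] b i := by
    rw [piL_rep s a b hE w, hE, TensorProduct.sum_tmul, Finset.sum_mul_sum]
    refine Finset.sum_congr rfl fun i _ => Finset.sum_congr rfl fun j _ => ?_
    rw [tmul_mul_smul_left, mul_one, TensorProduct.smul_tmul']
  rw [hL, hR]
  exact key

/-- `(1 ⊗ Π^R w) Δ1 = Δ1 (1 ⊗ Π^R w)` -/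
lemma COMR (hW : WeakBialgebra K A Δ ε) (w : A) :
    ((1 : A) ⊗ₜ[K] piR K A Δ ε w) * Δ 1 = Δ 1 * ((1 : A) ⊗ₜ[K] piR K A Δ ε w) := by
  obtain ⟨s, hE⟩ := TensorProduct.exists_finset (Δ 1)
  set a : A × A → A := Prod.fst
  set b : A × A → A := Prod.snd
  have h := (unitA_rep hW s a b hE).symm.trans (unitB_rep hW s a b hE)
  set f : (A ⊗[K] A) ⊗[K] A →ₗ[K] A ⊗[K] A :=
    (TensorProduct.rid K (A ⊗[K] A)).toLinearMap ∘ₗ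
      LinearMap.lTensor (A ⊗[K] A) (ε ∘ₗ LinearMap.mulLeft K w) with hf
  have hft : ∀ (u : A ⊗[K] A) (v : A), f (u ⊗ₜ[K] v) = ε (w * v) • u := by
    intro u v
    simp [hf, LinearMap.lTensor_tmul, TensorProduct.rid_tmul]
  have key := congrArg f h
  simp only [map_sum, hft] at key
  -- key : Σ_{i,j} ε (w * b j) • (a i ⊗ (b i * a j)) = Σ_{i,j} ε (w * b i) • (a j ⊗ (a i * b j))
  have hL : Δ 1 * ((1 : A) ⊗ₜ[K] piR K A Δ ε w)
      = ∑ i ∈ s, ∑ j ∈ s, ε (w * b j) • (a i ⊗ₜ[K] (b i * a j)) := by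
    rw [piR_rep s a b hE w, hE, Finset.sum_mul]
    refine Finset.sum_congr rfl fun i _ => ?_
    rw [TensorProduct.tmul_sum, Finset.mul_sum]
    refine Finset.sum_congr rfl fun j _ => ?_
    rw [tmul_mul_tmul_smul, mul_one]
  have hR : ((1 : A) ⊗ₜ[K] piR K A Δ ε w) * Δ 1
      = ∑ i ∈ s, ∑ j ∈ s, ε (w * b i) • (a j ⊗ₜ[K] (a i * b j)) := by
    rw [piR_rep s a b hE w, hE, Finset.mul_sum]
    have : ∀ j ∈ s, ((1 : A) ⊗ₜ[K] (∑ i ∈ s, ε (w * b i) • a i)) * (a j ⊗ₜ[K] b j)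
        = ∑ i ∈ s, ε (w * b i) • (a j ⊗ₜ[K] (a i * b j)) := by
      intro j _
      rw [TensorProduct.tmul_sum, Finset.sum_mul]
      refine Finset.sum_congr rfl fun i _ => ?_
      rw [tmul_smul_mul, one_mul]
    rw [Finset.sum_congr rfl this]
    exact Finset.sum_comm
  rw [hR, hL]
  exact key.symm

/-- `Π^L w` and `Π^R v` commute. -/
lemma COM2 (hW : WeakBialgebra K A Δ ε) (v w : A) :
    piR K A Δ ε v * piL K A Δ ε w = piL K A Δ ε w * piR K A Δ ε v := by
  obtain ⟨s, hE⟩ := TensorProduct.exists_finset (Δ 1)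
  set a : A × A → A := Prod.fst
  set b : A × A → A := Prod.snd
  have h := COM hW w
  set f : A ⊗[K] A →ₗ[K] A :=
    (TensorProduct.rid K A).toLinearMap ∘ₗ LinearMap.lTensor A (ε ∘ₗ LinearMap.mulLeft K v)
      with hf
  have hft : ∀ u z : A, f (u ⊗ₜ[K] z) = ε (v * z) • u := by
    intro u z
    simp [hf, LinearMap.lTensor_tmul, TensorProduct.rid_tmul]
  have hL : f ((piL K A Δ ε w ⊗ₜ[K] (1 : A)) * Δ 1) = piL K A Δ ε w * piR K A Δ ε v := by
    rw [hE, Finset.mul_sum, map_sum]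
    have hterm : ∀ i ∈ s, f ((piL K A Δ ε w ⊗ₜ[K] (1 : A)) * (a i ⊗ₜ[K] b i))
        = ε (v * b i) • (piL K A Δ ε w * a i) := by
      intro i _
      rw [Algebra.TensorProduct.tmul_mul_tmul, one_mul, hft]
    rw [Finset.sum_congr rfl hterm, piR_rep s a b hE v, Finset.mul_sum]
    exact Finset.sum_congr rfl fun i _ => (mul_smul_comm _ _ _).symm
  have hR : f (Δ 1 * (piL K A Δ ε w ⊗ₜ[K] (1 : A))) = piR K A Δ ε v * piL K A Δ ε w := by
    rw [hE, Finset.sum_mul, map_sum]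
    have hterm : ∀ i ∈ s, f ((a i ⊗ₜ[K] b i) * (piL K A Δ ε w ⊗ₜ[K] (1 : A)))
        = ε (v * b i) • (a i * piL K A Δ ε w) := by
      intro i _
      rw [Algebra.TensorProduct.tmul_mul_tmul, mul_one, hft]
    rw [Finset.sum_congr rfl hterm, piR_rep s a b hE v, Finset.sum_mul]
    exact Finset.sum_congr rfl fun i _ => (smul_mul_assoc _ _ _).symm
  exact ((hL.symm.trans (congrArg f h)).trans hR).symm

end Chunk4

end WHAaux

namespace WHAaux

section Chunk5

variable {K : Type*} [Field K] {A : Type*} [Ring A] [Algebra K A]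
variable {Δ : A →ₗ[K] A ⊗[K] A} {ε : A →ₗ[K] K} {S : A →ₗ[K] A}

/-- `Δ (Π^L x) = (Π^L x ⊗ 1) Δ1` -/
lemma D_L (hW : WeakBialgebra K A Δ ε) (x : A) :
    Δ (piL K A Δ ε x) = (piL K A Δ ε x ⊗ₜ[K] (1 : A)) * Δ 1 := by
  obtain ⟨s, hE⟩ := TensorProduct.exists_finset (Δ 1)
  set a : A × A → A := Prod.fst
  set b : A × A → A := Prod.snd
  have h := (lTensor_rep s a b 1 hE).symm.trans (unitA_rep_assoc hW s a b hE)
  -- h : Σ_i a i ⊗ Δ (b i) = Σ_{i,j} a i ⊗ ((b i * a j) ⊗ b j)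
  set f : A ⊗[K] (A ⊗[K] A) →ₗ[K] A ⊗[K] A :=
    (TensorProduct.lid K (A ⊗[K] A)).toLinearMap ∘ₗ
      (ε ∘ₗ LinearMap.mulRight K x).rTensor (A ⊗[K] A) with hf
  have hft : ∀ (u : A) (w : A ⊗[K] A), f (u ⊗ₜ[K] w) = ε (u * x) • w := by
    intro u w
    simp [hf, LinearMap.rTensor_tmul, TensorProduct.lid_tmul]
  have key := congrArg f h
  simp only [map_sum, hft] at key
  -- key : Σ_i ε (a i * x) • Δ (b i) = Σ_{i,j} ε (a i * x) • ((b i * a j) ⊗ b j)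
  have hL : Δ (piL K A Δ ε x) = ∑ i ∈ s, ε (a i * x) • Δ (b i) := by
    rw [piL_rep s a b hE x, map_sum]
    exact Finset.sum_congr rfl fun i _ => map_smul Δ _ _
  have hR : (piL K A Δ ε x ⊗ₜ[K] (1 : A)) * Δ 1
      = ∑ i ∈ s, ∑ j ∈ s, ε (a i * x) • ((b i * a j) ⊗ₜ[K] b j) := by
    rw [piL_rep s a b hE x, hE, TensorProduct.sum_tmul, Finset.sum_mul_sum]
    refine Finset.sum_congr rfl fun i _ => Finset.sum_congr rfl fun j _ => ?_
    rw [smul_tmul_mul_left, one_mul]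
  rw [hL, hR]
  exact key

/-- `Δ (Π^R x) = (1 ⊗ Π^R x) Δ1` -/
lemma D_R (hW : WeakBialgebra K A Δ ε) (x : A) :
    Δ (piR K A Δ ε x) = ((1 : A) ⊗ₜ[K] piR K A Δ ε x) * Δ 1 := by
  obtain ⟨s, hE⟩ := TensorProduct.exists_finset (Δ 1)
  set a : A × A → A := Prod.fst
  set b : A × A → A := Prod.snd
  have h := (rTensor_rep s a b 1 hE).symm.trans (unitB_rep hW s a b hE)
  -- h : Σ_i Δ (a i) ⊗ b i = Σ_{i,j} (a j ⊗ (a i * b j)) ⊗ b i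
  set f : (A ⊗[K] A) ⊗[K] A →ₗ[K] A ⊗[K] A :=
    (TensorProduct.rid K (A ⊗[K] A)).toLinearMap ∘ₗ
      LinearMap.lTensor (A ⊗[K] A) (ε ∘ₗ LinearMap.mulLeft K x) with hf
  have hft : ∀ (u : A ⊗[K] A) (v : A), f (u ⊗ₜ[K] v) = ε (x * v) • u := by
    intro u v
    simp [hf, LinearMap.lTensor_tmul, TensorProduct.rid_tmul]
  have key := congrArg f h
  simp only [map_sum, hft] at key
  -- key : Σ_i ε (x * b i) • Δ (a i) = Σ_{i,j} ε (x * b i) • (a j ⊗ (a i * b j))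
  have hL : Δ (piR K A Δ ε x) = ∑ i ∈ s, ε (x * b i) • Δ (a i) := by
    rw [piR_rep s a b hE x, map_sum]
    exact Finset.sum_congr rfl fun i _ => map_smul Δ _ _
  have hR : ((1 : A) ⊗ₜ[K] piR K A Δ ε x) * Δ 1
      = ∑ i ∈ s, ∑ j ∈ s, ε (x * b i) • (a j ⊗ₜ[K] (a i * b j)) := by
    rw [piR_rep s a b hE x, hE, Finset.mul_sum]
    have hterm : ∀ j ∈ s, ((1 : A) ⊗ₜ[K] (∑ i ∈ s, ε (x * b i) • a i)) * (a j ⊗ₜ[K] b j)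
        = ∑ i ∈ s, ε (x * b i) • (a j ⊗ₜ[K] (a i * b j)) := by
      intro j _
      rw [TensorProduct.tmul_sum, Finset.sum_mul]
      refine Finset.sum_congr rfl fun i _ => ?_
      rw [tmul_smul_mul, one_mul]
    rw [Finset.sum_congr rfl hterm]
    exact Finset.sum_comm
  rw [hL, hR]
  exact key

/-- `Δ (x * Π^L w) = Δ x * (Π^L w ⊗ 1)` -/
lemma K1D (hW : WeakBialgebra K A Δ ε) (x w : A) :
    Δ (x * piL K A Δ ε w) = Δ x * (piL K A Δ ε w ⊗ₜ[K] (1 : A)) := by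
  rw [hW.comul_mul, D_L hW, COM hW, ← mul_assoc, ← hW.comul_mul, mul_one]

/-- `Δ (Π^R w * x) = (1 ⊗ Π^R w) * Δ x` -/
lemma K1DR (hW : WeakBialgebra K A Δ ε) (x w : A) :
    Δ (piR K A Δ ε w * x) = ((1 : A) ⊗ₜ[K] piR K A Δ ε w) * Δ x := by
  rw [hW.comul_mul, D_R hW, mul_assoc, ← hW.comul_mul, one_mul]

end Chunk5

end WHAaux

namespace WHAaux

section Chunk6

variable {K : Type*} [Field K] {A : Type*} [Ring A] [Algebra K A]
variable {Δ : A →ₗ[K] A ⊗[K] A} {ε : A →ₗ[K] K} {S : A →ₗ[K] A}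

/-- `S y = Σ S(y₁) Π^L(y₂)` -/
lemma G1_rep (hA : WeakHopfAlgebra K A Δ ε S) {ι : Type*} (s : Finset ι) (u v : ι → A)
    (y : A) (hy : Δ y = ∑ i ∈ s, u i ⊗ₜ[K] v i) :
    S y = ∑ i ∈ s, S (u i) * piL K A Δ ε (v i) := by
  have hc := hA.antipode_c y
  rw [lTensor_rep s u v y hy, map_sum, map_sum] at hc
  simp only [TensorProduct.map_tmul, LinearMap.coe_comp, Function.comp_apply,
    LinearMap.mul'_apply] at hc
  rw [← hc]
  refine Finset.sum_congr rfl fun i _ => ?_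
  rw [hA.antipode_a (v i)]

/-- `S y = Σ Π^R(y₁) S(y₂)` -/
lemma G2_rep (hA : WeakHopfAlgebra K A Δ ε S) {ι : Type*} (s : Finset ι) (u v : ι → A)
    (y : A) (hy : Δ y = ∑ i ∈ s, u i ⊗ₜ[K] v i) :
    S y = ∑ i ∈ s, piR K A Δ ε (u i) * S (v i) := by
  set Φ₁ : A ⊗[K] (A ⊗[K] A) →ₗ[K] A :=
    LinearMap.mul' K A ∘ₗ TensorProduct.map S (LinearMap.mul' K A ∘ₗ LinearMap.lTensor A S)
    with hΦ₁
  set Φ₂ : (A ⊗[K] A) ⊗[K] A →ₗ[K] A :=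
    LinearMap.mul' K A ∘ₗ
      TensorProduct.map (LinearMap.mul' K A ∘ₗ LinearMap.rTensor A S) S with hΦ₂
  have hΦ : Φ₁ ∘ₗ (TensorProduct.assoc K A A A).toLinearMap = Φ₂ := by
    apply TensorProduct.ext_threefold
    intro a b c
    simp only [hΦ₁, hΦ₂, LinearMap.coe_comp, Function.comp_apply, LinearEquiv.coe_coe,
      TensorProduct.assoc_tmul, TensorProduct.map_tmul, LinearMap.lTensor_tmul,
      LinearMap.rTensor_tmul, LinearMap.mul'_apply, mul_assoc]
  have hc := hA.antipode_c y
  have h1 : Φ₁ (Δ.lTensor A (Δ y)) = S y := hc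
  rw [← hA.toWeakBialgebra.coassoc y] at h1
  have h2 : Φ₂ (Δ.rTensor A (Δ y)) = S y := by
    have h3 := LinearMap.congr_fun hΦ (Δ.rTensor A (Δ y))
    simp only [LinearMap.comp_apply, LinearEquiv.coe_coe] at h3
    rw [← h3]
    exact h1
  rw [rTensor_rep s u v y hy, map_sum] at h2
  simp only [hΦ₂, LinearMap.coe_comp, Function.comp_apply, TensorProduct.map_tmul,
    LinearMap.mul'_apply] at h2
  rw [← h2]
  refine Finset.sum_congr rfl fun i _ => ?_
  rw [hA.antipode_b (u i)]

end Chunk6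

end WHAaux

namespace WHAaux

section Chunk7

variable {K : Type*} [Field K] {A : Type*} [Ring A] [Algebra K A]
variable {Δ : A →ₗ[K] A ⊗[K] A} {ε : A →ₗ[K] K} {S : A →ₗ[K] A}

/-- `Σ (x₁ y₁) (S y₂ S x₂) = Π^L (x y)` -/
lemma am1 (hA : WeakHopfAlgebra K A Δ ε S) {ι κ : Type*}
    (sx : Finset ι) (p q : ι → A) (x : A) (hx : Δ x = ∑ i ∈ sx, p i ⊗ₜ[K] q i)
    (sy : Finset κ) (u v : κ → A) (y : A) (hy : Δ y = ∑ j ∈ sy, u j ⊗ₜ[K] v j) :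
    ∑ i ∈ sx, ∑ j ∈ sy, (p i * u j) * (S (v j) * S (q i)) = piL K A Δ ε (x * y) := by
  have hW := hA.toWeakBialgebra
  have step1 : ∀ i ∈ sx, ∑ j ∈ sy, (p i * u j) * (S (v j) * S (q i))
      = p i * piL K A Δ ε y * S (q i) := by
    intro i _
    rw [antipode_a_rep hA sy u v y hy, Finset.mul_sum, Finset.sum_mul]
    refine Finset.sum_congr rfl fun j _ => ?_
    noncomm_ring
  rw [Finset.sum_congr rfl step1]
  have hrep : Δ (x * piL K A Δ ε y) = ∑ i ∈ sx, (p i * piL K A Δ ε y) ⊗ₜ[K] q i := by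
    rw [K1D hW, hx, Finset.sum_mul]
    refine Finset.sum_congr rfl fun i _ => ?_
    rw [Algebra.TensorProduct.tmul_mul_tmul, mul_one]
  have h2 := antipode_a_rep hA sx (fun i => p i * piL K A Δ ε y) q _ hrep
  rw [← piL_mul_piL hW, h2]

/-- `Σ (S y₁ S x₁) (x₂ y₂) = Π^R (x y)` -/
lemma am2 (hA : WeakHopfAlgebra K A Δ ε S) {ι κ : Type*}
    (sx : Finset ι) (p q : ι → A) (x : A) (hx : Δ x = ∑ i ∈ sx, p i ⊗ₜ[K] q i)
    (sy : Finset κ) (u v : κ → A) (y : A) (hy : Δ y = ∑ j ∈ sy, u j ⊗ₜ[K] v j) :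
    ∑ j ∈ sy, ∑ i ∈ sx, (S (u j) * S (p i)) * (q i * v j) = piR K A Δ ε (x * y) := by
  have hW := hA.toWeakBialgebra
  have step1 : ∀ j ∈ sy, ∑ i ∈ sx, (S (u j) * S (p i)) * (q i * v j)
      = S (u j) * (piR K A Δ ε x * v j) := by
    intro j _
    rw [antipode_b_rep hA sx p q x hx, Finset.sum_mul, Finset.mul_sum]
    refine Finset.sum_congr rfl fun i _ => ?_
    noncomm_ring
  rw [Finset.sum_congr rfl step1]
  have hrep : Δ (piR K A Δ ε x * y) = ∑ j ∈ sy, u j ⊗ₜ[K] (piR K A Δ ε x * v j) := by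
    rw [K1DR hW, hy, Finset.mul_sum]
    refine Finset.sum_congr rfl fun j _ => ?_
    rw [Algebra.TensorProduct.tmul_mul_tmul, one_mul]
  have h2 := antipode_b_rep hA sy u (fun j => piR K A Δ ε x * v j) _ hrep
  rw [← piR_mul_piR hW, h2]

end Chunk7

end WHAaux

namespace WHAaux

section Chunk8

variable {K : Type*} [Field K] {A : Type*} [Ring A] [Algebra K A]
variable {Δ : A →ₗ[K] A ⊗[K] A} {ε : A →ₗ[K] K} {S : A →ₗ[K] A}

/-- Regrouping `Σ (Δ ⊗ id) Δ x`-contractions into `Σ (id ⊗ Δ) Δ x`-contractions. -/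
lemma coassoc_swap {V : Type*} [AddCommMonoid V] [Module K V]
    (hW : WeakBialgebra K A Δ ε)
    {ι ι' : Type*} (s : Finset ι) (p q : ι → A) (x : A)
    (hx : Δ x = ∑ i ∈ s, p i ⊗ₜ[K] q i)
    (r : ι → Finset ι') (c d : ι → ι' → A)
    (hp : ∀ i ∈ s, Δ (p i) = ∑ w ∈ r i, c i w ⊗ₜ[K] d i w)
    (k : A ⊗[K] (A ⊗[K] A) →ₗ[K] V) :
    ∑ i ∈ s, ∑ w ∈ r i, k (c i w ⊗ₜ[K] (d i w ⊗ₜ[K] q i))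
      = ∑ i ∈ s, k (p i ⊗ₜ[K] Δ (q i)) := by
  have h2 : Δ.rTensor A (Δ x) = ∑ i ∈ s, ∑ w ∈ r i, (c i w ⊗ₜ[K] d i w) ⊗ₜ[K] q i := by
    rw [rTensor_rep s p q x hx]
    refine Finset.sum_congr rfl fun i hi => ?_
    rw [hp i hi, TensorProduct.sum_tmul]
  have hL : ∑ i ∈ s, ∑ w ∈ r i, k (c i w ⊗ₜ[K] (d i w ⊗ₜ[K] q i))
      = k ((TensorProduct.assoc K A A A) (Δ.rTensor A (Δ x))) := by
    rw [h2, map_sum, map_sum]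
    refine Finset.sum_congr rfl fun i _ => ?_
    rw [map_sum, map_sum]
    refine Finset.sum_congr rfl fun w _ => ?_
    rw [TensorProduct.assoc_tmul]
  have hR : ∑ i ∈ s, k (p i ⊗ₜ[K] Δ (q i)) = k (Δ.lTensor A (Δ x)) := by
    rw [lTensor_rep s p q x hx, map_sum]
  rw [hL, hR, hW.coassoc x]

/-- contraction map for claim 1: `a ⊗ (b ⊗ c) ↦ (E * S a) * ((b * F) * S c)` -/
noncomputable def k1map (S : A →ₗ[K] A) (E F : A) : A ⊗[K] (A ⊗[K] A) →ₗ[K] A :=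
  LinearMap.mul' K A ∘ₗ TensorProduct.map (LinearMap.mulLeft K E ∘ₗ S)
    (LinearMap.mul' K A ∘ₗ TensorProduct.map (LinearMap.mulRight K F) S)

lemma k1map_tmul (E F a b c : A) :
    k1map S E F (a ⊗ₜ[K] (b ⊗ₜ[K] c)) = (E * S a) * ((b * F) * S c) := by
  simp [k1map, LinearMap.mul'_apply]

/-- contraction map for claim 2 (x-swap): `a ⊗ (b ⊗ c) ↦ (E * S a) * ((b * F) * S (c * G))` -/
noncomputable def k2map (S : A →ₗ[K] A) (E F G : A) : A ⊗[K] (A ⊗[K] A) →ₗ[K] A :=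
  LinearMap.mul' K A ∘ₗ TensorProduct.map (LinearMap.mulLeft K E ∘ₗ S)
    (LinearMap.mul' K A ∘ₗ TensorProduct.map (LinearMap.mulRight K F)
      (S ∘ₗ LinearMap.mulRight K G))

lemma k2map_tmul (E F G a b c : A) :
    k2map S E F G (a ⊗ₜ[K] (b ⊗ₜ[K] c)) = (E * S a) * ((b * F) * S (c * G)) := by
  simp [k2map, LinearMap.mul'_apply]

/-- contraction map for claim 2 (y-swap): `a ⊗ (b ⊗ c) ↦ (S a * E) * ((F * b) * S (G * c))` -/
noncomputable def k3map (S : A →ₗ[K] A) (E F G : A) : A ⊗[K] (A ⊗[K] A) →ₗ[K] A :=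
  LinearMap.mul' K A ∘ₗ TensorProduct.map (LinearMap.mulRight K E ∘ₗ S)
    (LinearMap.mul' K A ∘ₗ TensorProduct.map (LinearMap.mulLeft K F)
      (S ∘ₗ LinearMap.mulLeft K G))

lemma k3map_tmul (E F G a b c : A) :
    k3map S E F G (a ⊗ₜ[K] (b ⊗ₜ[K] c)) = (S a * E) * ((F * b) * S (G * c)) := by
  simp [k3map, LinearMap.mul'_apply]

end Chunk8

end WHAaux

namespace WHAaux

section Chunk9

variable {K : Type*} [Field K] {A : Type*} [Ring A] [Algebra K A]
variable {Δ : A →ₗ[K] A ⊗[K] A} {ε : A →ₗ[K] K} {S : A →ₗ[K] A}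

lemma antimult_claim1 (hA : WeakHopfAlgebra K A Δ ε S)
    {ι κ ι' ι'' : Type*}
    (sx : Finset ι) (p q : ι → A) (x : A) (hx : Δ x = ∑ i ∈ sx, p i ⊗ₜ[K] q i)
    (sy : Finset κ) (u v : κ → A) (y : A) (hy : Δ y = ∑ j ∈ sy, u j ⊗ₜ[K] v j)
    (rp : ι → Finset ι') (cp dp : ι → ι' → A)
    (hp : ∀ i ∈ sx, Δ (p i) = ∑ w ∈ rp i, cp i w ⊗ₜ[K] dp i w)
    (rq : ι → Finset ι'') (cq dq : ι → ι'' → A)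
    (hq : ∀ i ∈ sx, Δ (q i) = ∑ w ∈ rq i, cq i w ⊗ₜ[K] dq i w) :
    ∑ i ∈ sx, ∑ j ∈ sy, (S (u j) * S (p i)) * piL K A Δ ε (q i * v j) = S y * S x := by
  have hW := hA.toWeakBialgebra
  have step1 : ∑ i ∈ sx, ∑ j ∈ sy, (S (u j) * S (p i)) * piL K A Δ ε (q i * v j)
      = ∑ j ∈ sy, ∑ i ∈ sx,
          k1map S (S (u j)) (piL K A Δ ε (v j)) (p i ⊗ₜ[K] Δ (q i)) := by
    rw [Finset.sum_comm]
    refine Finset.sum_congr rfl fun j _ => Finset.sum_congr rfl fun i hi => ?_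
    have e1 : piL K A Δ ε (q i * v j)
        = ∑ w ∈ rq i, (cq i w * piL K A Δ ε (v j)) * S (dq i w) := by
      rw [← piL_mul_piL hW]
      refine antipode_a_rep hA (rq i) (fun w => cq i w * piL K A Δ ε (v j)) (dq i) _ ?_
      rw [K1D hW, hq i hi, Finset.sum_mul]
      exact Finset.sum_congr rfl fun w _ => by
        rw [Algebra.TensorProduct.tmul_mul_tmul, mul_one]
    rw [e1, Finset.mul_sum, hq i hi, TensorProduct.tmul_sum, map_sum]
    exact Finset.sum_congr rfl fun w _ => by rw [k1map_tmul]
  have step2 : ∀ j ∈ sy, ∑ i ∈ sx,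
      k1map S (S (u j)) (piL K A Δ ε (v j)) (p i ⊗ₜ[K] Δ (q i))
      = ∑ i ∈ sx, ∑ w ∈ rp i,
          k1map S (S (u j)) (piL K A Δ ε (v j)) (cp i w ⊗ₜ[K] (dp i w ⊗ₜ[K] q i)) :=
    fun j _ => (coassoc_swap hW sx p q x hx rp cp dp hp _).symm
  have step3 : ∀ j ∈ sy, ∀ i ∈ sx, ∑ w ∈ rp i,
      k1map S (S (u j)) (piL K A Δ ε (v j)) (cp i w ⊗ₜ[K] (dp i w ⊗ₜ[K] q i))
      = S (u j) * (piR K A Δ ε (p i) * (piL K A Δ ε (v j) * S (q i))) := by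
    intro j _ i hi
    rw [antipode_b_rep hA (rp i) (cp i) (dp i) (p i) (hp i hi), Finset.sum_mul,
      Finset.mul_sum]
    refine Finset.sum_congr rfl fun w _ => ?_
    rw [k1map_tmul]
    noncomm_ring
  have step4 : ∀ j ∈ sy, ∀ i ∈ sx,
      S (u j) * (piR K A Δ ε (p i) * (piL K A Δ ε (v j) * S (q i)))
      = (S (u j) * piL K A Δ ε (v j)) * (piR K A Δ ε (p i) * S (q i)) := by
    intro j _ i _
    rw [← mul_assoc (piR K A Δ ε (p i)), COM2 hW]
    noncomm_ring
  calc ∑ i ∈ sx, ∑ j ∈ sy, (S (u j) * S (p i)) * piL K A Δ ε (q i * v j)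
      = ∑ j ∈ sy, ∑ i ∈ sx,
          (S (u j) * piL K A Δ ε (v j)) * (piR K A Δ ε (p i) * S (q i)) := by
        rw [step1]
        refine Finset.sum_congr rfl fun j hj => ?_
        rw [step2 j hj]
        refine Finset.sum_congr rfl fun i hi => ?_
        rw [step3 j hj i hi, step4 j hj i hi]
    _ = (∑ j ∈ sy, S (u j) * piL K A Δ ε (v j)) * (∑ i ∈ sx, piR K A Δ ε (p i) * S (q i)) :=
        (Finset.sum_mul_sum _ _ _ _).symm
    _ = S y * S x := by
        rw [← G1_rep hA sy u v y hy, ← G2_rep hA sx p q x hx]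

end Chunk9

end WHAaux

namespace WHAaux

section Chunk10

variable {K : Type*} [Field K] {A : Type*} [Ring A] [Algebra K A]
variable {Δ : A →ₗ[K] A ⊗[K] A} {ε : A →ₗ[K] K} {S : A →ₗ[K] A}

lemma antimult_claim2 (hA : WeakHopfAlgebra K A Δ ε S)
    {ι κ ι' ι'' κ' κ'' : Type*}
    (sx : Finset ι) (p q : ι → A) (x : A) (hx : Δ x = ∑ i ∈ sx, p i ⊗ₜ[K] q i)
    (sy : Finset κ) (u v : κ → A) (y : A) (hy : Δ y = ∑ j ∈ sy, u j ⊗ₜ[K] v j)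
    (rp : ι → Finset ι') (cp dp : ι → ι' → A)
    (hp : ∀ i ∈ sx, Δ (p i) = ∑ w ∈ rp i, cp i w ⊗ₜ[K] dp i w)
    (rq : ι → Finset ι'') (cq dq : ι → ι'' → A)
    (hq : ∀ i ∈ sx, Δ (q i) = ∑ w ∈ rq i, cq i w ⊗ₜ[K] dq i w)
    (ru : κ → Finset κ') (cu du : κ → κ' → A)
    (hu : ∀ j ∈ sy, Δ (u j) = ∑ z ∈ ru j, cu j z ⊗ₜ[K] du j z)
    (rv : κ → Finset κ'') (cv dv : κ → κ'' → A)
    (hv : ∀ j ∈ sy, Δ (v j) = ∑ z ∈ rv j, cv j z ⊗ₜ[K] dv j z) :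
    ∑ i ∈ sx, ∑ j ∈ sy, (S (u j) * S (p i)) * piL K A Δ ε (q i * v j) = S (x * y) := by
  have hW := hA.toWeakBialgebra
  -- Step A : rewrite `piL (q i * v j)` via the product representation and `k2map`.
  have stepA : ∑ i ∈ sx, ∑ j ∈ sy, (S (u j) * S (p i)) * piL K A Δ ε (q i * v j)
      = ∑ j ∈ sy, ∑ z ∈ rv j, ∑ i ∈ sx,
          k2map S (S (u j)) (cv j z) (dv j z) (p i ⊗ₜ[K] Δ (q i)) := by
    have e2 : ∀ i ∈ sx, ∀ j ∈ sy, piL K A Δ ε (q i * v j)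
        = ∑ w ∈ rq i, ∑ z ∈ rv j, (cq i w * cv j z) * S (dq i w * dv j z) := by
      intro i hi j hj
      have hrep : Δ (q i * v j) = ∑ wz ∈ (rq i) ×ˢ (rv j),
          (cq i wz.1 * cv j wz.2) ⊗ₜ[K] (dq i wz.1 * dv j wz.2) := by
        rw [hW.comul_mul, hq i hi, hv j hj, Finset.sum_mul_sum, Finset.sum_product]
        exact Finset.sum_congr rfl fun w _ => Finset.sum_congr rfl fun z _ => by
          rw [Algebra.TensorProduct.tmul_mul_tmul]
      have := antipode_a_rep hA ((rq i) ×ˢ (rv j))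
        (fun wz => cq i wz.1 * cv j wz.2) (fun wz => dq i wz.1 * dv j wz.2) _ hrep
      rw [this, Finset.sum_product]
    have inner : ∀ i ∈ sx, ∀ j ∈ sy,
        (S (u j) * S (p i)) * piL K A Δ ε (q i * v j)
        = ∑ z ∈ rv j, k2map S (S (u j)) (cv j z) (dv j z) (p i ⊗ₜ[K] Δ (q i)) := by
      intro i hi j hj
      rw [e2 i hi j hj]
      have expand : ∀ z ∈ rv j, k2map S (S (u j)) (cv j z) (dv j z) (p i ⊗ₜ[K] Δ (q i))
          = ∑ w ∈ rq i, (S (u j) * S (p i)) * ((cq i w * cv j z) * S (dq i w * dv j z)) := by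
        intro z _
        rw [hq i hi, TensorProduct.tmul_sum, map_sum]
        exact Finset.sum_congr rfl fun w _ => by rw [k2map_tmul]
      rw [Finset.sum_congr rfl expand, Finset.mul_sum]
      rw [Finset.sum_comm]
      exact Finset.sum_congr rfl fun w _ => by rw [Finset.mul_sum]
    calc ∑ i ∈ sx, ∑ j ∈ sy, (S (u j) * S (p i)) * piL K A Δ ε (q i * v j)
        = ∑ i ∈ sx, ∑ j ∈ sy, ∑ z ∈ rv j,
            k2map S (S (u j)) (cv j z) (dv j z) (p i ⊗ₜ[K] Δ (q i)) := by
          exact Finset.sum_congr rfl fun i hi => Finset.sum_congr rfl fun j hj =>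
            inner i hi j hj
      _ = ∑ j ∈ sy, ∑ z ∈ rv j, ∑ i ∈ sx,
            k2map S (S (u j)) (cv j z) (dv j z) (p i ⊗ₜ[K] Δ (q i)) := by
          rw [Finset.sum_comm]
          exact Finset.sum_congr rfl fun j _ => Finset.sum_comm
  -- Step B : swap the x-legs using coassociativity.
  have stepB : ∑ j ∈ sy, ∑ z ∈ rv j, ∑ i ∈ sx,
      k2map S (S (u j)) (cv j z) (dv j z) (p i ⊗ₜ[K] Δ (q i))
      = ∑ j ∈ sy, ∑ z ∈ rv j, ∑ i ∈ sx, ∑ w ∈ rp i,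
          (S (u j) * S (cp i w)) * ((dp i w * cv j z) * S (q i * dv j z)) := by
    refine Finset.sum_congr rfl fun j _ => Finset.sum_congr rfl fun z _ => ?_
    rw [← coassoc_swap hW sx p q x hx rp cp dp hp
      (k2map S (S (u j)) (cv j z) (dv j z))]
    exact Finset.sum_congr rfl fun i _ => Finset.sum_congr rfl fun w _ => by
      rw [k2map_tmul]
  -- Step C : reorder the four sums.
  have stepC : ∑ j ∈ sy, ∑ z ∈ rv j, ∑ i ∈ sx, ∑ w ∈ rp i,
      (S (u j) * S (cp i w)) * ((dp i w * cv j z) * S (q i * dv j z))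
      = ∑ i ∈ sx, ∑ w ∈ rp i, ∑ j ∈ sy, ∑ z ∈ rv j,
          (S (u j) * S (cp i w)) * ((dp i w * cv j z) * S (q i * dv j z)) := by
    calc ∑ j ∈ sy, ∑ z ∈ rv j, ∑ i ∈ sx, ∑ w ∈ rp i,
        (S (u j) * S (cp i w)) * ((dp i w * cv j z) * S (q i * dv j z))
        = ∑ j ∈ sy, ∑ i ∈ sx, ∑ z ∈ rv j, ∑ w ∈ rp i,
            (S (u j) * S (cp i w)) * ((dp i w * cv j z) * S (q i * dv j z)) :=
          Finset.sum_congr rfl fun j _ => Finset.sum_comm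
      _ = ∑ i ∈ sx, ∑ j ∈ sy, ∑ z ∈ rv j, ∑ w ∈ rp i,
            (S (u j) * S (cp i w)) * ((dp i w * cv j z) * S (q i * dv j z)) :=
          Finset.sum_comm
      _ = ∑ i ∈ sx, ∑ j ∈ sy, ∑ w ∈ rp i, ∑ z ∈ rv j,
            (S (u j) * S (cp i w)) * ((dp i w * cv j z) * S (q i * dv j z)) :=
          Finset.sum_congr rfl fun i _ => Finset.sum_congr rfl fun j _ => Finset.sum_comm
      _ = ∑ i ∈ sx, ∑ w ∈ rp i, ∑ j ∈ sy, ∑ z ∈ rv j,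
            (S (u j) * S (cp i w)) * ((dp i w * cv j z) * S (q i * dv j z)) :=
          Finset.sum_congr rfl fun i _ => Finset.sum_comm
  -- Step D : swap the y-legs using coassociativity.
  have stepD : ∑ i ∈ sx, ∑ w ∈ rp i, ∑ j ∈ sy, ∑ z ∈ rv j,
      (S (u j) * S (cp i w)) * ((dp i w * cv j z) * S (q i * dv j z))
      = ∑ i ∈ sx, ∑ w ∈ rp i, ∑ j ∈ sy, ∑ z ∈ ru j,
          (S (cu j z) * S (cp i w)) * ((dp i w * du j z) * S (q i * v j)) := by
    refine Finset.sum_congr rfl fun i _ => Finset.sum_congr rfl fun w _ => ?_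
    have lhs_eq : ∑ j ∈ sy, ∑ z ∈ rv j,
        (S (u j) * S (cp i w)) * ((dp i w * cv j z) * S (q i * dv j z))
        = ∑ j ∈ sy, k3map S (S (cp i w)) (dp i w) (q i) (u j ⊗ₜ[K] Δ (v j)) := by
      refine Finset.sum_congr rfl fun j hj => ?_
      rw [hv j hj, TensorProduct.tmul_sum, map_sum]
      exact Finset.sum_congr rfl fun z _ => by rw [k3map_tmul]
    rw [lhs_eq, ← coassoc_swap hW sy u v y hy ru cu du hu
      (k3map S (S (cp i w)) (dp i w) (q i))]
    exact Finset.sum_congr rfl fun j _ => Finset.sum_congr rfl fun z _ => by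
      rw [k3map_tmul]
  -- Step E : contract the heads with `am2` after reordering.
  have stepE : ∑ i ∈ sx, ∑ w ∈ rp i, ∑ j ∈ sy, ∑ z ∈ ru j,
      (S (cu j z) * S (cp i w)) * ((dp i w * du j z) * S (q i * v j))
      = ∑ i ∈ sx, ∑ j ∈ sy, piR K A Δ ε (p i * u j) * S (q i * v j) := by
    have reorder : ∑ i ∈ sx, ∑ w ∈ rp i, ∑ j ∈ sy, ∑ z ∈ ru j,
        (S (cu j z) * S (cp i w)) * ((dp i w * du j z) * S (q i * v j))
        = ∑ i ∈ sx, ∑ j ∈ sy, ∑ z ∈ ru j, ∑ w ∈ rp i,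
            (S (cu j z) * S (cp i w)) * ((dp i w * du j z) * S (q i * v j)) := by
      refine Finset.sum_congr rfl fun i _ => ?_
      rw [Finset.sum_comm]
      refine Finset.sum_congr rfl fun j _ => Finset.sum_comm
    rw [reorder]
    refine Finset.sum_congr rfl fun i hi => Finset.sum_congr rfl fun j hj => ?_
    have ham2 := am2 hA (rp i) (cp i) (dp i) (p i) (hp i hi)
      (ru j) (cu j) (du j) (u j) (hu j hj)
    rw [← ham2, Finset.sum_mul]
    refine Finset.sum_congr rfl fun z _ => ?_
    rw [Finset.sum_mul]
    exact Finset.sum_congr rfl fun w _ => by noncomm_ring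
  -- Step F : conclude with `G2_rep` at `x * y`.
  have hxy : Δ (x * y) = ∑ ij ∈ sx ×ˢ sy, (p ij.1 * u ij.2) ⊗ₜ[K] (q ij.1 * v ij.2) := by
    rw [hW.comul_mul, hx, hy, Finset.sum_mul_sum, Finset.sum_product]
    exact Finset.sum_congr rfl fun i _ => Finset.sum_congr rfl fun j _ => by
      rw [Algebra.TensorProduct.tmul_mul_tmul]
  have stepF := G2_rep hA (sx ×ˢ sy) (fun ij => p ij.1 * u ij.2)
    (fun ij => q ij.1 * v ij.2) (x * y) hxy
  rw [stepA, stepB, stepC, stepD, stepE, stepF, Finset.sum_product]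

/-- The antipode of a weak Hopf algebra is antimultiplicative. -/
lemma S_antimult (hA : WeakHopfAlgebra K A Δ ε S) (x y : A) :
    S (x * y) = S y * S x := by
  obtain ⟨sx, hx⟩ := TensorProduct.exists_finset (Δ x)
  obtain ⟨sy, hy⟩ := TensorProduct.exists_finset (Δ y)
  choose rc hc using fun t : A × A => TensorProduct.exists_finset (Δ t.1)
  choose rd hd using fun t : A × A => TensorProduct.exists_finset (Δ t.2)
  have h1 := antimult_claim1 hA sx Prod.fst Prod.snd x hx sy Prod.fst Prod.snd y hy
    rc (fun i w => w.1) (fun i w => w.2) (fun i _ => hc i)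
    rd (fun i w => w.1) (fun i w => w.2) (fun i _ => hd i)
  have h2 := antimult_claim2 hA sx Prod.fst Prod.snd x hx sy Prod.fst Prod.snd y hy
    rc (fun i w => w.1) (fun i w => w.2) (fun i _ => hc i)
    rd (fun i w => w.1) (fun i w => w.2) (fun i _ => hd i)
    rc (fun j z => z.1) (fun j z => z.2) (fun j _ => hc j)
    rd (fun j z => z.1) (fun j z => z.2) (fun j _ => hd j)
  rw [← h2, h1]

end Chunk10

end WHAaux

namespace WHAaux

section Chunk11

variable {K : Type*} [Field K] {A : Type*} [Ring A] [Algebra K A]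
variable {Δ : A →ₗ[K] A ⊗[K] A} {ε : A →ₗ[K] K} {S : A →ₗ[K] A}

lemma assoc_mul (u v : (A ⊗[K] A) ⊗[K] A) :
    (TensorProduct.assoc K A A A) (u * v)
      = (TensorProduct.assoc K A A A) u * (TensorProduct.assoc K A A A) v :=
  map_mul (Algebra.TensorProduct.assoc K K K A A A) u v

lemma rTensor_mul (hW : WeakBialgebra K A Δ ε) (u v : A ⊗[K] A) :
    Δ.rTensor A (u * v) = Δ.rTensor A u * Δ.rTensor A v := by
  induction u using TensorProduct.induction_on with
  | zero => simp [zero_mul]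
  | add u₁ u₂ h₁ h₂ => rw [add_mul, map_add, map_add, add_mul, h₁, h₂]
  | tmul a b =>
    induction v using TensorProduct.induction_on with
    | zero => simp [mul_zero]
    | add v₁ v₂ h₁ h₂ => rw [mul_add, map_add, map_add, mul_add, h₁, h₂]
    | tmul c d =>
      rw [Algebra.TensorProduct.tmul_mul_tmul, LinearMap.rTensor_tmul,
        LinearMap.rTensor_tmul, LinearMap.rTensor_tmul,
        Algebra.TensorProduct.tmul_mul_tmul, hW.comul_mul]

lemma lTensor_mul (hW : WeakBialgebra K A Δ ε) (u v : A ⊗[K] A) :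
    Δ.lTensor A (u * v) = Δ.lTensor A u * Δ.lTensor A v := by
  induction u using TensorProduct.induction_on with
  | zero => simp [zero_mul]
  | add u₁ u₂ h₁ h₂ => rw [add_mul, map_add, map_add, add_mul, h₁, h₂]
  | tmul a b =>
    induction v using TensorProduct.induction_on with
    | zero => simp [mul_zero]
    | add v₁ v₂ h₁ h₂ => rw [mul_add, map_add, map_add, mul_add, h₁, h₂]
    | tmul c d =>
      rw [Algebra.TensorProduct.tmul_mul_tmul, LinearMap.lTensor_tmul,
        LinearMap.lTensor_tmul, LinearMap.lTensor_tmul,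
        Algebra.TensorProduct.tmul_mul_tmul, hW.comul_mul]

/-- `Σ x₁ ε(x₂ w) = Σ (x e₁) ε(e₂ w)` : undressing on the right leg. -/
lemma U1' (hW : WeakBialgebra K A Δ ε) {ι κ : Type*}
    (s : Finset ι) (a b : ι → A) (hE : Δ 1 = ∑ i ∈ s, a i ⊗ₜ[K] b i)
    (sx : Finset κ) (p q : κ → A) (x : A) (hx : Δ x = ∑ k ∈ sx, p k ⊗ₜ[K] q k)
    (w : A) :
    ∑ k ∈ sx, ε (q k * w) • p k = ∑ j ∈ s, ε (b j * w) • (x * a j) := by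
  have key : Δ.rTensor A ((x ⊗ₜ[K] (1 : A)) * Δ 1)
      = (Δ x ⊗ₜ[K] (1 : A)) * ((TensorProduct.assoc K A A A).symm ((1 : A) ⊗ₜ[K] Δ 1)) := by
    rw [rTensor_mul hW, hW.weak_comul_unit_a, ← mul_assoc]
    have : Δ.rTensor A (x ⊗ₜ[K] (1 : A)) * (Δ 1 ⊗ₜ[K] (1 : A)) = Δ x ⊗ₜ[K] (1 : A) := by
      rw [LinearMap.rTensor_tmul, Algebra.TensorProduct.tmul_mul_tmul, one_mul,
        ← hW.comul_mul, mul_one]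
    rw [this]
  set f : A ⊗[K] A →ₗ[K] A := (TensorProduct.rid K A).toLinearMap ∘ₗ ε.lTensor A with hf
  have hft : ∀ u v : A, f (u ⊗ₜ[K] v) = ε v • u := by
    intro u v
    simp [hf, LinearMap.lTensor_tmul, TensorProduct.rid_tmul]
  have hfd : ∀ z : A, f (Δ z) = z := fun z => hW.counit_right z
  have w1 : (f.rTensor A) (Δ.rTensor A ((x ⊗ₜ[K] (1 : A)) * Δ 1))
      = (x ⊗ₜ[K] (1 : A)) * Δ 1 := by
    generalize (x ⊗ₜ[K] (1 : A)) * Δ 1 = t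
    induction t using TensorProduct.induction_on with
    | zero => simp
    | add t₁ t₂ h₁ h₂ => rw [map_add, map_add, h₁, h₂]
    | tmul c d => rw [LinearMap.rTensor_tmul, LinearMap.rTensor_tmul, hfd]
  have w2 : (f.rTensor A) ((Δ x ⊗ₜ[K] (1 : A)) *
        ((TensorProduct.assoc K A A A).symm ((1 : A) ⊗ₜ[K] Δ 1)))
      = ∑ k ∈ sx, ∑ j ∈ s, ε (q k * a j) • (p k ⊗ₜ[K] b j) := by
    rw [hx, hE, TensorProduct.sum_tmul, TensorProduct.tmul_sum, map_sum, Finset.sum_mul_sum]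
    rw [map_sum]
    refine Finset.sum_congr rfl fun k _ => ?_
    rw [map_sum]
    refine Finset.sum_congr rfl fun j _ => ?_
    rw [TensorProduct.assoc_symm_tmul, Algebra.TensorProduct.tmul_mul_tmul,
      Algebra.TensorProduct.tmul_mul_tmul, mul_one, one_mul, LinearMap.rTensor_tmul, hft,
      TensorProduct.smul_tmul']
  have w3 : (x ⊗ₜ[K] (1 : A)) * Δ 1 = ∑ j ∈ s, (x * a j) ⊗ₜ[K] b j := by
    rw [hE, Finset.mul_sum]
    exact Finset.sum_congr rfl fun j _ => by
      rw [Algebra.TensorProduct.tmul_mul_tmul, one_mul]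
  have E1 : ∑ k ∈ sx, ∑ j ∈ s, ε (q k * a j) • (p k ⊗ₜ[K] b j)
      = ∑ j ∈ s, (x * a j) ⊗ₜ[K] b j := by
    rw [← w2, ← key, w1, w3]
  set N : A ⊗[K] A →ₗ[K] A := (TensorProduct.rid K A).toLinearMap ∘ₗ
    LinearMap.lTensor A (ε ∘ₗ LinearMap.mulRight K w) with hN
  have hNt : ∀ u v : A, N (u ⊗ₜ[K] v) = ε (v * w) • u := by
    intro u v
    simp [hN, LinearMap.lTensor_tmul, TensorProduct.rid_tmul]
  have := congrArg N E1
  rw [map_sum] at this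
  simp only [map_sum, map_smul, hNt] at this
  rw [← this]
  refine Finset.sum_congr rfl fun k _ => ?_
  have hw := wca_rep hW s a b 1 hE (q k) w
  rw [mul_one] at hw
  simp only [smul_smul]
  rw [← Finset.sum_smul, ← hw]

end Chunk11

end WHAaux

namespace WHAaux

section Chunk12

variable {K : Type*} [Field K] {A : Type*} [Ring A] [Algebra K A]
variable {Δ : A →ₗ[K] A ⊗[K] A} {ε : A →ₗ[K] K} {S : A →ₗ[K] A}

/-- `Σ ε(w x₁) x₂ = Σ ε(w e₁) (e₂ x)` : undressing on the left leg. -/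
lemma U2' (hW : WeakBialgebra K A Δ ε) {ι κ : Type*}
    (s : Finset ι) (a b : ι → A) (hE : Δ 1 = ∑ i ∈ s, a i ⊗ₜ[K] b i)
    (sx : Finset κ) (p q : κ → A) (x : A) (hx : Δ x = ∑ k ∈ sx, p k ⊗ₜ[K] q k)
    (w : A) :
    ∑ k ∈ sx, ε (w * p k) • q k = ∑ j ∈ s, ε (w * a j) • (b j * x) := by
  have key : Δ.lTensor A (Δ 1 * ((1 : A) ⊗ₜ[K] x))
      = (TensorProduct.assoc K A A A) (Δ 1 ⊗ₜ[K] (1 : A)) * ((1 : A) ⊗ₜ[K] Δ x) := by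
    rw [lTensor_mul hW]
    have h1 : Δ.lTensor A ((1 : A) ⊗ₜ[K] x) = (1 : A) ⊗ₜ[K] Δ x := by
      rw [LinearMap.lTensor_tmul]
    have h2 : Δ.lTensor A (Δ 1)
        = (TensorProduct.assoc K A A A) (Δ 1 ⊗ₜ[K] (1 : A)) * ((1 : A) ⊗ₜ[K] Δ 1) := by
      rw [← hW.coassoc 1, hW.weak_comul_unit_a, assoc_mul, LinearEquiv.apply_symm_apply]
    rw [h1, h2, mul_assoc, Algebra.TensorProduct.tmul_mul_tmul, one_mul, ← hW.comul_mul,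
      one_mul]
  set f : A ⊗[K] A →ₗ[K] A := (TensorProduct.lid K A).toLinearMap ∘ₗ ε.rTensor A with hf
  have hft : ∀ u v : A, f (u ⊗ₜ[K] v) = ε u • v := by
    intro u v
    simp [hf, LinearMap.rTensor_tmul, TensorProduct.lid_tmul]
  have hfd : ∀ z : A, f (Δ z) = z := fun z => hW.counit_left z
  have w1 : (f.lTensor A) (Δ.lTensor A (Δ 1 * ((1 : A) ⊗ₜ[K] x)))
      = Δ 1 * ((1 : A) ⊗ₜ[K] x) := by
    generalize Δ 1 * ((1 : A) ⊗ₜ[K] x) = t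
    induction t using TensorProduct.induction_on with
    | zero => simp
    | add t₁ t₂ h₁ h₂ => rw [map_add, map_add, h₁, h₂]
    | tmul c d => rw [LinearMap.lTensor_tmul, LinearMap.lTensor_tmul, hfd]
  have hprod : (TensorProduct.assoc K A A A) (Δ 1 ⊗ₜ[K] (1 : A)) * ((1 : A) ⊗ₜ[K] Δ x)
      = ∑ j ∈ s, ∑ k ∈ sx, a j ⊗ₜ[K] ((b j * p k) ⊗ₜ[K] q k) := by
    rw [hE, hx, TensorProduct.sum_tmul, map_sum, TensorProduct.tmul_sum, Finset.sum_mul_sum]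
    refine Finset.sum_congr rfl fun j _ => Finset.sum_congr rfl fun k _ => ?_
    rw [TensorProduct.assoc_tmul, Algebra.TensorProduct.tmul_mul_tmul,
      Algebra.TensorProduct.tmul_mul_tmul, mul_one, one_mul]
  have w2 : (f.lTensor A) ((TensorProduct.assoc K A A A) (Δ 1 ⊗ₜ[K] (1 : A))
        * ((1 : A) ⊗ₜ[K] Δ x))
      = ∑ j ∈ s, ∑ k ∈ sx, ε (b j * p k) • (a j ⊗ₜ[K] q k) := by
    rw [hprod, map_sum]
    refine Finset.sum_congr rfl fun j _ => ?_
    rw [map_sum]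
    refine Finset.sum_congr rfl fun k _ => ?_
    rw [LinearMap.lTensor_tmul, hft, TensorProduct.tmul_smul]
  have w3 : Δ 1 * ((1 : A) ⊗ₜ[K] x) = ∑ j ∈ s, a j ⊗ₜ[K] (b j * x) := by
    rw [hE, Finset.sum_mul]
    exact Finset.sum_congr rfl fun j _ => by
      rw [Algebra.TensorProduct.tmul_mul_tmul, mul_one]
  have E2 : ∑ j ∈ s, ∑ k ∈ sx, ε (b j * p k) • (a j ⊗ₜ[K] q k)
      = ∑ j ∈ s, a j ⊗ₜ[K] (b j * x) := by
    rw [← w2, ← key, w1, w3]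
  set N : A ⊗[K] A →ₗ[K] A := (TensorProduct.lid K A).toLinearMap ∘ₗ
    (ε ∘ₗ LinearMap.mulLeft K w).rTensor A with hN
  have hNt : ∀ u v : A, N (u ⊗ₜ[K] v) = ε (w * u) • v := by
    intro u v
    simp [hN, LinearMap.rTensor_tmul, TensorProduct.lid_tmul]
  have hthis := congrArg N E2
  rw [map_sum] at hthis
  simp only [map_sum, map_smul, hNt] at hthis
  have swap : ∑ j ∈ s, ∑ k ∈ sx, ε (b j * p k) • ε (w * a j) • q k
      = ∑ k ∈ sx, ∑ j ∈ s, ε (b j * p k) • ε (w * a j) • q k := Finset.sum_comm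
  rw [swap] at hthis
  rw [← hthis]
  refine Finset.sum_congr rfl fun k _ => ?_
  have hw := wca_rep hW s a b 1 hE w (p k)
  rw [mul_one] at hw
  simp only [smul_smul]
  rw [← Finset.sum_smul]
  congr 1
  rw [hw]
  exact Finset.sum_congr rfl fun j _ => mul_comm _ _

/-- `S ∘ Π^L = Π^R ∘ Π^L`. -/
lemma SPL2 (hA : WeakHopfAlgebra K A Δ ε S) (v : A) :
    S (piL K A Δ ε v) = piR K A Δ ε (piL K A Δ ε v) := by
  have hW := hA.toWeakBialgebra
  obtain ⟨s, hE⟩ := TensorProduct.exists_finset (Δ 1)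
  set a : A × A → A := Prod.fst
  set b : A × A → A := Prod.snd
  set z := piL K A Δ ε v with hzdef
  have hz : Δ z = ∑ i ∈ s, (z * a i) ⊗ₜ[K] b i := by
    rw [hzdef, D_L hW, hE, Finset.mul_sum]
    exact Finset.sum_congr rfl fun i _ => by
      rw [Algebra.TensorProduct.tmul_mul_tmul, one_mul]
  have h1 : S z = ∑ i ∈ s, S (z * a i) * piL K A Δ ε (b i) :=
    G1_rep hA s (fun i => z * a i) b z hz
  have h2 : piR K A Δ ε z = ∑ i ∈ s, S (z * a i) * b i :=
    antipode_b_rep hA s (fun i => z * a i) b z hz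
  set H : A ⊗[K] A →ₗ[K] A :=
    LinearMap.mul' K A ∘ₗ TensorProduct.map (S ∘ₗ LinearMap.mulLeft K z) LinearMap.id with hH
  have hHt : ∀ u y : A, H (u ⊗ₜ[K] y) = S (z * u) * y := by
    intro u y
    simp [hH, LinearMap.mul'_apply]
  have key := congrArg H (CR' hW s a b hE)
  rw [map_sum] at key
  simp only [hHt] at key
  -- key : Σ_i S (z * a i) * piL (b i) = H (Δ 1)
  have hEd : H (Δ 1) = ∑ i ∈ s, S (z * a i) * b i := by
    rw [hE, map_sum]
    exact Finset.sum_congr rfl fun i _ => hHt _ _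
  rw [h1, h2, key, hEd]

/-- ATOM-Z : `Σ e₁ ⊗ Π^R(e₂) = Σ e₁ ⊗ S(e₂)` -/
lemma ATOMZ (hA : WeakHopfAlgebra K A Δ ε S) {ι : Type*}
    (s : Finset ι) (a b : ι → A) (hE : Δ 1 = ∑ i ∈ s, a i ⊗ₜ[K] b i) :
    ∑ i ∈ s, a i ⊗ₜ[K] piR K A Δ ε (b i) = ∑ i ∈ s, a i ⊗ₜ[K] S (b i) := by
  have hW := hA.toWeakBialgebra
  have h1 := congrArg (LinearMap.lTensor A S) (CR' hW s a b hE)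
  have h2 := congrArg (LinearMap.lTensor A (piR K A Δ ε)) (CR' hW s a b hE)
  rw [map_sum] at h1 h2
  simp only [LinearMap.lTensor_tmul] at h1 h2
  have e1 : (LinearMap.lTensor A S) (Δ 1) = ∑ i ∈ s, a i ⊗ₜ[K] S (b i) := by
    rw [hE, map_sum]
    simp only [LinearMap.lTensor_tmul]
  have e2 : (LinearMap.lTensor A (piR K A Δ ε)) (Δ 1)
      = ∑ i ∈ s, a i ⊗ₜ[K] piR K A Δ ε (b i) := by
    rw [hE, map_sum]
    simp only [LinearMap.lTensor_tmul]
  rw [e1] at h1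
  rw [e2] at h2
  have h3 : ∑ i ∈ s, a i ⊗ₜ[K] S (piL K A Δ ε (b i))
      = ∑ i ∈ s, a i ⊗ₜ[K] piR K A Δ ε (piL K A Δ ε (b i)) :=
    Finset.sum_congr rfl fun i _ => by rw [SPL2 hA]
  rw [← h1, ← h2, h3]

end Chunk12

end WHAaux

namespace WHAaux

section Chunk13

variable {K : Type*} [Field K] {A : Type*} [Ring A] [Algebra K A]
variable {Δ : A →ₗ[K] A ⊗[K] A} {ε : A →ₗ[K] K} {S : A →ₗ[K] A}

/-- The separability element commutes: `(x ⊗ 1) e = e (1 ⊗ x)` for `e = (id ⊗ S) Δ l`,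
`l` a left integral. -/
lemma sep_comm (hA : WeakHopfAlgebra K A Δ ε S) (l : A)
    (hl : ∀ z : A, z * l = piL K A Δ ε z * l) (x : A) :
    (x ⊗ₜ[K] (1 : A)) * (LinearMap.lTensor A S (Δ l))
      = (LinearMap.lTensor A S (Δ l)) * ((1 : A) ⊗ₜ[K] x) := by
  have hW := hA.toWeakBialgebra
  obtain ⟨sE, hE⟩ := TensorProduct.exists_finset (Δ 1)
  obtain ⟨sl, hL⟩ := TensorProduct.exists_finset (Δ l)
  obtain ⟨sx, hx⟩ := TensorProduct.exists_finset (Δ x)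
  choose rc hc using fun t : A × A => TensorProduct.exists_finset (Δ t.1)
  choose rd hd using fun t : A × A => TensorProduct.exists_finset (Δ t.2)
  set P : A ⊗[K] A := ∑ k ∈ sx, ∑ z ∈ rd k, ∑ m ∈ sl,
    (k.1 * m.1) ⊗ₜ[K] (S (z.1 * m.2) * z.2) with hPdef
  have he : LinearMap.lTensor A S (Δ l) = ∑ m ∈ sl, m.1 ⊗ₜ[K] S m.2 := by
    rw [hL, map_sum]
    simp only [LinearMap.lTensor_tmul]
  have final_e : ∑ j ∈ sE, ∑ m ∈ sl, (j.1 * m.1) ⊗ₜ[K] (S m.2 * S j.2)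
      = LinearMap.lTensor A S (Δ l) := by
    have h2 : ∑ j ∈ sE, ∑ m ∈ sl, (j.1 * m.1) ⊗ₜ[K] (j.2 * m.2) = Δ l := by
      have step : Δ 1 * Δ l = ∑ j ∈ sE, ∑ m ∈ sl, (j.1 * m.1) ⊗ₜ[K] (j.2 * m.2) := by
        rw [hE, hL, Finset.sum_mul_sum]
        exact Finset.sum_congr rfl fun j _ => Finset.sum_congr rfl fun m _ => by
          rw [Algebra.TensorProduct.tmul_mul_tmul]
      rw [← step, ← hW.comul_mul, one_mul]
    calc ∑ j ∈ sE, ∑ m ∈ sl, (j.1 * m.1) ⊗ₜ[K] (S m.2 * S j.2)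
        = ∑ j ∈ sE, ∑ m ∈ sl, LinearMap.lTensor A S ((j.1 * m.1) ⊗ₜ[K] (j.2 * m.2)) := by
          refine Finset.sum_congr rfl fun j _ => Finset.sum_congr rfl fun m _ => ?_
          rw [LinearMap.lTensor_tmul, ← S_antimult hA]
      _ = LinearMap.lTensor A S (∑ j ∈ sE, ∑ m ∈ sl, (j.1 * m.1) ⊗ₜ[K] (j.2 * m.2)) := by
          rw [map_sum]
          exact Finset.sum_congr rfl fun j _ => (map_sum _ _ _).symm
      _ = LinearMap.lTensor A S (Δ l) := by rw [h2]
  set Ψ : A ⊗[K] A →ₗ[K] A ⊗[K] A :=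
    ∑ m ∈ sl, TensorProduct.map (LinearMap.mulRight K m.1) (LinearMap.mulLeft K (S m.2))
    with hΨdef
  have hΨ : ∀ u v : A, Ψ (u ⊗ₜ[K] v) = ∑ m ∈ sl, (u * m.1) ⊗ₜ[K] (S m.2 * v) := by
    intro u v
    rw [hΨdef, LinearMap.sum_apply]
    exact Finset.sum_congr rfl fun m _ => by
      rw [TensorProduct.map_tmul, LinearMap.mulRight_apply, LinearMap.mulLeft_apply]
  have ePsi' : ∑ j ∈ sE, Ψ (j.1 ⊗ₜ[K] piR K A Δ ε j.2) = LinearMap.lTensor A S (Δ l) := by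
    have h1 : ∑ j ∈ sE, Ψ (j.1 ⊗ₜ[K] piR K A Δ ε j.2)
        = ∑ j ∈ sE, Ψ (j.1 ⊗ₜ[K] S j.2) := by
      rw [← map_sum, ← map_sum]
      congr 1
      exact ATOMZ hA sE Prod.fst Prod.snd hE
    rw [h1, ← final_e]
    exact Finset.sum_congr rfl fun j _ => by rw [hΨ]
  -- ================= first half : P = (x ⊗ 1) e ====================
  have hP1 : P = (x ⊗ₜ[K] (1 : A)) * (LinearMap.lTensor A S (Δ l)) := by
    have ia : P = ∑ k ∈ sx, ∑ m ∈ sl,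
        (k.1 * m.1) ⊗ₜ[K] (S m.2 * piR K A Δ ε k.2) := by
      rw [hPdef]
      refine Finset.sum_congr rfl fun k _ => ?_
      rw [Finset.sum_comm]
      refine Finset.sum_congr rfl fun m _ => ?_
      rw [antipode_b_rep hA (rd k) Prod.fst Prod.snd k.2 (hd k), Finset.mul_sum,
        TensorProduct.tmul_sum]
      refine Finset.sum_congr rfl fun z _ => ?_
      rw [S_antimult hA, mul_assoc]
    have ib : P = ∑ m ∈ sl, ∑ j ∈ sE, ∑ k ∈ sx,
        ε (k.2 * j.2) • ((k.1 * m.1) ⊗ₜ[K] (S m.2 * j.1)) := by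
      rw [ia]
      have per : ∀ k ∈ sx, ∀ m ∈ sl, (k.1 * m.1) ⊗ₜ[K] (S m.2 * piR K A Δ ε k.2)
          = ∑ j ∈ sE, ε (k.2 * j.2) • ((k.1 * m.1) ⊗ₜ[K] (S m.2 * j.1)) := by
        intro k _ m _
        rw [piR_rep sE Prod.fst Prod.snd hE k.2, Finset.mul_sum, TensorProduct.tmul_sum]
        refine Finset.sum_congr rfl fun j _ => ?_
        rw [mul_smul_comm, TensorProduct.tmul_smul]
      calc ∑ k ∈ sx, ∑ m ∈ sl, (k.1 * m.1) ⊗ₜ[K] (S m.2 * piR K A Δ ε k.2)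
          = ∑ k ∈ sx, ∑ m ∈ sl, ∑ j ∈ sE,
              ε (k.2 * j.2) • ((k.1 * m.1) ⊗ₜ[K] (S m.2 * j.1)) :=
            Finset.sum_congr rfl fun k hk => Finset.sum_congr rfl fun m hm => per k hk m hm
        _ = ∑ m ∈ sl, ∑ k ∈ sx, ∑ j ∈ sE,
              ε (k.2 * j.2) • ((k.1 * m.1) ⊗ₜ[K] (S m.2 * j.1)) := Finset.sum_comm
        _ = ∑ m ∈ sl, ∑ j ∈ sE, ∑ k ∈ sx,
              ε (k.2 * j.2) • ((k.1 * m.1) ⊗ₜ[K] (S m.2 * j.1)) :=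
            Finset.sum_congr rfl fun m _ => Finset.sum_comm
    have ic : P = ∑ m ∈ sl, ∑ j ∈ sE, ∑ j' ∈ sE,
        ε (j'.2 * j.2) • (((x * j'.1) * m.1) ⊗ₜ[K] (S m.2 * j.1)) := by
      rw [ib]
      refine Finset.sum_congr rfl fun m _ => Finset.sum_congr rfl fun j _ => ?_
      set φ : A →ₗ[K] A ⊗[K] A :=
        ((TensorProduct.mk K A A).flip (S m.2 * j.1)) ∘ₗ LinearMap.mulRight K m.1 with hφdef
      have hφ : ∀ y : A, φ y = (y * m.1) ⊗ₜ[K] (S m.2 * j.1) := by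
        intro y
        simp [hφdef, TensorProduct.mk_apply]
      have key := congrArg φ (U1' hW sE Prod.fst Prod.snd hE sx Prod.fst Prod.snd x hx j.2)
      rw [map_sum, map_sum] at key
      simp only [map_smul] at key
      simp only [hφ] at key
      exact key
    have hC : ∑ m ∈ sl, ∑ j ∈ sE, ∑ j' ∈ sE,
        ε (j'.2 * j.2) • ((j'.1 * m.1) ⊗ₜ[K] (S m.2 * j.1))
        = LinearMap.lTensor A S (Δ l) := by
      have swap : ∀ m ∈ sl, ∑ j ∈ sE, ∑ j' ∈ sE,
          ε (j'.2 * j.2) • ((j'.1 * m.1) ⊗ₜ[K] (S m.2 * j.1))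
          = ∑ j' ∈ sE, ∑ j ∈ sE,
              ε (j'.2 * j.2) • ((j'.1 * m.1) ⊗ₜ[K] (S m.2 * j.1)) :=
        fun m _ => Finset.sum_comm
      have perm : ∀ m ∈ sl, ∀ j' ∈ sE, ∑ j ∈ sE,
          ε (j'.2 * j.2) • ((j'.1 * m.1) ⊗ₜ[K] (S m.2 * j.1))
          = (j'.1 * m.1) ⊗ₜ[K] (S m.2 * piR K A Δ ε j'.2) := by
        intro m _ j' _
        rw [piR_rep sE Prod.fst Prod.snd hE j'.2, Finset.mul_sum, TensorProduct.tmul_sum]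
        exact Finset.sum_congr rfl fun j _ => by
          rw [mul_smul_comm, TensorProduct.tmul_smul]
      calc ∑ m ∈ sl, ∑ j ∈ sE, ∑ j' ∈ sE,
          ε (j'.2 * j.2) • ((j'.1 * m.1) ⊗ₜ[K] (S m.2 * j.1))
          = ∑ m ∈ sl, ∑ j' ∈ sE, (j'.1 * m.1) ⊗ₜ[K] (S m.2 * piR K A Δ ε j'.2) := by
            refine Finset.sum_congr rfl fun m hm => ?_
            rw [swap m hm]
            exact Finset.sum_congr rfl fun j' hj' => perm m hm j' hj'
        _ = ∑ j' ∈ sE, ∑ m ∈ sl, (j'.1 * m.1) ⊗ₜ[K] (S m.2 * piR K A Δ ε j'.2) :=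
            Finset.sum_comm
        _ = ∑ j' ∈ sE, Ψ (j'.1 ⊗ₜ[K] piR K A Δ ε j'.2) :=
            Finset.sum_congr rfl fun j' _ => (hΨ _ _).symm
        _ = LinearMap.lTensor A S (Δ l) := ePsi'
    rw [ic, ← hC]
    rw [Finset.mul_sum]
    refine Finset.sum_congr rfl fun m _ => ?_
    rw [Finset.mul_sum]
    refine Finset.sum_congr rfl fun j _ => ?_
    rw [Finset.mul_sum]
    refine Finset.sum_congr rfl fun j' _ => ?_
    rw [mul_smul_comm, Algebra.TensorProduct.tmul_mul_tmul, one_mul, mul_assoc]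
  -- ================= second half : P = e (1 ⊗ x) ====================
  have hP2 : P = (LinearMap.lTensor A S (Δ l)) * ((1 : A) ⊗ₜ[K] x) := by
    set kP : A ⊗[K] (A ⊗[K] A) →ₗ[K] A ⊗[K] A :=
      ∑ m ∈ sl, TensorProduct.map (LinearMap.mulRight K m.1)
        (LinearMap.mul' K A ∘ₗ
          TensorProduct.map (S ∘ₗ LinearMap.mulRight K m.2) LinearMap.id) with hkPdef
    have hkP : ∀ α β γ : A, kP (α ⊗ₜ[K] (β ⊗ₜ[K] γ))
        = ∑ m ∈ sl, (α * m.1) ⊗ₜ[K] (S (β * m.2) * γ) := by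
      intro α β γ
      rw [hkPdef, LinearMap.sum_apply]
      refine Finset.sum_congr rfl fun m _ => ?_
      simp [LinearMap.mul'_apply]
    have ii1 : P = ∑ k ∈ sx, kP (k.1 ⊗ₜ[K] Δ k.2) := by
      rw [hPdef]
      refine Finset.sum_congr rfl fun k _ => ?_
      rw [hd k, TensorProduct.tmul_sum, map_sum]
      exact Finset.sum_congr rfl fun z _ => by rw [hkP]
    have ii2 : P = ∑ k ∈ sx, ∑ w ∈ rc k, kP (w.1 ⊗ₜ[K] (w.2 ⊗ₜ[K] k.2)) := by
      rw [ii1, ← coassoc_swap hW sx Prod.fst Prod.snd x hx rc (fun k w => w.1)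
        (fun k w => w.2) (fun k _ => hc k) kP]
    have ii3 : P = ∑ k ∈ sx, ∑ m ∈ sl,
        (piL K A Δ ε k.1 * m.1) ⊗ₜ[K] (S m.2 * k.2) := by
      rw [ii2]
      refine Finset.sum_congr rfl fun k _ => ?_
      set Λ : A ⊗[K] A →ₗ[K] A ⊗[K] A :=
        TensorProduct.map LinearMap.id ((LinearMap.mulRight K k.2) ∘ₗ S) with hΛdef
      have hΛ : ∀ u v : A, Λ (u ⊗ₜ[K] v) = u ⊗ₜ[K] (S v * k.2) := by
        intro u v
        simp [hΛdef]
      have h5 : ∑ w ∈ rc k, kP (w.1 ⊗ₜ[K] (w.2 ⊗ₜ[K] k.2)) = Λ (Δ k.1 * Δ l) := by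
        have hprod : Δ k.1 * Δ l
            = ∑ w ∈ rc k, ∑ m ∈ sl, (w.1 * m.1) ⊗ₜ[K] (w.2 * m.2) := by
          rw [hc k, hL, Finset.sum_mul_sum]
          exact Finset.sum_congr rfl fun w _ => Finset.sum_congr rfl fun m _ => by
            rw [Algebra.TensorProduct.tmul_mul_tmul]
        rw [hprod, map_sum]
        refine Finset.sum_congr rfl fun w _ => ?_
        rw [hkP, map_sum]
        exact Finset.sum_congr rfl fun m _ => by rw [hΛ]
      have h6 : Δ k.1 * Δ l = (piL K A Δ ε k.1 ⊗ₜ[K] (1 : A)) * Δ l := by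
        rw [← hW.comul_mul, hl k.1, hW.comul_mul, D_L hW, mul_assoc, ← hW.comul_mul,
          one_mul]
      have h7 : Λ ((piL K A Δ ε k.1 ⊗ₜ[K] (1 : A)) * Δ l)
          = ∑ m ∈ sl, (piL K A Δ ε k.1 * m.1) ⊗ₜ[K] (S m.2 * k.2) := by
        have expand : (piL K A Δ ε k.1 ⊗ₜ[K] (1 : A)) * Δ l
            = ∑ m ∈ sl, (piL K A Δ ε k.1 * m.1) ⊗ₜ[K] m.2 := by
          rw [hL, Finset.mul_sum]
          exact Finset.sum_congr rfl fun m _ => by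
            rw [Algebra.TensorProduct.tmul_mul_tmul, one_mul]
        rw [expand, map_sum]
        exact Finset.sum_congr rfl fun m _ => by rw [hΛ]
      rw [h5, h6, h7]
    have ii4 : P = ∑ m ∈ sl, ∑ j ∈ sE, ∑ k ∈ sx,
        ε (j.1 * k.1) • ((j.2 * m.1) ⊗ₜ[K] (S m.2 * k.2)) := by
      rw [ii3]
      have per : ∀ k ∈ sx, ∀ m ∈ sl,
          (piL K A Δ ε k.1 * m.1) ⊗ₜ[K] (S m.2 * k.2)
          = ∑ j ∈ sE, ε (j.1 * k.1) • ((j.2 * m.1) ⊗ₜ[K] (S m.2 * k.2)) := by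
        intro k _ m _
        rw [piL_rep sE Prod.fst Prod.snd hE k.1, Finset.sum_mul, TensorProduct.sum_tmul]
        exact Finset.sum_congr rfl fun j _ => by
          rw [smul_mul_assoc, TensorProduct.smul_tmul']
      calc ∑ k ∈ sx, ∑ m ∈ sl, (piL K A Δ ε k.1 * m.1) ⊗ₜ[K] (S m.2 * k.2)
          = ∑ k ∈ sx, ∑ m ∈ sl, ∑ j ∈ sE,
              ε (j.1 * k.1) • ((j.2 * m.1) ⊗ₜ[K] (S m.2 * k.2)) :=
            Finset.sum_congr rfl fun k hk => Finset.sum_congr rfl fun m hm => per k hk m hm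
        _ = ∑ m ∈ sl, ∑ k ∈ sx, ∑ j ∈ sE,
              ε (j.1 * k.1) • ((j.2 * m.1) ⊗ₜ[K] (S m.2 * k.2)) := Finset.sum_comm
        _ = ∑ m ∈ sl, ∑ j ∈ sE, ∑ k ∈ sx,
              ε (j.1 * k.1) • ((j.2 * m.1) ⊗ₜ[K] (S m.2 * k.2)) :=
            Finset.sum_congr rfl fun m _ => Finset.sum_comm
    have ii5 : P = ∑ m ∈ sl, ∑ j ∈ sE, ∑ j' ∈ sE,
        ε (j.1 * j'.1) • ((j.2 * m.1) ⊗ₜ[K] (S m.2 * (j'.2 * x))) := by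
      rw [ii4]
      refine Finset.sum_congr rfl fun m _ => Finset.sum_congr rfl fun j _ => ?_
      set ψ : A →ₗ[K] A ⊗[K] A :=
        (TensorProduct.mk K A A (j.2 * m.1)) ∘ₗ LinearMap.mulLeft K (S m.2) with hψdef
      have hψ : ∀ y : A, ψ y = (j.2 * m.1) ⊗ₜ[K] (S m.2 * y) := by
        intro y
        simp [hψdef, TensorProduct.mk_apply]
      have key := congrArg ψ (U2' hW sE Prod.fst Prod.snd hE sx Prod.fst Prod.snd x hx j.1)
      rw [map_sum, map_sum] at key
      simp only [map_smul] at key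
      simp only [hψ] at key
      exact key
    have hC' : ∑ m ∈ sl, ∑ j ∈ sE, ∑ j' ∈ sE,
        ε (j.1 * j'.1) • ((j.2 * m.1) ⊗ₜ[K] (S m.2 * j'.2))
        = LinearMap.lTensor A S (Δ l) := by
      have perm : ∀ m ∈ sl, ∀ j' ∈ sE, ∑ j ∈ sE,
          ε (j.1 * j'.1) • ((j.2 * m.1) ⊗ₜ[K] (S m.2 * j'.2))
          = (piL K A Δ ε j'.1 * m.1) ⊗ₜ[K] (S m.2 * j'.2) := by
        intro m _ j' _
        rw [piL_rep sE Prod.fst Prod.snd hE j'.1, Finset.sum_mul, TensorProduct.sum_tmul]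
        exact Finset.sum_congr rfl fun j _ => by
          rw [smul_mul_assoc, TensorProduct.smul_tmul']
      have step1 : ∑ m ∈ sl, ∑ j ∈ sE, ∑ j' ∈ sE,
          ε (j.1 * j'.1) • ((j.2 * m.1) ⊗ₜ[K] (S m.2 * j'.2))
          = ∑ j' ∈ sE, ∑ m ∈ sl,
              (piL K A Δ ε j'.1 * m.1) ⊗ₜ[K] (S m.2 * j'.2) := by
        have : ∑ m ∈ sl, ∑ j ∈ sE, ∑ j' ∈ sE,
            ε (j.1 * j'.1) • ((j.2 * m.1) ⊗ₜ[K] (S m.2 * j'.2))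
            = ∑ m ∈ sl, ∑ j' ∈ sE,
                (piL K A Δ ε j'.1 * m.1) ⊗ₜ[K] (S m.2 * j'.2) := by
          refine Finset.sum_congr rfl fun m hm => ?_
          rw [Finset.sum_comm]
          exact Finset.sum_congr rfl fun j' hj' => perm m hm j' hj'
        rw [this]
        exact Finset.sum_comm
      -- now per j' : Σ_m (piL j'.1 * m.1) ⊗ (S m.2 * j'.2) = Ξ (Δ j'.1 ⊗ j'.2)
      set Ξ : (A ⊗[K] A) ⊗[K] A →ₗ[K] A ⊗[K] A :=
        kP ∘ₗ (TensorProduct.assoc K A A A).toLinearMap with hΞdef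
      have hΞ : ∀ α β γ : A, Ξ ((α ⊗ₜ[K] β) ⊗ₜ[K] γ)
          = ∑ m ∈ sl, (α * m.1) ⊗ₜ[K] (S (β * m.2) * γ) := by
        intro α β γ
        rw [hΞdef, LinearMap.comp_apply, LinearEquiv.coe_coe, TensorProduct.assoc_tmul,
          hkP]
      have step2 : ∀ j' ∈ sE, ∑ m ∈ sl,
          (piL K A Δ ε j'.1 * m.1) ⊗ₜ[K] (S m.2 * j'.2)
          = Ξ (Δ j'.1 ⊗ₜ[K] j'.2) := by
        intro j' _
        have h6 : Δ j'.1 * Δ l = (piL K A Δ ε j'.1 ⊗ₜ[K] (1 : A)) * Δ l := by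
          rw [← hW.comul_mul, hl j'.1, hW.comul_mul, D_L hW, mul_assoc, ← hW.comul_mul,
            one_mul]
        have lhs_eq : ∑ m ∈ sl, (piL K A Δ ε j'.1 * m.1) ⊗ₜ[K] (S m.2 * j'.2)
            = ∑ w ∈ rc j', ∑ m ∈ sl, (w.1 * m.1) ⊗ₜ[K] (S (w.2 * m.2) * j'.2) := by
          set Λ : A ⊗[K] A →ₗ[K] A ⊗[K] A :=
            TensorProduct.map LinearMap.id ((LinearMap.mulRight K j'.2) ∘ₗ S) with hΛdef
          have hΛ : ∀ u v : A, Λ (u ⊗ₜ[K] v) = u ⊗ₜ[K] (S v * j'.2) := by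
            intro u v
            simp [hΛdef]
          have e1 : ∑ m ∈ sl, (piL K A Δ ε j'.1 * m.1) ⊗ₜ[K] (S m.2 * j'.2)
              = Λ ((piL K A Δ ε j'.1 ⊗ₜ[K] (1 : A)) * Δ l) := by
            have expand : (piL K A Δ ε j'.1 ⊗ₜ[K] (1 : A)) * Δ l
                = ∑ m ∈ sl, (piL K A Δ ε j'.1 * m.1) ⊗ₜ[K] m.2 := by
              rw [hL, Finset.mul_sum]
              exact Finset.sum_congr rfl fun m _ => by
                rw [Algebra.TensorProduct.tmul_mul_tmul, one_mul]
            rw [expand, map_sum]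
            exact (Finset.sum_congr rfl fun m _ => by rw [hΛ]).symm
          have e2 : Λ (Δ j'.1 * Δ l)
              = ∑ w ∈ rc j', ∑ m ∈ sl, (w.1 * m.1) ⊗ₜ[K] (S (w.2 * m.2) * j'.2) := by
            have hprod : Δ j'.1 * Δ l
                = ∑ w ∈ rc j', ∑ m ∈ sl, (w.1 * m.1) ⊗ₜ[K] (w.2 * m.2) := by
              rw [hc j', hL, Finset.sum_mul_sum]
              exact Finset.sum_congr rfl fun w _ => Finset.sum_congr rfl fun m _ => by
                rw [Algebra.TensorProduct.tmul_mul_tmul]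
            rw [hprod, map_sum]
            refine Finset.sum_congr rfl fun w _ => ?_
            rw [map_sum]
            exact Finset.sum_congr rfl fun m _ => by rw [hΛ]
          rw [e1, ← h6, e2]
        rw [lhs_eq, hc j', TensorProduct.sum_tmul, map_sum]
        exact (Finset.sum_congr rfl fun w _ => by rw [hΞ]).symm
      have step3 : ∑ j' ∈ sE, Ξ (Δ j'.1 ⊗ₜ[K] j'.2)
          = ∑ i ∈ sE, ∑ j ∈ sE, Ξ ((j.1 ⊗ₜ[K] (i.1 * j.2)) ⊗ₜ[K] i.2) := by
        have hT : Δ.rTensor A (Δ 1) = ∑ j' ∈ sE, (Δ j'.1) ⊗ₜ[K] j'.2 :=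
          rTensor_rep sE Prod.fst Prod.snd 1 hE
        have hT2 := unitB_rep hW sE Prod.fst Prod.snd hE
        have := congrArg Ξ (hT.symm.trans hT2)
        rw [map_sum] at this
        simpa only [map_sum] using this
      have step4 : ∑ i ∈ sE, ∑ j ∈ sE, Ξ ((j.1 ⊗ₜ[K] (i.1 * j.2)) ⊗ₜ[K] i.2)
          = ∑ j ∈ sE, ∑ m ∈ sl, (j.1 * m.1) ⊗ₜ[K] (S m.2 * S j.2) := by
        have expand : ∀ i ∈ sE, ∀ j ∈ sE, Ξ ((j.1 ⊗ₜ[K] (i.1 * j.2)) ⊗ₜ[K] i.2)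
            = ∑ m ∈ sl, (j.1 * m.1) ⊗ₜ[K] ((S m.2 * S j.2) * (S i.1 * i.2)) := by
          intro i _ j _
          rw [hΞ]
          refine Finset.sum_congr rfl fun m _ => ?_
          congr 1
          rw [S_antimult hA, S_antimult hA]
          noncomm_ring
        have collect : ∀ j ∈ sE, ∀ m ∈ sl,
            ∑ i ∈ sE, (j.1 * m.1) ⊗ₜ[K] ((S m.2 * S j.2) * (S i.1 * i.2))
            = (j.1 * m.1) ⊗ₜ[K] (S m.2 * S j.2) := by
          intro j _ m _
          have : ∑ i ∈ sE, (j.1 * m.1) ⊗ₜ[K] ((S m.2 * S j.2) * (S i.1 * i.2))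
              = (j.1 * m.1) ⊗ₜ[K] ((S m.2 * S j.2) * (∑ i ∈ sE, S i.1 * i.2)) := by
            rw [Finset.mul_sum, TensorProduct.tmul_sum]
          rw [this, ← antipode_b_rep hA sE Prod.fst Prod.snd 1 hE, piR_one hW, mul_one]
        calc ∑ i ∈ sE, ∑ j ∈ sE, Ξ ((j.1 ⊗ₜ[K] (i.1 * j.2)) ⊗ₜ[K] i.2)
            = ∑ i ∈ sE, ∑ j ∈ sE, ∑ m ∈ sl,
                (j.1 * m.1) ⊗ₜ[K] ((S m.2 * S j.2) * (S i.1 * i.2)) :=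
              Finset.sum_congr rfl fun i hi => Finset.sum_congr rfl fun j hj =>
                expand i hi j hj
          _ = ∑ j ∈ sE, ∑ i ∈ sE, ∑ m ∈ sl,
                (j.1 * m.1) ⊗ₜ[K] ((S m.2 * S j.2) * (S i.1 * i.2)) := Finset.sum_comm
          _ = ∑ j ∈ sE, ∑ m ∈ sl, ∑ i ∈ sE,
                (j.1 * m.1) ⊗ₜ[K] ((S m.2 * S j.2) * (S i.1 * i.2)) :=
              Finset.sum_congr rfl fun j _ => Finset.sum_comm
          _ = ∑ j ∈ sE, ∑ m ∈ sl, (j.1 * m.1) ⊗ₜ[K] (S m.2 * S j.2) :=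
              Finset.sum_congr rfl fun j hj => Finset.sum_congr rfl fun m hm =>
                collect j hj m hm
      rw [step1, Finset.sum_congr rfl step2, step3, step4, final_e]
    rw [ii5, ← hC', Finset.sum_mul]
    refine Finset.sum_congr rfl fun m _ => ?_
    rw [Finset.sum_mul]
    refine Finset.sum_congr rfl fun j _ => ?_
    rw [Finset.sum_mul]
    refine Finset.sum_congr rfl fun j' _ => ?_
    rw [smul_mul_assoc, Algebra.TensorProduct.tmul_mul_tmul, mul_one, mul_assoc]
  rw [← hP1, hP2]

end Chunk13

end WHAaux

namespace WHAaux

section Chunk14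

variable {K : Type*} [Field K] {A : Type*} [Ring A] [Algebra K A]
variable {Δ : A →ₗ[K] A ⊗[K] A} {ε : A →ₗ[K] K} {S : A →ₗ[K] A}

/-- (b) ⇒ (c) : a normalized left integral gives a separability idempotent. -/
lemma b_imp_c (hA : WeakHopfAlgebra K A Δ ε S)
    (hb : ∃ l : A, (∀ x : A, x * l = piL K A Δ ε x * l) ∧ piL K A Δ ε l = 1) :
    ∃ e : A ⊗[K] A, LinearMap.mul' K A e = 1 ∧
      ∀ x : A, (x ⊗ₜ[K] (1 : A)) * e = e * ((1 : A) ⊗ₜ[K] x) := by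
  obtain ⟨l, hl, hnorm⟩ := hb
  refine ⟨LinearMap.lTensor A S (Δ l), ?_, fun x => sep_comm hA l hl x⟩
  rw [hA.antipode_a l, hnorm]

/-- (c) ⇒ (a) : a separability idempotent gives semisimplicity. -/
lemma c_imp_a
    (hc : ∃ e : A ⊗[K] A, LinearMap.mul' K A e = 1 ∧
      ∀ x : A, (x ⊗ₜ[K] (1 : A)) * e = e * ((1 : A) ⊗ₜ[K] x)) :
    IsSemisimpleRing A := by
  obtain ⟨e, he1, hecomm⟩ := hc
  refine (isSemisimpleModule_iff ..).mpr ⟨?_⟩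
  intro N
  -- a K-linear projection onto N
  obtain ⟨q, hq⟩ := Submodule.exists_isCompl (N.restrictScalars K)
  set pr : A →ₗ[K] A :=
    (N.restrictScalars K).subtype ∘ₗ (N.restrictScalars K).linearProjOfIsCompl q hq
    with hprdef
  have hpr_mem : ∀ m : A, pr m ∈ N := fun m => ((N.restrictScalars K).linearProjOfIsCompl q hq m).2
  have hpr_fix : ∀ n ∈ N, pr n = n := by
    intro n hn
    simp only [hprdef, LinearMap.coe_comp, Function.comp_apply, Submodule.coe_subtype]
    exact congrArg Subtype.val (Submodule.linearProjOfIsCompl_apply_left hq ⟨n, hn⟩)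
  -- the averaged projection
  set Φ : A → A ⊗[K] A →ₗ[K] A := fun m =>
    LinearMap.mul' K A ∘ₗ TensorProduct.map LinearMap.id (pr ∘ₗ LinearMap.mulRight K m)
    with hΦdef
  have hΦt : ∀ (m u v : A), Φ m (u ⊗ₜ[K] v) = u * pr (v * m) := by
    intro m u v
    simp [hΦdef, LinearMap.mul'_apply]
  set P : A → A := fun m => Φ m e with hPdef
  have hPadd : ∀ m m' : A, P (m + m') = P m + P m' := by
    intro m m'
    simp only [hPdef]
    have : ∀ t : A ⊗[K] A, Φ (m + m') t = Φ m t + Φ m' t := by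
      intro t
      induction t using TensorProduct.induction_on with
      | zero => simp
      | add t₁ t₂ h₁ h₂ => rw [map_add, map_add, map_add, h₁, h₂]; abel
      | tmul u v => rw [hΦt, hΦt, hΦt, mul_add, map_add, mul_add]
    exact this e
  have hPsmulA : ∀ (x m : A), P (x * m) = x * P m := by
    intro x m
    have h1 : ∀ t : A ⊗[K] A, Φ m ((x ⊗ₜ[K] (1 : A)) * t) = x * Φ m t := by
      intro t
      induction t using TensorProduct.induction_on with
      | zero => simp
      | add t₁ t₂ h₁ h₂ => rw [mul_add, map_add, map_add, mul_add, h₁, h₂]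
      | tmul u v =>
        rw [Algebra.TensorProduct.tmul_mul_tmul, one_mul, hΦt, hΦt, mul_assoc]
    have h2 : ∀ t : A ⊗[K] A, Φ m (t * ((1 : A) ⊗ₜ[K] x)) = Φ (x * m) t := by
      intro t
      induction t using TensorProduct.induction_on with
      | zero => simp
      | add t₁ t₂ h₁ h₂ => rw [add_mul, map_add, map_add, h₁, h₂]
      | tmul u v =>
        rw [Algebra.TensorProduct.tmul_mul_tmul, mul_one, hΦt, hΦt, mul_assoc]
    calc P (x * m) = Φ (x * m) e := rfl
      _ = Φ m (e * ((1 : A) ⊗ₜ[K] x)) := (h2 e).symm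
      _ = Φ m ((x ⊗ₜ[K] (1 : A)) * e) := by rw [← hecomm x]
      _ = x * Φ m e := h1 e
      _ = x * P m := rfl
  have hPmem : ∀ m : A, P m ∈ N := by
    intro m
    simp only [hPdef]
    have : ∀ t : A ⊗[K] A, Φ m t ∈ N := by
      intro t
      induction t using TensorProduct.induction_on with
      | zero => simp
      | add t₁ t₂ h₁ h₂ => rw [map_add]; exact N.add_mem h₁ h₂
      | tmul u v =>
        rw [hΦt]
        have hm2 := N.smul_mem u (hpr_mem (v * m))
        rwa [smul_eq_mul] at hm2
    exact this e
  have hPfix : ∀ n ∈ N, P n = n := by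
    intro n hn
    have : ∀ t : A ⊗[K] A, Φ n t = LinearMap.mul' K A t * n := by
      intro t
      induction t using TensorProduct.induction_on with
      | zero => simp
      | add t₁ t₂ h₁ h₂ => rw [map_add, map_add, add_mul, h₁, h₂]
      | tmul u v =>
        have hvn : v * n ∈ N := by
          have := N.smul_mem v hn
          rwa [smul_eq_mul] at this
        rw [hΦt, LinearMap.mul'_apply, hpr_fix _ hvn, mul_assoc]
    calc P n = Φ n e := rfl
      _ = LinearMap.mul' K A e * n := this e
      _ = n := by rw [he1, one_mul]
  -- P as an A-linear endomorphism
  set PA : A →ₗ[A] A :=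
    { toFun := P
      map_add' := hPadd
      map_smul' := fun x m => by
        simp only [smul_eq_mul, RingHom.id_apply]
        exact hPsmulA x m } with hPAdef
  refine ⟨LinearMap.ker PA, ?_, ?_⟩
  · rw [disjoint_iff_inf_le]
    intro m hm
    have hmN : m ∈ N := hm.1
    have hmK : PA m = 0 := hm.2
    have : P m = m := hPfix m hmN
    simp only [hPAdef, LinearMap.coe_mk, AddHom.coe_mk] at hmK
    rw [← this, hmK]
    exact Submodule.zero_mem ⊥
  · rw [codisjoint_iff_le_sup]
    intro m _
    have h1 : P m ∈ N := hPmem m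
    have h2 : m - P m ∈ LinearMap.ker PA := by
      rw [LinearMap.mem_ker, map_sub]
      have e1 : PA (P m) = P m := hPfix _ h1
      have e2 : PA m = P m := rfl
      rw [e1, e2, sub_self]
    exact Submodule.mem_sup.mpr ⟨P m, h1, m - P m, h2, by rw [add_sub_cancel]⟩

end Chunk14

end WHAaux

namespace WHAaux

section Chunk15

variable {K : Type*} [Field K] {A : Type*} [Ring A] [Algebra K A]
variable {Δ : A →ₗ[K] A ⊗[K] A} {ε : A →ₗ[K] K} {S : A →ₗ[K] A}

/-- (a) ⇒ (b) : semisimplicity gives a normalized left integral. -/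
lemma a_imp_b (hW : WeakBialgebra K A Δ ε) (hss : IsSemisimpleRing A) :
    ∃ l : A, (∀ x : A, x * l = piL K A Δ ε x * l) ∧ piL K A Δ ε l = 1 := by
  classical
  set L : Submodule K A := LinearMap.range (piL K A Δ ε) with hLdef
  have hmem : ∀ (x : A) (m : ↥L), piL K A Δ ε (x * (m : A)) ∈ L := fun x m =>
    ⟨x * (m : A), rfl⟩
  have hLfix : ∀ m : ↥L, piL K A Δ ε (m : A) = (m : A) := by
    rintro ⟨m, y, rfl⟩
    have := piL_mul_piL hW 1 y
    rwa [one_mul, one_mul] at this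
  letI : SMul A ↥L := ⟨fun x m => ⟨piL K A Δ ε (x * (m : A)), hmem x m⟩⟩
  have smul_def : ∀ (x : A) (m : ↥L), ((x • m : ↥L) : A) = piL K A Δ ε (x * (m : A)) :=
    fun x m => rfl
  letI : Module A ↥L := Module.ofMinimalAxioms
    (fun x m n => by
      ext
      rw [smul_def]
      push_cast [smul_def]
      rw [mul_add, map_add])
    (fun x y m => by
      ext
      push_cast [smul_def]
      rw [add_mul, map_add])
    (fun x y m => by
      ext
      push_cast [smul_def]
      rw [piL_mul_piL hW, mul_assoc])
    (fun m => by
      ext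
      rw [smul_def, one_mul, hLfix])
  set π : A →ₗ[A] ↥L :=
    { toFun := fun y => ⟨piL K A Δ ε y, ⟨y, rfl⟩⟩
      map_add' := fun y z => by ext; simp
      map_smul' := fun x y => by
        ext
        simp only [smul_eq_mul, RingHom.id_apply, smul_def]
        rw [piL_mul_piL hW] } with hπdef
  have hπ_apply : ∀ y : A, ((π y : ↥L) : A) = piL K A Δ ε y := fun y => rfl
  haveI : IsSemisimpleModule A A := hss
  obtain ⟨q, hq⟩ := exists_isCompl (LinearMap.ker π)
  set ρ : ↥q →ₗ[A] ↥L := π ∘ₗ q.subtype with hρdef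
  have hρinj : Function.Injective ρ := by
    rw [← LinearMap.ker_eq_bot, Submodule.eq_bot_iff]
    rintro x hx
    have h1 : (x : A) ∈ LinearMap.ker π := hx
    have h2 : (x : A) ∈ (LinearMap.ker π) ⊓ q := ⟨h1, x.2⟩
    rw [hq.inf_eq_bot, Submodule.mem_bot] at h2
    exact Subtype.ext h2
  have hρsurj : Function.Surjective ρ := by
    rintro ⟨m, y, rfl⟩
    have hy : y ∈ LinearMap.ker π ⊔ q := by
      rw [hq.sup_eq_top]
      trivial
    obtain ⟨a, ha, b, hb, hab⟩ := Submodule.mem_sup.mp hy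
    refine ⟨⟨b, hb⟩, ?_⟩
    have : ρ ⟨b, hb⟩ = π b := rfl
    rw [this]
    have hπa : π a = 0 := ha
    have : π b = π (a + b) := by rw [map_add, hπa, zero_add]
    rw [this, hab]
    rfl
  set eqv := LinearEquiv.ofBijective ρ ⟨hρinj, hρsurj⟩ with heqv
  set oneL : ↥L := ⟨1, ⟨1, piL_one hW⟩⟩ with honeL
  set w : ↥q := eqv.symm oneL with hwdef
  set lval : A := ((w : A)) with hlval
  have hρw : π lval = oneL := by
    have : eqv w = oneL := by rw [hwdef, LinearEquiv.apply_symm_apply]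
    exact this
  have hnorm : piL K A Δ ε lval = 1 := congrArg Subtype.val hρw
  refine ⟨lval, ?_, hnorm⟩
  intro x
  have key : (x • w : ↥q) = (piL K A Δ ε x) • w := by
    apply hρinj
    have e1 : ρ (x • w) = x • oneL := by rw [map_smul]; exact congrArg _ hρw
    have e2 : ρ ((piL K A Δ ε x) • w) = (piL K A Δ ε x) • oneL := by
      rw [map_smul]; exact congrArg _ hρw
    rw [e1, e2]
    ext
    rw [smul_def, smul_def, mul_one, mul_one]
    have := piL_mul_piL hW 1 x
    rw [one_mul, one_mul] at this
    exact this.symm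
  have coe1 : x * lval = ((x • w : ↥q) : A) := by
    rw [hlval, SetLike.val_smul, smul_eq_mul]
  have coe2 : piL K A Δ ε x * lval = (((piL K A Δ ε x) • w : ↥q) : A) := by
    rw [hlval, SetLike.val_smul, smul_eq_mul]
  rw [coe1, coe2, key]

end Chunk15

end WHAaux

/-- **weak Hopf Maschke theorem.** For a weak Hopf algebra `A` over a
field `K` the following are equivalent: (a) `A` is a semisimple ring; (b) there exists a
normalized left integral (a left integral `l` with `Π^L(l) = 1`); (c) `A` is a separable
`K`-algebra, i.e. admits a separability idempotent `e ∈ A ⊗ A`. -/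
theorem weakHopfAlgebra_maschke
    (K : Type*) [Field K] (A : Type*) [Ring A] [Algebra K A] [FiniteDimensional K A]
    (Δ : A →ₗ[K] A ⊗[K] A) (ε : A →ₗ[K] K) (S : A →ₗ[K] A)
    (hA : WeakHopfAlgebra K A Δ ε S) :
    (IsSemisimpleRing A ↔
      ∃ l : A, (∀ x : A, x * l = piL K A Δ ε x * l) ∧ piL K A Δ ε l = 1) ∧
    (IsSemisimpleRing A ↔
      ∃ e : A ⊗[K] A, LinearMap.mul' K A e = 1 ∧
        ∀ x : A, (x ⊗ₜ[K] (1 : A)) * e = e * ((1 : A) ⊗ₜ[K] x)) := by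
  have hW := hA.toWeakBialgebra
  constructor
  · constructor
    · exact fun ha => WHAaux.a_imp_b hW ha
    · exact fun hb => WHAaux.c_imp_a (WHAaux.b_imp_c hA hb)
  · constructor
    · exact fun ha => WHAaux.b_imp_c hA (WHAaux.a_imp_b hW ha)
    · exact fun hc => WHAaux.c_imp_a hc
end
end
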